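/- arXiv:1810.11439 — 3 statements merged into one kernel-verified Lean document; each statement's English description precedes it below -/
import Mathlib

section
/- Let N ≥ 1, 0<λ<N and 1<p<q<∞ satisfy 1/q = 1/p + λ/N − 1, and let q' be the conjugate exponent of q (1/q + 1/q' = 1). Then there exists a constant C>0, independent of u and h, such that for all u ∈ L^p(ℝ^N) and h ∈ L^{q'}(ℝ^N): |∫_{ℝ^N}∫_{ℝ^N} u(y) h(x)/‖x−y‖^λ dx dy| ≤ C ‖u‖_{L^p(ℝ^N)} ‖h‖_{L^{q'}(ℝ^N)}. -/
open MeasureTheory Real Set ENNReal Metric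

noncomputable section

namespace HLS2

lemma two_rpow_ne_top (y : ℝ) : (2:ℝ≥0∞) ^ y ≠ ∞ := by
  simp [ENNReal.rpow_eq_top_iff]

lemma two_rpow_ne_zero (y : ℝ) : (2:ℝ≥0∞) ^ y ≠ 0 := by
  simp [ENNReal.rpow_eq_zero_iff]

lemma two_rpow_ofReal (x : ℝ) : (2:ℝ≥0∞) ^ x = ENNReal.ofReal ((2:ℝ) ^ x) := by
  rw [← ENNReal.ofReal_ofNat 2, ENNReal.ofReal_rpow_of_pos two_pos]

lemma two_rpow_lt_one {x : ℝ} (hx : x < 0) : (2:ℝ≥0∞) ^ x < 1 :=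
  ENNReal.rpow_lt_one_of_one_lt_of_neg one_lt_two hx

lemma geom_inv_ne_top {x : ℝ} (hx : x < 0) : ((1:ℝ≥0∞) - 2 ^ x)⁻¹ ≠ ∞ := by
  rw [ENNReal.inv_ne_top]
  have := two_rpow_lt_one hx
  simp only [ne_eq, tsub_eq_zero_iff_le, not_le]
  exact this

lemma tsum_le_tsum_inj {f : ℤ → ℝ≥0∞} {g : ℕ → ℝ≥0∞} (e : ℕ → ℤ)
    (he : Function.Injective e) (h0 : ∀ j, j ∉ Set.range e → f j = 0)
    (hle : ∀ n, f (e n) ≤ g n) : ∑' j, f j ≤ ∑' n, g n := by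
  rw [← Function.Injective.tsum_eq he (f := f) ?_]
  · exact ENNReal.tsum_le_tsum hle
  · intro j hj
    by_contra hr
    exact hj (h0 j hr)

lemma sumC {Nr lam : ℝ} (hlam0 : 0 < lam) (hlamN : lam < Nr) {v : ℝ≥0∞}
    (hv0 : v ≠ 0) (hvt : v ≠ ∞) :
    ∃ C : ℝ≥0∞, C ≠ ∞ ∧ ∀ M : ℝ≥0∞, M ≠ ∞ →
      ∑' j : ℤ, (2:ℝ≥0∞) ^ (-((j:ℝ) * lam)) * min M (v * (2:ℝ≥0∞) ^ (((j:ℝ) + 1) * Nr))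
        ≤ C * M ^ (1 - lam / Nr) := by
  have hNr : (0:ℝ) < Nr := hlam0.trans hlamN
  have hβ0 : (0:ℝ) ≤ 1 - lam / Nr := by
    have : lam / Nr ≤ 1 := by rw [div_le_one hNr]; exact hlamN.le
    linarith
  have hbl : (0:ℝ) ≤ lam / Nr := by positivity
  refine ⟨v ^ (lam / Nr) * ((2:ℝ≥0∞) ^ lam * (1 - (2:ℝ≥0∞) ^ (-lam))⁻¹
      + (2:ℝ≥0∞) ^ Nr * (1 - (2:ℝ≥0∞) ^ (-(Nr - lam)))⁻¹), ?_, ?_⟩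
  · apply ENNReal.mul_ne_top (ENNReal.rpow_ne_top_of_nonneg hbl hvt)
    apply ENNReal.add_ne_top.mpr
    constructor
    · exact ENNReal.mul_ne_top (two_rpow_ne_top _) (geom_inv_ne_top (by linarith))
    · exact ENNReal.mul_ne_top (two_rpow_ne_top _) (geom_inv_ne_top (by linarith))
  intro M hMt
  rcases eq_or_ne M 0 with hM0 | hM0
  · subst hM0
    simp
  -- setup
  set D : ℝ≥0∞ := M / v with hD
  have hD0 : D ≠ 0 := by
    rw [hD]
    simp [ENNReal.div_eq_zero_iff, hM0, hvt]
  have hDt : D ≠ ∞ := by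
    rw [hD]
    exact (ENNReal.div_lt_top hMt hv0).ne
  set ρ : ℝ := D.toReal with hρdef
  have hρ : 0 < ρ := ENNReal.toReal_pos hD0 hDt
  have hDof : D = ENNReal.ofReal ρ := (ENNReal.ofReal_toReal hDt).symm
  set j₀ : ℤ := ⌊Real.logb 2 ρ / Nr⌋ with hj₀
  have key1 : (2:ℝ) ^ ((j₀:ℝ) * Nr) ≤ ρ := by
    have h1 : (j₀:ℝ) ≤ Real.logb 2 ρ / Nr := Int.floor_le _
    have h2 : (j₀:ℝ) * Nr ≤ Real.logb 2 ρ := by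
      rw [le_div_iff₀ hNr] at h1; linarith
    calc (2:ℝ) ^ ((j₀:ℝ) * Nr) ≤ (2:ℝ) ^ (Real.logb 2 ρ) :=
          Real.rpow_le_rpow_of_exponent_le one_le_two h2
    _ = ρ := Real.rpow_logb two_pos (by norm_num) hρ
  have key2 : ρ ≤ (2:ℝ) ^ (((j₀:ℝ) + 1) * Nr) := by
    have h1 : Real.logb 2 ρ / Nr ≤ (j₀:ℝ) + 1 := (Int.lt_floor_add_one _).le
    have h2 : Real.logb 2 ρ ≤ ((j₀:ℝ) + 1) * Nr := by
      rw [div_le_iff₀ hNr] at h1; linarith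
    calc ρ = (2:ℝ) ^ (Real.logb 2 ρ) := (Real.rpow_logb two_pos (by norm_num) hρ).symm
    _ ≤ (2:ℝ) ^ (((j₀:ℝ) + 1) * Nr) := Real.rpow_le_rpow_of_exponent_le one_le_two h2
  -- ENNReal versions
  have E2 : D ^ (lam / Nr) ≤ (2:ℝ≥0∞) ^ (((j₀:ℝ) + 1) * lam) := by
    rw [hDof, ENNReal.ofReal_rpow_of_pos hρ, two_rpow_ofReal]
    apply ENNReal.ofReal_le_ofReal
    calc ρ ^ (lam / Nr) ≤ ((2:ℝ) ^ (((j₀:ℝ) + 1) * Nr)) ^ (lam / Nr) :=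
          Real.rpow_le_rpow hρ.le key2 (by positivity)
    _ = (2:ℝ) ^ (((j₀:ℝ) + 1) * lam) := by
        rw [← Real.rpow_mul (by norm_num)]
        congr 1
        field_simp
  have E1 : (2:ℝ≥0∞) ^ ((j₀:ℝ) * (Nr - lam)) ≤ D ^ (1 - lam / Nr) := by
    rw [hDof, ENNReal.ofReal_rpow_of_pos hρ, two_rpow_ofReal]
    apply ENNReal.ofReal_le_ofReal
    calc (2:ℝ) ^ ((j₀:ℝ) * (Nr - lam)) = ((2:ℝ) ^ ((j₀:ℝ) * Nr)) ^ (1 - lam / Nr) := by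
          rw [← Real.rpow_mul (by norm_num)]
          congr 1
          field_simp
    _ ≤ ρ ^ (1 - lam / Nr) := Real.rpow_le_rpow (by positivity) key1 hβ0
  -- split the sum
  have hsplit : ∀ j : ℤ,
      (2:ℝ≥0∞) ^ (-((j:ℝ) * lam)) * min M (v * (2:ℝ≥0∞) ^ (((j:ℝ) + 1) * Nr))
      ≤ (if j₀ ≤ j then (2:ℝ≥0∞) ^ (-((j:ℝ) * lam)) * M else 0)
        + (if j₀ ≤ j then 0 else (2:ℝ≥0∞) ^ (-((j:ℝ) * lam)) * (v * (2:ℝ≥0∞) ^ (((j:ℝ) + 1) * Nr))) := by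
    intro j
    by_cases hj : j₀ ≤ j
    · rw [if_pos hj, if_pos hj, add_zero]
      exact mul_le_mul_right (min_le_left _ _) _
    · rw [if_neg hj, if_neg hj, zero_add]
      exact mul_le_mul_right (min_le_right _ _) _
  have hgeom1 : ∑' j : ℤ, (if j₀ ≤ j then (2:ℝ≥0∞) ^ (-((j:ℝ) * lam)) * M else 0)
      ≤ (2:ℝ≥0∞) ^ (-((j₀:ℝ) * lam)) * M * (1 - (2:ℝ≥0∞) ^ (-lam))⁻¹ := by
    calc ∑' j : ℤ, (if j₀ ≤ j then (2:ℝ≥0∞) ^ (-((j:ℝ) * lam)) * M else 0)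
        ≤ ∑' n : ℕ, ((2:ℝ≥0∞) ^ (-((j₀:ℝ) * lam)) * M) * ((2:ℝ≥0∞) ^ (-lam)) ^ n := by
          apply tsum_le_tsum_inj (fun n : ℕ => j₀ + n)
          · intro a b hab; simpa using hab
          · intro j hj
            rw [if_neg]
            intro hc
            exact hj ⟨(j - j₀).toNat, by show j₀ + ((j - j₀).toNat : ℤ) = j; omega⟩
          · intro n
            rw [if_pos (by omega)]
            have : (2:ℝ≥0∞) ^ (-(((j₀ + (n:ℤ) : ℤ):ℝ) * lam))
                = (2:ℝ≥0∞) ^ (-((j₀:ℝ) * lam)) * ((2:ℝ≥0∞) ^ (-lam)) ^ n := by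
              rw [← ENNReal.rpow_natCast ((2:ℝ≥0∞) ^ (-lam)) n, ← ENNReal.rpow_mul,
                ← ENNReal.rpow_add _ _ two_ne_zero ENNReal.ofNat_ne_top]
              congr 1
              push_cast
              ring
            rw [this]
            ring_nf
            exact le_refl _
    _ = (2:ℝ≥0∞) ^ (-((j₀:ℝ) * lam)) * M * (1 - (2:ℝ≥0∞) ^ (-lam))⁻¹ := by
        rw [ENNReal.tsum_mul_left, ENNReal.tsum_geometric]
  have hmerge : ∀ a b : ℝ, (2:ℝ≥0∞) ^ a * (2:ℝ≥0∞) ^ b = 2 ^ (a + b) :=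
    fun a b => (ENNReal.rpow_add a b two_ne_zero ENNReal.ofNat_ne_top).symm
  have hgeom2 : ∑' j : ℤ, (if j₀ ≤ j then 0 else (2:ℝ≥0∞) ^ (-((j:ℝ) * lam)) * (v * (2:ℝ≥0∞) ^ (((j:ℝ) + 1) * Nr)))
      ≤ v * (2:ℝ≥0∞) ^ Nr * (2:ℝ≥0∞) ^ ((j₀:ℝ) * (Nr - lam)) * (1 - (2:ℝ≥0∞) ^ (-(Nr - lam)))⁻¹ := by
    calc ∑' j : ℤ, (if j₀ ≤ j then 0 else (2:ℝ≥0∞) ^ (-((j:ℝ) * lam)) * (v * (2:ℝ≥0∞) ^ (((j:ℝ) + 1) * Nr)))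
        ≤ ∑' n : ℕ, (v * (2:ℝ≥0∞) ^ Nr * (2:ℝ≥0∞) ^ ((j₀:ℝ) * (Nr - lam))) * ((2:ℝ≥0∞) ^ (-(Nr - lam))) ^ n := by
          apply tsum_le_tsum_inj (fun n : ℕ => j₀ - 1 - n)
          · intro a b hab; simpa using hab
          · intro j hj
            rw [if_pos]
            by_contra hc
            push_neg at hc
            exact hj ⟨(j₀ - 1 - j).toNat, by show j₀ - 1 - ((j₀ - 1 - j).toNat : ℤ) = j; omega⟩
          · intro n
            rw [if_neg (by omega)]
            have heq : (2:ℝ≥0∞) ^ (-(((j₀ - 1 - (n:ℤ) : ℤ):ℝ) * lam)) * (v * (2:ℝ≥0∞) ^ ((((j₀ - 1 - (n:ℤ) : ℤ):ℝ) + 1) * Nr))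
                = (v * (2:ℝ≥0∞) ^ Nr * (2:ℝ≥0∞) ^ ((j₀:ℝ) * (Nr - lam))) * ((2:ℝ≥0∞) ^ (-(Nr - lam))) ^ n * ((2:ℝ≥0∞) ^ (-(Nr - lam))) := by
              calc (2:ℝ≥0∞) ^ (-(((j₀ - 1 - (n:ℤ) : ℤ):ℝ) * lam)) * (v * (2:ℝ≥0∞) ^ ((((j₀ - 1 - (n:ℤ) : ℤ):ℝ) + 1) * Nr))
                  = v * ((2:ℝ≥0∞) ^ (-(((j₀ - 1 - (n:ℤ) : ℤ):ℝ) * lam)) * (2:ℝ≥0∞) ^ ((((j₀ - 1 - (n:ℤ) : ℤ):ℝ) + 1) * Nr)) := by ring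
                _ = v * (2:ℝ≥0∞) ^ (-(((j₀ - 1 - (n:ℤ) : ℤ):ℝ) * lam) + (((j₀ - 1 - (n:ℤ) : ℤ):ℝ) + 1) * Nr) := by rw [hmerge]
                _ = v * (2:ℝ≥0∞) ^ (Nr + ((j₀:ℝ) * (Nr - lam) + ((-(Nr - lam)) * n + (-(Nr - lam))))) := by
                    congr 1
                    push_cast
                    ring
                _ = v * ((2:ℝ≥0∞) ^ Nr * ((2:ℝ≥0∞) ^ ((j₀:ℝ) * (Nr - lam)) * ((2:ℝ≥0∞) ^ ((-(Nr - lam)) * (n:ℝ)) * (2:ℝ≥0∞) ^ (-(Nr - lam))))) := by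
                    rw [hmerge ((-(Nr - lam)) * (n:ℝ)), hmerge ((j₀:ℝ) * (Nr - lam)), hmerge Nr]
                _ = (v * (2:ℝ≥0∞) ^ Nr * (2:ℝ≥0∞) ^ ((j₀:ℝ) * (Nr - lam))) * ((2:ℝ≥0∞) ^ (-(Nr - lam))) ^ n * ((2:ℝ≥0∞) ^ (-(Nr - lam))) := by
                    have hfac : ((2:ℝ≥0∞) ^ (-(Nr - lam))) ^ n = (2:ℝ≥0∞) ^ ((-(Nr - lam)) * (n:ℝ)) := by
                      rw [ENNReal.rpow_mul, ENNReal.rpow_natCast]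
                    rw [hfac]
                    ring
            rw [heq]
            have hr1 : (2:ℝ≥0∞) ^ (-(Nr - lam)) ≤ 1 := (two_rpow_lt_one (by linarith)).le
            calc (v * (2:ℝ≥0∞) ^ Nr * (2:ℝ≥0∞) ^ ((j₀:ℝ) * (Nr - lam))) * ((2:ℝ≥0∞) ^ (-(Nr - lam))) ^ n * ((2:ℝ≥0∞) ^ (-(Nr - lam)))
                ≤ (v * (2:ℝ≥0∞) ^ Nr * (2:ℝ≥0∞) ^ ((j₀:ℝ) * (Nr - lam))) * ((2:ℝ≥0∞) ^ (-(Nr - lam))) ^ n * 1 :=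
                  mul_le_mul_right hr1 _
              _ = (v * (2:ℝ≥0∞) ^ Nr * (2:ℝ≥0∞) ^ ((j₀:ℝ) * (Nr - lam))) * ((2:ℝ≥0∞) ^ (-(Nr - lam))) ^ n := mul_one _
    _ = v * (2:ℝ≥0∞) ^ Nr * (2:ℝ≥0∞) ^ ((j₀:ℝ) * (Nr - lam)) * (1 - (2:ℝ≥0∞) ^ (-(Nr - lam)))⁻¹ := by
        rw [ENNReal.tsum_mul_left, ENNReal.tsum_geometric]
  -- put the two parts together
  have hMvD : M = v * D := by
    rw [hD, ENNReal.mul_div_cancel hv0 hvt]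
  have claimA : (2:ℝ≥0∞) ^ (-((j₀:ℝ) * lam)) * M ≤ v ^ (lam / Nr) * ((2:ℝ≥0∞) ^ lam * M ^ (1 - lam / Nr)) := by
    have hMsplit : M = M ^ (1 - lam / Nr) * (v ^ (lam / Nr) * D ^ (lam / Nr)) := by
      calc M = M ^ ((1 - lam / Nr) + lam / Nr) := by
            rw [show (1 - lam / Nr) + lam / Nr = 1 by ring, ENNReal.rpow_one]
      _ = M ^ (1 - lam / Nr) * M ^ (lam / Nr) := ENNReal.rpow_add_of_nonneg _ _ hβ0 hbl
      _ = M ^ (1 - lam / Nr) * (v ^ (lam / Nr) * D ^ (lam / Nr)) := by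
          rw [← ENNReal.mul_rpow_of_nonneg _ _ hbl, ← hMvD]
    calc (2:ℝ≥0∞) ^ (-((j₀:ℝ) * lam)) * M
        = M ^ (1 - lam / Nr) * v ^ (lam / Nr) * (D ^ (lam / Nr) * (2:ℝ≥0∞) ^ (-((j₀:ℝ) * lam))) := by
          conv_lhs => rw [hMsplit]
          ring
      _ ≤ M ^ (1 - lam / Nr) * v ^ (lam / Nr) * ((2:ℝ≥0∞) ^ (((j₀:ℝ) + 1) * lam) * (2:ℝ≥0∞) ^ (-((j₀:ℝ) * lam))) := by
          exact mul_le_mul_right (mul_le_mul_left E2 _) _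
      _ = v ^ (lam / Nr) * ((2:ℝ≥0∞) ^ lam * M ^ (1 - lam / Nr)) := by
          rw [hmerge]
          rw [show ((j₀:ℝ) + 1) * lam + (-((j₀:ℝ) * lam)) = lam by ring]
          ring
  have claimB : v * (2:ℝ≥0∞) ^ Nr * (2:ℝ≥0∞) ^ ((j₀:ℝ) * (Nr - lam))
      ≤ v ^ (lam / Nr) * ((2:ℝ≥0∞) ^ Nr * M ^ (1 - lam / Nr)) := by
    have hvsplit : v = v ^ (lam / Nr) * v ^ (1 - lam / Nr) := by
      calc v = v ^ (lam / Nr + (1 - lam / Nr)) := by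
            rw [show lam / Nr + (1 - lam / Nr) = 1 by ring, ENNReal.rpow_one]
      _ = v ^ (lam / Nr) * v ^ (1 - lam / Nr) := ENNReal.rpow_add_of_nonneg _ _ hbl hβ0
    calc v * (2:ℝ≥0∞) ^ Nr * (2:ℝ≥0∞) ^ ((j₀:ℝ) * (Nr - lam))
        ≤ v * (2:ℝ≥0∞) ^ Nr * D ^ (1 - lam / Nr) := mul_le_mul_right E1 _
      _ = v ^ (lam / Nr) * ((2:ℝ≥0∞) ^ Nr * (v ^ (1 - lam / Nr) * D ^ (1 - lam / Nr))) := by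
          conv_lhs => rw [hvsplit]
          ring
      _ = v ^ (lam / Nr) * ((2:ℝ≥0∞) ^ Nr * M ^ (1 - lam / Nr)) := by
          rw [← ENNReal.mul_rpow_of_nonneg _ _ hβ0, ← hMvD]
  calc ∑' j : ℤ, (2:ℝ≥0∞) ^ (-((j:ℝ) * lam)) * min M (v * (2:ℝ≥0∞) ^ (((j:ℝ) + 1) * Nr))
      ≤ ∑' j : ℤ, ((if j₀ ≤ j then (2:ℝ≥0∞) ^ (-((j:ℝ) * lam)) * M else 0)
        + (if j₀ ≤ j then 0 else (2:ℝ≥0∞) ^ (-((j:ℝ) * lam)) * (v * (2:ℝ≥0∞) ^ (((j:ℝ) + 1) * Nr)))) :=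
        ENNReal.tsum_le_tsum hsplit
    _ = (∑' j : ℤ, (if j₀ ≤ j then (2:ℝ≥0∞) ^ (-((j:ℝ) * lam)) * M else 0))
        + ∑' j : ℤ, (if j₀ ≤ j then 0 else (2:ℝ≥0∞) ^ (-((j:ℝ) * lam)) * (v * (2:ℝ≥0∞) ^ (((j:ℝ) + 1) * Nr))) :=
        ENNReal.tsum_add
    _ ≤ (2:ℝ≥0∞) ^ (-((j₀:ℝ) * lam)) * M * (1 - (2:ℝ≥0∞) ^ (-lam))⁻¹
        + v * (2:ℝ≥0∞) ^ Nr * (2:ℝ≥0∞) ^ ((j₀:ℝ) * (Nr - lam)) * (1 - (2:ℝ≥0∞) ^ (-(Nr - lam)))⁻¹ :=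
        add_le_add hgeom1 hgeom2
    _ ≤ v ^ (lam / Nr) * ((2:ℝ≥0∞) ^ lam * M ^ (1 - lam / Nr)) * (1 - (2:ℝ≥0∞) ^ (-lam))⁻¹
        + v ^ (lam / Nr) * ((2:ℝ≥0∞) ^ Nr * M ^ (1 - lam / Nr)) * (1 - (2:ℝ≥0∞) ^ (-(Nr - lam)))⁻¹ :=
        add_le_add (mul_le_mul_left claimA _) (mul_le_mul_left claimB _)
    _ = v ^ (lam / Nr) * ((2:ℝ≥0∞) ^ lam * (1 - (2:ℝ≥0∞) ^ (-lam))⁻¹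
        + (2:ℝ≥0∞) ^ Nr * (1 - (2:ℝ≥0∞) ^ (-(Nr - lam)))⁻¹) * M ^ (1 - lam / Nr) := by
        ring

end HLS2

namespace HLS3

lemma two_rpow_ne_top (y : ℝ) : (2:ℝ≥0∞) ^ y ≠ ∞ := by
  simp [ENNReal.rpow_eq_top_iff]

lemma two_rpow_ne_zero (y : ℝ) : (2:ℝ≥0∞) ^ y ≠ 0 := by
  simp [ENNReal.rpow_eq_zero_iff]

lemma two_rpow_lt_one {x : ℝ} (hx : x < 0) : (2:ℝ≥0∞) ^ x < 1 :=
  ENNReal.rpow_lt_one_of_one_lt_of_neg one_lt_two hx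

lemma geom_inv_ne_top {x : ℝ} (hx : x < 0) : ((1:ℝ≥0∞) - 2 ^ x)⁻¹ ≠ ∞ := by
  rw [ENNReal.inv_ne_top]
  simp only [ne_eq, tsub_eq_zero_iff_le, not_le]
  exact two_rpow_lt_one hx

lemma hmerge : ∀ a b : ℝ, (2:ℝ≥0∞) ^ a * (2:ℝ≥0∞) ^ b = 2 ^ (a + b) :=
  fun a b => (ENNReal.rpow_add a b two_ne_zero ENNReal.ofNat_ne_top).symm

lemma tsum_le_tsum_inj {f : ℤ → ℝ≥0∞} {g : ℕ → ℝ≥0∞} (e : ℕ → ℤ)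
    (he : Function.Injective e) (h0 : ∀ j, j ∉ Set.range e → f j = 0)
    (hle : ∀ n, f (e n) ≤ g n) : ∑' j, f j ≤ ∑' n, g n := by
  rw [← Function.Injective.tsum_eq he (f := f) ?_]
  · exact ENNReal.tsum_le_tsum hle
  · intro j hj
    by_contra hr
    exact hj (h0 j hr)

lemma tsum_int_geom {d ε : ℝ} (hd : 0 < d) (hε : 0 < ε) (t : ℝ) :
    ∑' l : ℤ, (if (l:ℝ) * d ≤ t then (2:ℝ≥0∞) ^ (-(ε * (t - l * d))) else 0)
      ≤ (1 - (2:ℝ≥0∞) ^ (-(ε * d)))⁻¹ := by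
  have h2 : (1:ℝ≥0∞) ≤ 2 := one_le_two
  calc ∑' l : ℤ, (if (l:ℝ) * d ≤ t then (2:ℝ≥0∞) ^ (-(ε * (t - l * d))) else 0)
      ≤ ∑' n : ℕ, ((2:ℝ≥0∞) ^ (-(ε * d))) ^ n := by
        apply tsum_le_tsum_inj (fun n => ⌊t / d⌋ - n)
        · intro a b hab; simpa using hab
        · intro j hj
          have hj' : ⌊t / d⌋ < j := by
            by_contra hc
            push_neg at hc
            refine hj ⟨(⌊t / d⌋ - j).toNat, ?_⟩
            have h9 : (0:ℤ) ≤ ⌊t / d⌋ - j := by omega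
            have h10 : ((⌊t / d⌋ - j).toNat : ℤ) = ⌊t / d⌋ - j := Int.toNat_of_nonneg h9
            show ⌊t / d⌋ - ((⌊t / d⌋ - j).toNat : ℤ) = j
            omega
          have : t < (j:ℝ) * d := by
            have h1 : t / d < (j:ℝ) := by
              have := Int.floor_lt.mp hj'
              linarith
            calc t = t / d * d := by field_simp
            _ < (j:ℝ) * d := by exact mul_lt_mul_of_pos_right h1 hd
          simp [not_le.mpr this]
        · intro n
          by_cases hc : ((⌊t / d⌋ - n : ℤ):ℝ) * d ≤ t
          · rw [if_pos hc]
            have hfl : (⌊t / d⌋ : ℝ) * d ≤ t := by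
              have := Int.floor_le (t / d)
              calc (⌊t / d⌋ : ℝ) * d ≤ t / d * d := mul_le_mul_of_nonneg_right this hd.le
              _ = t := by field_simp
            have hexp : -(ε * (t - ((⌊t / d⌋ - n : ℤ):ℝ) * d)) ≤ -(ε * d) * n := by
              push_cast
              nlinarith [hε.le, hd.le]
            calc (2:ℝ≥0∞) ^ (-(ε * (t - ((⌊t / d⌋ - n : ℤ):ℝ) * d)))
                ≤ (2:ℝ≥0∞) ^ (-(ε * d) * (n:ℝ)) := ENNReal.rpow_le_rpow_of_exponent_le h2 hexp
              _ = ((2:ℝ≥0∞) ^ (-(ε * d))) ^ n := by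
                  rw [ENNReal.rpow_mul, ENNReal.rpow_natCast]
          · rw [if_neg hc]
            exact zero_le
      _ = (1 - (2:ℝ≥0∞) ^ (-(ε * d)))⁻¹ := ENNReal.tsum_geometric _

lemma tsum_mul_le_holder {ι : Type*} [Countable ι] {r s : ℝ} (h : r.HolderConjugate s)
    (a b : ι → ℝ≥0∞) :
    ∑' i, a i * b i ≤ (∑' i, a i ^ r) ^ (1/r) * (∑' i, b i ^ s) ^ (1/s) := by
  letI : MeasurableSpace ι := ⊤
  haveI : MeasurableSingletonClass ι := ⟨fun _ => trivial⟩
  rw [← lintegral_count, ← lintegral_count (fun i => a i ^ r), ← lintegral_count (fun i => b i ^ s)]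
  exact ENNReal.lintegral_mul_le_Lp_mul_Lq _ h (measurable_of_countable _).aemeasurable
    (measurable_of_countable _).aemeasurable

lemma minmax_le {x y : ℝ≥0∞} {α s : ℝ} (hα : 0 ≤ α) (hs1 : α ≤ s) (hs2 : s ≤ 1) :
    min x y * max x y ^ α ≤ x ^ s * y ^ (1 + α - s) := by
  rcases le_total x y with hxy | hxy
  · rw [min_eq_left hxy, max_eq_right hxy]
    calc x * y ^ α = x ^ s * x ^ (1 - s) * y ^ α := by
          rw [← ENNReal.rpow_add_of_nonneg _ _ (by linarith) (by linarith),
            show s + (1 - s) = 1 by ring, ENNReal.rpow_one]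
    _ ≤ x ^ s * y ^ (1 - s) * y ^ α :=
        mul_le_mul_left (mul_le_mul_right (ENNReal.rpow_le_rpow hxy (by linarith)) _) _
    _ = x ^ s * y ^ (1 + α - s) := by
        rw [mul_assoc, ← ENNReal.rpow_add_of_nonneg _ _ (by linarith) hα,
          show 1 - s + α = 1 + α - s by ring]
  · rw [min_eq_right hxy, max_eq_left hxy]
    calc y * x ^ α = y ^ (1 + α - s) * y ^ (s - α) * x ^ α := by
          rw [← ENNReal.rpow_add_of_nonneg _ _ (by linarith) (by linarith),
            show 1 + α - s + (s - α) = 1 by ring, ENNReal.rpow_one]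
    _ ≤ y ^ (1 + α - s) * x ^ (s - α) * x ^ α :=
        mul_le_mul_left (mul_le_mul_right (ENNReal.rpow_le_rpow hxy (by linarith)) _) _
    _ = x ^ s * y ^ (1 + α - s) := by
        rw [mul_assoc, ← ENNReal.rpow_add_of_nonneg _ _ (by linarith) hα,
          show s - α + α = s by ring]
        ring


lemma holder_piece {r rc w : ℝ} (hconj : r.HolderConjugate rc) (hw : 1 ≤ w * rc)
    (G : ℤ → ℤ → ℝ≥0∞) (X Y : ℤ → ℝ≥0∞)
    (hXsum : ∑' k, X k ≤ 1) (hYsum : ∑' l, Y l ≤ 1) (hYle : ∀ l, Y l ≤ 1)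
    {ca cb : ℝ≥0∞}
    (hGl : ∀ k, ∑' l, G k l ≤ cb) (hGk : ∀ l, ∑' k, G k l ≤ ca) :
    ∑' kl : ℤ × ℤ, G kl.1 kl.2 * (X kl.1 ^ (1/r) * Y kl.2 ^ w) ≤ cb ^ (1/r) * ca ^ (1/rc) := by
  have hr1 : 1 < r := hconj.lt
  have hr0 : 0 < r := by linarith
  have hrc0 : 0 < rc := by
    have := hconj.symm.lt
    linarith
  have hrinv : (0:ℝ) ≤ 1/r := by positivity
  have hrcinv : (0:ℝ) ≤ 1/rc := by positivity
  have hconjsum : 1/r + 1/rc = 1 := by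
    rw [one_div, one_div]
    exact hconj.inv_add_inv_eq_one
  set a : ℤ × ℤ → ℝ≥0∞ := fun kl => (G kl.1 kl.2 * X kl.1) ^ (1/r) with ha
  set b : ℤ × ℤ → ℝ≥0∞ := fun kl => (G kl.1 kl.2 * Y kl.2 ^ (w * rc)) ^ (1/rc) with hb
  have step1 : ∀ kl : ℤ × ℤ, G kl.1 kl.2 * (X kl.1 ^ (1/r) * Y kl.2 ^ w) = a kl * b kl := by
    intro kl
    simp only [ha, hb]
    rw [ENNReal.mul_rpow_of_nonneg _ _ hrinv, ENNReal.mul_rpow_of_nonneg _ _ hrcinv,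
      ← ENNReal.rpow_mul (Y kl.2), show w * rc * (1/rc) = w by field_simp]
    calc G kl.1 kl.2 * (X kl.1 ^ (1/r) * Y kl.2 ^ w)
        = (G kl.1 kl.2 ^ (1/r) * G kl.1 kl.2 ^ (1/rc)) * (X kl.1 ^ (1/r) * Y kl.2 ^ w) := by
          rw [← ENNReal.rpow_add_of_nonneg _ _ hrinv hrcinv, hconjsum, ENNReal.rpow_one]
      _ = G kl.1 kl.2 ^ (1/r) * X kl.1 ^ (1/r) * (G kl.1 kl.2 ^ (1/rc) * Y kl.2 ^ w) := by ring
  have step3 : ∑' kl : ℤ × ℤ, a kl ^ r = ∑' kl : ℤ × ℤ, G kl.1 kl.2 * X kl.1 := by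
    apply tsum_congr
    intro kl
    simp only [ha]
    rw [← ENNReal.rpow_mul, show (1/r) * r = 1 by field_simp, ENNReal.rpow_one]
  have step4 : ∑' kl : ℤ × ℤ, G kl.1 kl.2 * X kl.1 ≤ cb := by
    rw [show ∑' kl : ℤ × ℤ, G kl.1 kl.2 * X kl.1 = ∑' k : ℤ, ∑' l : ℤ, G k l * X k from
      ENNReal.tsum_prod (f := fun k l => G k l * X k)]
    calc ∑' k : ℤ, ∑' l : ℤ, G k l * X k
        = ∑' k : ℤ, (∑' l : ℤ, G k l) * X k := by
          apply tsum_congr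
          intro k
          rw [ENNReal.tsum_mul_right]
      _ ≤ ∑' k : ℤ, cb * X k := ENNReal.tsum_le_tsum fun k => mul_le_mul_left (hGl k) _
      _ = cb * ∑' k : ℤ, X k := ENNReal.tsum_mul_left
      _ ≤ cb * 1 := mul_le_mul_right hXsum _
      _ = cb := mul_one _
  have step5 : ∑' kl : ℤ × ℤ, b kl ^ rc ≤ ca := by
    have e1 : ∑' kl : ℤ × ℤ, b kl ^ rc = ∑' kl : ℤ × ℤ, G kl.1 kl.2 * Y kl.2 ^ (w * rc) := by
      apply tsum_congr
      intro kl
      simp only [hb]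
      rw [← ENNReal.rpow_mul, show (1/rc) * rc = 1 by field_simp, ENNReal.rpow_one]
    rw [e1]
    calc ∑' kl : ℤ × ℤ, G kl.1 kl.2 * Y kl.2 ^ (w * rc)
        ≤ ∑' kl : ℤ × ℤ, G kl.1 kl.2 * Y kl.2 := by
          apply ENNReal.tsum_le_tsum
          intro kl
          apply mul_le_mul_right
          calc Y kl.2 ^ (w * rc) ≤ Y kl.2 ^ (1:ℝ) :=
                ENNReal.rpow_le_rpow_of_exponent_ge (hYle kl.2) hw
          _ = Y kl.2 := ENNReal.rpow_one _
      _ = ∑' l : ℤ, ∑' k : ℤ, G k l * Y l :=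
          (ENNReal.tsum_prod (f := fun k l => G k l * Y l)).trans ENNReal.tsum_comm
      _ = ∑' l : ℤ, (∑' k : ℤ, G k l) * Y l := by
          apply tsum_congr
          intro l
          rw [ENNReal.tsum_mul_right]
      _ ≤ ∑' l : ℤ, ca * Y l := ENNReal.tsum_le_tsum fun l => mul_le_mul_left (hGk l) _
      _ = ca * ∑' l : ℤ, Y l := ENNReal.tsum_mul_left
      _ ≤ ca * 1 := mul_le_mul_right hYsum _
      _ = ca := mul_one _
  calc ∑' kl : ℤ × ℤ, G kl.1 kl.2 * (X kl.1 ^ (1/r) * Y kl.2 ^ w)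
      = ∑' kl : ℤ × ℤ, a kl * b kl := tsum_congr step1
    _ ≤ (∑' kl : ℤ × ℤ, a kl ^ r) ^ (1/r) * (∑' kl : ℤ × ℤ, b kl ^ rc) ^ (1/rc) :=
        tsum_mul_le_holder hconj a b
    _ ≤ cb ^ (1/r) * ca ^ (1/rc) := by
        apply mul_le_mul'
        · exact ENNReal.rpow_le_rpow (step3 ▸ step4) hrinv
        · exact ENNReal.rpow_le_rpow step5 hrcinv

set_option maxHeartbeats 1000000 in
lemma sumD {p q' alpha eps : ℝ} (hp : 1 < p) (hq' : 1 < q')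
    (heps : 0 < eps) (halpha : 0 ≤ alpha)
    (hsum : 1 + alpha = 1/p + 1/q')
    (hs2a : alpha + eps ≤ 1/p)
    (heps1 : eps < 1 - 1/p) (heps2 : eps < 1 - 1/q') :
    ∃ C : ℝ≥0∞, C ≠ ∞ ∧ ∀ x y : ℤ → ℝ≥0∞,
      (∑' k : ℤ, (2:ℝ≥0∞) ^ ((k:ℝ) * p) * x k ≤ 1) →
      (∑' l : ℤ, (2:ℝ≥0∞) ^ ((l:ℝ) * q') * y l ≤ 1) →
      ∑' kl : ℤ × ℤ, (2:ℝ≥0∞) ^ ((kl.1:ℝ)) * (2:ℝ≥0∞) ^ ((kl.2:ℝ))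
          * (min (x kl.1) (y kl.2) * max (x kl.1) (y kl.2) ^ alpha) ≤ C := by
  have hp0 : (0:ℝ) < p := by linarith
  have hq'0 : (0:ℝ) < q' := by linarith
  have hpinv : (0:ℝ) < 1/p := by positivity
  have hpinv1 : 1/p < 1 := by rw [div_lt_one hp0]; exact hp
  have hq'inv : (0:ℝ) < 1/q' := by positivity
  have hq'inv1 : 1/q' < 1 := by rw [div_lt_one hq'0]; exact hq'
  set s₁ : ℝ := 1/p + eps with hs₁
  set t₁ : ℝ := 1/q' - eps with ht₁
  set s₂ : ℝ := 1/p - eps with hs₂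
  set t₂ : ℝ := 1/q' + eps with ht₂
  have hq'big : eps < 1/q' := by linarith  -- since 1/q' ≥ 1 - 1/p > eps
  have hs₁mem : 0 < s₁ ∧ s₁ < 1 := ⟨by simp only [hs₁]; linarith, by simp only [hs₁]; linarith⟩
  have ht₂mem : 0 < t₂ ∧ t₂ < 1 := ⟨by simp only [ht₂]; linarith, by simp only [ht₂]; linarith⟩
  set r₁ : ℝ := s₁⁻¹ with hr₁
  set r₁c : ℝ := (1 - s₁)⁻¹ with hr₁c
  set r₂c : ℝ := t₂⁻¹ with hr₂c
  set r₂ : ℝ := (1 - t₂)⁻¹ with hr₂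
  have hconj1 : r₁.HolderConjugate r₁c := by
    rw [Real.holderConjugate_iff]; constructor
    · rw [hr₁]
      rw [lt_inv_comm₀] <;> [skip; norm_num; exact hs₁mem.1]
      simpa using hs₁mem.2
    · rw [hr₁, hr₁c, inv_inv, inv_inv]; ring
  have hconj2 : r₂.HolderConjugate r₂c := by
    rw [Real.holderConjugate_iff]; constructor
    · rw [hr₂]
      rw [lt_inv_comm₀] <;> [skip; norm_num; linarith [ht₂mem.2]]
      simpa using ht₂mem.1
    · rw [hr₂, hr₂c, inv_inv, inv_inv]; ring
  set ca : ℝ≥0∞ := (1 - (2:ℝ≥0∞) ^ (-(eps * p)))⁻¹ with hca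
  set cb : ℝ≥0∞ := (1 - (2:ℝ≥0∞) ^ (-(eps * q')))⁻¹ with hcb
  have hcat : ca ≠ ∞ := geom_inv_ne_top (by nlinarith)
  have hcbt : cb ≠ ∞ := geom_inv_ne_top (by nlinarith)
  have hr₁0 : 0 < r₁ := by
    have := hconj1.lt; linarith
  have hr₁c0 : 0 < r₁c := by
    have := hconj1.symm.lt; linarith
  have hr₂0 : 0 < r₂ := by
    have := hconj2.lt; linarith
  have hr₂c0 : 0 < r₂c := by
    have := hconj2.symm.lt; linarith
  refine ⟨cb ^ (1/r₁) * ca ^ (1/r₁c) + cb ^ (1/r₂) * ca ^ (1/r₂c), ?_, ?_⟩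
  · apply ENNReal.add_ne_top.mpr
    constructor
    · exact ENNReal.mul_ne_top (ENNReal.rpow_ne_top_of_nonneg (by positivity) hcbt)
        (ENNReal.rpow_ne_top_of_nonneg (by positivity) hcat)
    · exact ENNReal.mul_ne_top (ENNReal.rpow_ne_top_of_nonneg (by positivity) hcbt)
        (ENNReal.rpow_ne_top_of_nonneg (by positivity) hcat)
  intro x y hA hB
  -- exponents expressed through conjugates
  have hs₁r : s₁ = 1/r₁ := by rw [hr₁, one_div, inv_inv]
  have ht₂r : t₂ = 1/r₂c := by rw [hr₂c, one_div, inv_inv]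
  have h1r₁c : (1:ℝ)/r₁c = 1 - s₁ := by rw [hr₁c, one_div, inv_inv]
  have h1r₂ : (1:ℝ)/r₂ = 1 - t₂ := by rw [hr₂, one_div, inv_inv]
  -- normalized sequences
  set X : ℤ → ℝ≥0∞ := fun k => (2:ℝ≥0∞) ^ ((k:ℝ) * p) * x k with hXdef
  set Y : ℤ → ℝ≥0∞ := fun l => (2:ℝ≥0∞) ^ ((l:ℝ) * q') * y l with hYdef
  have hXle : ∀ k, X k ≤ 1 := fun k => le_trans (ENNReal.le_tsum k) hA
  have hYle : ∀ l, Y l ≤ 1 := fun l => le_trans (ENNReal.le_tsum l) hB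
  have hxX : ∀ k, x k = (2:ℝ≥0∞) ^ (-((k:ℝ) * p)) * X k := by
    intro k
    simp only [hXdef]
    rw [← mul_assoc, hmerge, neg_add_cancel, ENNReal.rpow_zero, one_mul]
  have hyY : ∀ l, y l = (2:ℝ≥0∞) ^ (-((l:ℝ) * q')) * Y l := by
    intro l
    simp only [hYdef]
    rw [← mul_assoc, hmerge, neg_add_cancel, ENNReal.rpow_zero, one_mul]
  -- the geometric weights
  set G₁ : ℤ → ℤ → ℝ≥0∞ := fun k l =>
    if ((l:ℝ) * q' ≤ (k:ℝ) * p) then (2:ℝ≥0∞) ^ (-(eps * ((k:ℝ) * p - (l:ℝ) * q'))) else 0 with hG₁def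
  set G₂ : ℤ → ℤ → ℝ≥0∞ := fun k l =>
    if ((k:ℝ) * p < (l:ℝ) * q') then (2:ℝ≥0∞) ^ (-(eps * ((l:ℝ) * q' - (k:ℝ) * p))) else 0 with hG₂def
  have gather : ∀ (a b c d : ℝ) (U V : ℝ≥0∞),
      (2:ℝ≥0∞) ^ a * (2:ℝ≥0∞) ^ b * ((2:ℝ≥0∞) ^ c * U * ((2:ℝ≥0∞) ^ d * V))
        = (2:ℝ≥0∞) ^ (a + b + c + d) * (U * V) := by
    intro a b c d U V
    rw [show a + b + c + d = a + b + (c + d) by ring, ← hmerge (a+b), ← hmerge a, ← hmerge c]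
    ring
  -- pointwise key bound
  have key : ∀ kl : ℤ × ℤ,
      (2:ℝ≥0∞) ^ ((kl.1:ℝ)) * (2:ℝ≥0∞) ^ ((kl.2:ℝ))
          * (min (x kl.1) (y kl.2) * max (x kl.1) (y kl.2) ^ alpha)
      ≤ G₁ kl.1 kl.2 * (X kl.1 ^ (1/r₁) * Y kl.2 ^ t₁)
        + G₂ kl.1 kl.2 * (Y kl.2 ^ (1/r₂c) * X kl.1 ^ s₂) := by
    rintro ⟨k, l⟩
    by_cases hc : (l:ℝ) * q' ≤ (k:ℝ) * p
    · have hg2 : G₂ k l = 0 := by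
        simp only [hG₂def]
        rw [if_neg (not_lt.mpr hc)]
      rw [hg2, zero_mul, add_zero]
      have hg1 : G₁ k l = (2:ℝ≥0∞) ^ (-(eps * ((k:ℝ) * p - (l:ℝ) * q'))) := by
        simp only [hG₁def]
        rw [if_pos hc]
      rw [hg1, ← hs₁r]
      calc (2:ℝ≥0∞) ^ ((k:ℝ)) * (2:ℝ≥0∞) ^ ((l:ℝ)) * (min (x k) (y l) * max (x k) (y l) ^ alpha)
          ≤ (2:ℝ≥0∞) ^ ((k:ℝ)) * (2:ℝ≥0∞) ^ ((l:ℝ)) * (x k ^ s₁ * y l ^ (1 + alpha - s₁)) :=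
            mul_le_mul_right (minmax_le halpha (by simp only [hs₁]; linarith)
              (by simp only [hs₁]; linarith)) _
        _ = (2:ℝ≥0∞) ^ ((k:ℝ)) * (2:ℝ≥0∞) ^ ((l:ℝ)) * (x k ^ s₁ * y l ^ t₁) := by
            rw [show 1 + alpha - s₁ = t₁ by simp only [hs₁, ht₁]; linarith]
        _ = (2:ℝ≥0∞) ^ ((k:ℝ)) * (2:ℝ≥0∞) ^ ((l:ℝ))
            * ((2:ℝ≥0∞) ^ (-((k:ℝ) * p) * s₁) * X k ^ s₁
              * ((2:ℝ≥0∞) ^ (-((l:ℝ) * q') * t₁) * Y l ^ t₁)) := by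
            rw [hxX k, hyY l,
              ENNReal.mul_rpow_of_nonneg _ _ (by simp only [hs₁]; linarith : (0:ℝ) ≤ s₁),
              ENNReal.mul_rpow_of_nonneg _ _ (by simp only [ht₁]; linarith : (0:ℝ) ≤ t₁),
              ← ENNReal.rpow_mul, ← ENNReal.rpow_mul]
        _ = (2:ℝ≥0∞) ^ ((k:ℝ) + (l:ℝ) + (-((k:ℝ) * p) * s₁) + (-((l:ℝ) * q') * t₁))
            * (X k ^ s₁ * Y l ^ t₁) := gather _ _ _ _ _ _
        _ = (2:ℝ≥0∞) ^ (-(eps * ((k:ℝ) * p - (l:ℝ) * q'))) * (X k ^ s₁ * Y l ^ t₁) := by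
            congr 1
            congr 1
            simp only [hs₁, ht₁]
            field_simp
            ring
    · have hc' : (k:ℝ) * p < (l:ℝ) * q' := not_le.mp hc
      have hg1 : G₁ k l = 0 := by
        simp only [hG₁def]
        rw [if_neg hc]
      rw [hg1, zero_mul, zero_add]
      have hg2 : G₂ k l = (2:ℝ≥0∞) ^ (-(eps * ((l:ℝ) * q' - (k:ℝ) * p))) := by
        simp only [hG₂def]
        rw [if_pos hc']
      rw [hg2, ← ht₂r]
      calc (2:ℝ≥0∞) ^ ((k:ℝ)) * (2:ℝ≥0∞) ^ ((l:ℝ)) * (min (x k) (y l) * max (x k) (y l) ^ alpha)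
          ≤ (2:ℝ≥0∞) ^ ((k:ℝ)) * (2:ℝ≥0∞) ^ ((l:ℝ)) * (x k ^ s₂ * y l ^ (1 + alpha - s₂)) :=
            mul_le_mul_right (minmax_le halpha (by simp only [hs₂]; linarith)
              (by simp only [hs₂]; linarith)) _
        _ = (2:ℝ≥0∞) ^ ((k:ℝ)) * (2:ℝ≥0∞) ^ ((l:ℝ)) * (x k ^ s₂ * y l ^ t₂) := by
            rw [show 1 + alpha - s₂ = t₂ by simp only [hs₂, ht₂]; linarith]
        _ = (2:ℝ≥0∞) ^ ((k:ℝ)) * (2:ℝ≥0∞) ^ ((l:ℝ))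
            * ((2:ℝ≥0∞) ^ (-((k:ℝ) * p) * s₂) * X k ^ s₂
              * ((2:ℝ≥0∞) ^ (-((l:ℝ) * q') * t₂) * Y l ^ t₂)) := by
            rw [hxX k, hyY l,
              ENNReal.mul_rpow_of_nonneg _ _ (by simp only [hs₂]; linarith : (0:ℝ) ≤ s₂),
              ENNReal.mul_rpow_of_nonneg _ _ (by simp only [ht₂]; linarith : (0:ℝ) ≤ t₂),
              ← ENNReal.rpow_mul, ← ENNReal.rpow_mul]
        _ = (2:ℝ≥0∞) ^ ((k:ℝ) + (l:ℝ) + (-((k:ℝ) * p) * s₂) + (-((l:ℝ) * q') * t₂))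
            * (X k ^ s₂ * Y l ^ t₂) := gather _ _ _ _ _ _
        _ = (2:ℝ≥0∞) ^ (-(eps * ((l:ℝ) * q' - (k:ℝ) * p))) * (Y l ^ t₂ * X k ^ s₂) := by
            rw [show X k ^ s₂ * Y l ^ t₂ = Y l ^ t₂ * X k ^ s₂ by ring]
            congr 1
            congr 1
            simp only [hs₂, ht₂]
            field_simp
            ring
  -- bounds for the geometric sums
  have hG1l : ∀ k : ℤ, ∑' l : ℤ, G₁ k l ≤ cb := by
    intro k
    rw [hcb]
    rw [show -(eps * q') = -(eps * q') by rfl]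
    calc ∑' l : ℤ, G₁ k l
        ≤ ∑' l : ℤ, (if ((l:ℝ) * q' ≤ (k:ℝ) * p) then (2:ℝ≥0∞) ^ (-(eps * ((k:ℝ) * p - (l:ℝ) * q'))) else 0) := by
          apply ENNReal.tsum_le_tsum
          intro l
          simp only [hG₁def]
          exact le_refl _
      _ ≤ (1 - (2:ℝ≥0∞) ^ (-(eps * q')))⁻¹ := tsum_int_geom hq'0 heps _
  have hG1k : ∀ l : ℤ, ∑' k : ℤ, G₁ k l ≤ ca := by
    intro l
    have hneg : ∑' k : ℤ, G₁ k l = ∑' k : ℤ, G₁ (-k) l := ((Equiv.neg ℤ).tsum_eq _).symm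
    rw [hneg, hca]
    calc ∑' k : ℤ, G₁ (-k) l
        ≤ ∑' k : ℤ, (if ((k:ℝ) * p ≤ -((l:ℝ) * q')) then (2:ℝ≥0∞) ^ (-(eps * (-((l:ℝ) * q') - (k:ℝ) * p))) else 0) := by
          apply ENNReal.tsum_le_tsum
          intro k
          simp only [hG₁def]
          by_cases hcnd : (k:ℝ) * p ≤ -((l:ℝ) * q')
          · rw [if_pos hcnd, if_pos (by push_cast; linarith)]
            apply le_of_eq
            congr 1
            push_cast
            ring
          · rw [if_neg hcnd, if_neg (by push_cast; intro hx; apply hcnd; linarith)]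
      _ ≤ (1 - (2:ℝ≥0∞) ^ (-(eps * p)))⁻¹ := tsum_int_geom hp0 heps _
  have hG2l : ∀ k : ℤ, ∑' l : ℤ, G₂ k l ≤ cb := by
    intro k
    have hneg : ∑' l : ℤ, G₂ k l = ∑' l : ℤ, G₂ k (-l) := ((Equiv.neg ℤ).tsum_eq _).symm
    rw [hneg, hcb]
    calc ∑' l : ℤ, G₂ k (-l)
        ≤ ∑' l : ℤ, (if ((l:ℝ) * q' ≤ -((k:ℝ) * p)) then (2:ℝ≥0∞) ^ (-(eps * (-((k:ℝ) * p) - (l:ℝ) * q'))) else 0) := by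
          apply ENNReal.tsum_le_tsum
          intro l
          simp only [hG₂def]
          by_cases hcnd : (k:ℝ) * p < ((-l : ℤ):ℝ) * q'
          · rw [if_pos hcnd, if_pos (by push_cast at hcnd ⊢; linarith)]
            apply le_of_eq
            congr 1
            push_cast
            ring
          · rw [if_neg hcnd]
            exact zero_le
      _ ≤ (1 - (2:ℝ≥0∞) ^ (-(eps * q')))⁻¹ := tsum_int_geom hq'0 heps _
  have hG2k : ∀ l : ℤ, ∑' k : ℤ, G₂ k l ≤ ca := by
    intro l
    rw [hca]
    calc ∑' k : ℤ, G₂ k l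
        ≤ ∑' k : ℤ, (if ((k:ℝ) * p ≤ (l:ℝ) * q') then (2:ℝ≥0∞) ^ (-(eps * ((l:ℝ) * q' - (k:ℝ) * p))) else 0) := by
          apply ENNReal.tsum_le_tsum
          intro k
          simp only [hG₂def]
          by_cases hcnd : (k:ℝ) * p < (l:ℝ) * q'
          · rw [if_pos hcnd, if_pos (le_of_lt hcnd)]
          · rw [if_neg hcnd]
            exact zero_le
      _ ≤ (1 - (2:ℝ≥0∞) ^ (-(eps * p)))⁻¹ := tsum_int_geom hp0 heps _
  -- conjugate-exponent facts for Hölder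
  have hw1 : 1 ≤ t₁ * r₁c := by
    rw [hr₁c, ← div_eq_mul_inv, le_div_iff₀ (by simp only [hs₁]; linarith : (0:ℝ) < 1 - s₁), one_mul]
    simp only [hs₁, ht₁]
    linarith
  have hw2 : 1 ≤ s₂ * r₂ := by
    rw [hr₂, ← div_eq_mul_inv, le_div_iff₀ (by simp only [ht₂]; linarith [ht₂mem.2] : (0:ℝ) < 1 - t₂), one_mul]
    simp only [hs₂, ht₂]
    linarith
  -- assemble
  calc ∑' kl : ℤ × ℤ, (2:ℝ≥0∞) ^ ((kl.1:ℝ)) * (2:ℝ≥0∞) ^ ((kl.2:ℝ))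
          * (min (x kl.1) (y kl.2) * max (x kl.1) (y kl.2) ^ alpha)
      ≤ ∑' kl : ℤ × ℤ, (G₁ kl.1 kl.2 * (X kl.1 ^ (1/r₁) * Y kl.2 ^ t₁)
          + G₂ kl.1 kl.2 * (Y kl.2 ^ (1/r₂c) * X kl.1 ^ s₂)) := ENNReal.tsum_le_tsum key
    _ = (∑' kl : ℤ × ℤ, G₁ kl.1 kl.2 * (X kl.1 ^ (1/r₁) * Y kl.2 ^ t₁))
        + ∑' kl : ℤ × ℤ, G₂ kl.1 kl.2 * (Y kl.2 ^ (1/r₂c) * X kl.1 ^ s₂) := ENNReal.tsum_add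
    _ ≤ cb ^ (1/r₁) * ca ^ (1/r₁c) + cb ^ (1/r₂) * ca ^ (1/r₂c) := by
        apply add_le_add
        · exact holder_piece hconj1 hw1 G₁ X Y hA hB hYle hG1l hG1k
        · have hswap : ∑' kl : ℤ × ℤ, G₂ kl.1 kl.2 * (Y kl.2 ^ (1/r₂c) * X kl.1 ^ s₂)
              = ∑' kl : ℤ × ℤ, (fun a b => G₂ b a) kl.1 kl.2 * (Y kl.1 ^ (1/r₂c) * X kl.2 ^ s₂) := by
            refine ((Equiv.prodComm ℤ ℤ).tsum_eq _).symm.trans ?_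
            apply tsum_congr
            intro kl
            rfl
          rw [hswap, mul_comm ((cb:ℝ≥0∞) ^ (1/r₂)) (ca ^ (1/r₂c))]
          exact holder_piece hconj2.symm hw2 (fun a b => G₂ b a) Y X hB hA hXle hG2k hG2l

end HLS3

namespace HLS4

lemma two_rpow_ne_top (y : ℝ) : (2:ℝ≥0∞) ^ y ≠ ∞ := by
  simp [ENNReal.rpow_eq_top_iff]

lemma two_rpow_ofReal (x : ℝ) : (2:ℝ≥0∞) ^ x = ENNReal.ofReal ((2:ℝ) ^ x) := by
  rw [← ENNReal.ofReal_ofNat 2, ENNReal.ofReal_rpow_of_pos two_pos]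

lemma hmerge : ∀ a b : ℝ, (2:ℝ≥0∞) ^ a * (2:ℝ≥0∞) ^ b = 2 ^ (a + b) :=
  fun a b => (ENNReal.rpow_add a b two_ne_zero ENNReal.ofNat_ne_top).symm

lemma tsum_prod_mul {ι κ : Type*} (f : ι → ℝ≥0∞) (g : κ → ℝ≥0∞) :
    ∑' p : ι × κ, f p.1 * g p.2 = (∑' i, f i) * (∑' j, g j) := by
  rw [ENNReal.tsum_prod (f := fun i j => f i * g j)]
  calc ∑' i, ∑' j, f i * g j = ∑' i, f i * ∑' j, g j := by
        apply tsum_congr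
        intro i
        exact ENNReal.tsum_mul_left
  _ = (∑' i, f i) * (∑' j, g j) := ENNReal.tsum_mul_right

section Core
variable {N : ℕ}

local notation "Eu" => EuclideanSpace ℝ (Fin N)

-- measurability of y ↦ volume (F ∩ ball y R)
lemma meas_inter_ball {F : Set Eu} (hF : MeasurableSet F) (R : ℝ) :
    Measurable (fun y : Eu => volume (F ∩ Metric.ball y R)) := by
  have hrepr : (fun y : Eu => volume (F ∩ Metric.ball y R))
      = fun y : Eu => ∫⁻ x, (F.indicator 1 x) * ((Metric.ball y R).indicator 1 x) := by
    funext y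
    rw [show (fun x => (F.indicator 1 x) * ((Metric.ball y R).indicator 1 x))
        = fun x => (F ∩ Metric.ball y R).indicator 1 x by
      funext x
      by_cases h1 : x ∈ F <;> by_cases h2 : x ∈ Metric.ball y R <;>
        simp [Set.indicator_apply, h1, h2, Set.mem_inter_iff]]
    rw [lintegral_indicator_one (hF.inter measurableSet_ball)]
  rw [hrepr]
  apply Measurable.lintegral_prod_right' (f := fun yx : Eu × Eu =>
    (F.indicator 1 yx.2) * ((Metric.ball yx.1 R).indicator 1 yx.2))
  apply Measurable.mul
  · exact (measurable_one.indicator hF).comp measurable_snd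
  · have hset : MeasurableSet {yx : Eu × Eu | dist yx.2 yx.1 < R} :=
      (isOpen_lt (continuous_snd.dist continuous_fst) continuous_const).measurableSet
    have : (fun yx : Eu × Eu => (Metric.ball yx.1 R).indicator (1 : Eu → ℝ≥0∞) yx.2)
        = {yx : Eu × Eu | dist yx.2 yx.1 < R}.indicator 1 := by
      funext yx
      by_cases h : dist yx.2 yx.1 < R
      · simp [Set.indicator_apply, h, Metric.mem_ball]
      · simp [Set.indicator_apply, h, Metric.mem_ball]
    rw [this]
    exact measurable_one.indicator hset

lemma lint_indicator_mul_const {S : Set Eu} (hS : MeasurableSet S) (c : ℝ≥0∞) :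
    ∫⁻ z, S.indicator 1 z * c = c * volume S := by
  calc ∫⁻ z, S.indicator 1 z * c = ∫⁻ z, S.indicator (fun _ => c) z := by
        apply lintegral_congr
        intro z
        by_cases h : z ∈ S <;> simp [Set.indicator_apply, h]
  _ = c * volume S := lintegral_indicator_const hS c


lemma ball_indicator_symm (R : ℝ) (y x : Eu) :
    (Metric.ball y R).indicator (1 : Eu → ℝ≥0∞) x = (Metric.ball x R).indicator 1 y := by
  by_cases h : dist x y < R
  · rw [Set.indicator_of_mem (Metric.mem_ball.mpr h),
      Set.indicator_of_mem (Metric.mem_ball.mpr (by rwa [dist_comm]))]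
    rfl
  · rw [Set.indicator_of_notMem (fun hc => h (Metric.mem_ball.mp hc)),
      Set.indicator_of_notMem (fun hc => h (by rw [dist_comm]; exact Metric.mem_ball.mp hc))]

lemma vol_inter_ball_repr {F : Set Eu} (hF : MeasurableSet F) (R : ℝ) (y : Eu) :
    volume (F ∩ Metric.ball y R) = ∫⁻ x, F.indicator 1 x * (Metric.ball y R).indicator 1 x := by
  rw [show (fun x => (F.indicator (1 : Eu → ℝ≥0∞) x) * ((Metric.ball y R).indicator 1 x))
      = fun x => (F ∩ Metric.ball y R).indicator 1 x by
    funext x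
    by_cases h1 : x ∈ F <;> by_cases h2 : x ∈ Metric.ball y R <;>
      simp [Set.indicator_apply, h1, h2, Set.mem_inter_iff]]
  rw [lintegral_indicator_one (hF.inter measurableSet_ball)]

lemma pair_ball_meas (R : ℝ) :
    Measurable (fun yx : Eu × Eu => (Metric.ball yx.1 R).indicator (1 : Eu → ℝ≥0∞) yx.2) := by
  have hset : MeasurableSet {yx : Eu × Eu | dist yx.2 yx.1 < R} :=
    (isOpen_lt (continuous_snd.dist continuous_fst) continuous_const).measurableSet
  have : (fun yx : Eu × Eu => (Metric.ball yx.1 R).indicator (1 : Eu → ℝ≥0∞) yx.2)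
      = {yx : Eu × Eu | dist yx.2 yx.1 < R}.indicator 1 := by
    funext yx
    by_cases h : dist yx.2 yx.1 < R
    · simp [Set.indicator_apply, h, Metric.mem_ball]
    · simp [Set.indicator_apply, h, Metric.mem_ball]
  rw [this]
  exact measurable_one.indicator hset

lemma W_swap {E F : Set Eu} (hE : MeasurableSet E) (hF : MeasurableSet F) (R : ℝ) :
    ∫⁻ y, E.indicator 1 y * volume (F ∩ Metric.ball y R)
      = ∫⁻ x, F.indicator 1 x * volume (E ∩ Metric.ball x R) := by
  have hmE : Measurable (E.indicator (1 : Eu → ℝ≥0∞)) := measurable_one.indicator hE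
  have hmF : Measurable (F.indicator (1 : Eu → ℝ≥0∞)) := measurable_one.indicator hF
  calc ∫⁻ y, E.indicator 1 y * volume (F ∩ Metric.ball y R)
      = ∫⁻ y, ∫⁻ x, E.indicator 1 y * (F.indicator 1 x * (Metric.ball y R).indicator 1 x) := by
        apply lintegral_congr
        intro y
        rw [vol_inter_ball_repr hF R y]
        exact (lintegral_const_mul _ (hmF.mul (measurable_one.indicator measurableSet_ball))).symm
    _ = ∫⁻ x, ∫⁻ y, E.indicator 1 y * (F.indicator 1 x * (Metric.ball y R).indicator 1 x) := by
        apply lintegral_lintegral_swap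
        apply Measurable.aemeasurable
        apply Measurable.mul
        · exact hmE.comp measurable_fst
        · exact (hmF.comp measurable_snd).mul (pair_ball_meas R)
    _ = ∫⁻ x, F.indicator 1 x * volume (E ∩ Metric.ball x R) := by
        apply lintegral_congr
        intro x
        calc ∫⁻ y, E.indicator 1 y * (F.indicator 1 x * (Metric.ball y R).indicator 1 x)
            = ∫⁻ y, F.indicator 1 x * (E.indicator 1 y * (Metric.ball x R).indicator 1 y) := by
              apply lintegral_congr
              intro y
              rw [ball_indicator_symm R y x]
              ring
          _ = F.indicator 1 x * ∫⁻ y, E.indicator 1 y * (Metric.ball x R).indicator 1 y :=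
              lintegral_const_mul _ (hmE.mul (measurable_one.indicator measurableSet_ball))
          _ = F.indicator 1 x * volume (E ∩ Metric.ball x R) := by
              rw [← vol_inter_ball_repr hE R x]

lemma level_decomp {f : Eu → ℝ≥0∞} (hfin : ∀ z, f z ≠ ∞) (z : Eu) :
    f z ≤ ∑' k : ℤ, (2:ℝ≥0∞) ^ ((k:ℝ) + 1)
      * ({w | (2:ℝ≥0∞) ^ ((k:ℝ)) ≤ f w ∧ f w < 2 ^ ((k:ℝ) + 1)}).indicator 1 z := by
  rcases eq_or_ne (f z) 0 with h0 | h0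
  · rw [h0]; exact zero_le
  set t : ℝ := (f z).toReal with htdef
  have ht : 0 < t := ENNReal.toReal_pos h0 (hfin z)
  have hfz : f z = ENNReal.ofReal t := (ENNReal.ofReal_toReal (hfin z)).symm
  set k : ℤ := ⌊Real.logb 2 t⌋ with hk
  have hlow : (2:ℝ) ^ ((k:ℝ)) ≤ t := by
    calc (2:ℝ) ^ ((k:ℝ)) ≤ (2:ℝ) ^ (Real.logb 2 t) :=
          Real.rpow_le_rpow_of_exponent_le one_le_two (Int.floor_le _)
    _ = t := Real.rpow_logb two_pos (by norm_num) ht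
  have hhigh : t < (2:ℝ) ^ ((k:ℝ) + 1) := by
    calc t = (2:ℝ) ^ (Real.logb 2 t) := (Real.rpow_logb two_pos (by norm_num) ht).symm
    _ < (2:ℝ) ^ ((k:ℝ) + 1) :=
        Real.rpow_lt_rpow_of_exponent_lt one_lt_two (Int.lt_floor_add_one _)
  have hmem : z ∈ {w | (2:ℝ≥0∞) ^ ((k:ℝ)) ≤ f w ∧ f w < 2 ^ ((k:ℝ) + 1)} := by
    constructor
    · rw [hfz, two_rpow_ofReal]
      exact ENNReal.ofReal_le_ofReal hlow
    · rw [hfz, two_rpow_ofReal]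
      exact (ENNReal.ofReal_lt_ofReal_iff (by positivity)).mpr hhigh
  calc f z ≤ (2:ℝ≥0∞) ^ ((k:ℝ) + 1) := by
        rw [hfz, two_rpow_ofReal]
        exact (ENNReal.ofReal_le_ofReal hhigh.le)
  _ = (2:ℝ≥0∞) ^ ((k:ℝ) + 1)
      * ({w | (2:ℝ≥0∞) ^ ((k:ℝ)) ≤ f w ∧ f w < 2 ^ ((k:ℝ) + 1)}).indicator 1 z := by
      rw [Set.indicator_of_mem hmem]
      simp
  _ ≤ _ := ENNReal.le_tsum k

lemma kernel_decomp {lam : ℝ} (hlam : 0 < lam) (y x : Eu) :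
    ENNReal.ofReal (1 / ‖x - y‖ ^ lam)
      ≤ ∑' j : ℤ, (2:ℝ≥0∞) ^ (-((j:ℝ) * lam))
          * (Metric.ball y ((2:ℝ) ^ ((j:ℝ) + 1))).indicator 1 x := by
  by_cases hxy : x = y
  · subst hxy
    rw [sub_self, norm_zero, Real.zero_rpow (ne_of_gt hlam)]
    simp
  set r : ℝ := ‖x - y‖ with hr
  have hrpos : 0 < r := by
    rw [hr, norm_pos_iff]
    exact sub_ne_zero_of_ne hxy
  set j : ℤ := ⌊Real.logb 2 r⌋ with hj
  have hlow : (2:ℝ) ^ ((j:ℝ)) ≤ r := by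
    calc (2:ℝ) ^ ((j:ℝ)) ≤ (2:ℝ) ^ (Real.logb 2 r) :=
          Real.rpow_le_rpow_of_exponent_le one_le_two (Int.floor_le _)
    _ = r := Real.rpow_logb two_pos (by norm_num) hrpos
  have hhigh : r < (2:ℝ) ^ ((j:ℝ) + 1) := by
    calc r = (2:ℝ) ^ (Real.logb 2 r) := (Real.rpow_logb two_pos (by norm_num) hrpos).symm
    _ < (2:ℝ) ^ ((j:ℝ) + 1) :=
        Real.rpow_lt_rpow_of_exponent_lt one_lt_two (Int.lt_floor_add_one _)
  have hmem : x ∈ Metric.ball y ((2:ℝ) ^ ((j:ℝ) + 1)) := by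
    rw [Metric.mem_ball, dist_eq_norm]
    exact hhigh
  have hb : ENNReal.ofReal (1 / r ^ lam) ≤ (2:ℝ≥0∞) ^ (-((j:ℝ) * lam)) := by
    rw [two_rpow_ofReal]
    apply ENNReal.ofReal_le_ofReal
    have h1 : (2:ℝ) ^ ((j:ℝ) * lam) ≤ r ^ lam := by
      calc (2:ℝ) ^ ((j:ℝ) * lam) = ((2:ℝ) ^ ((j:ℝ))) ^ lam := by
            rw [← Real.rpow_mul (by norm_num)]
      _ ≤ r ^ lam := Real.rpow_le_rpow (by positivity) hlow hlam.le
    calc 1 / r ^ lam ≤ 1 / (2:ℝ) ^ ((j:ℝ) * lam) := by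
          apply one_div_le_one_div_of_le _ h1
          positivity
    _ = (2:ℝ) ^ (-((j:ℝ) * lam)) := by
        rw [Real.rpow_neg (by norm_num), one_div]
  calc ENNReal.ofReal (1 / r ^ lam)
      ≤ (2:ℝ≥0∞) ^ (-((j:ℝ) * lam))
        * (Metric.ball y ((2:ℝ) ^ ((j:ℝ) + 1))).indicator 1 x := by
        rw [Set.indicator_of_mem hmem]
        simpa using hb
  _ ≤ _ := ENNReal.le_tsum j


lemma level_decomp' {f : Eu → ℝ≥0∞} (hfin : ∀ z, f z ≠ ∞) (Ek : ℤ → Set Eu)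
    (hEk : ∀ k : ℤ, Ek k = {w | (2:ℝ≥0∞) ^ ((k:ℝ)) ≤ f w ∧ f w < 2 ^ ((k:ℝ) + 1)}) (z : Eu) :
    f z ≤ ∑' k : ℤ, (2:ℝ≥0∞) ^ ((k:ℝ) + 1) * (Ek k).indicator 1 z := by
  simp only [hEk]
  exact level_decomp hfin z

set_option maxHeartbeats 2000000 in
lemma core_norm (hN : 1 ≤ N) (lam p q q' : ℝ) (hlam0 : 0 < lam) (hlamN : lam < (N:ℝ))
    (hp : 1 < p) (hpq : p < q) (hq'c : 1/q + 1/q' = 1) (hscal : 1/q = 1/p + lam/(N:ℝ) - 1) :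
    ∃ K : ℝ≥0∞, K ≠ ∞ ∧ ∀ f g : Eu → ℝ≥0∞, Measurable f → Measurable g →
      (∀ z, f z ≠ ∞) → (∀ z, g z ≠ ∞) →
      (∫⁻ z, f z ^ p) ≤ 1 → (∫⁻ z, g z ^ q') ≤ 1 →
      ∫⁻ y, ∫⁻ x, f y * g x * ENNReal.ofReal (1 / ‖x - y‖ ^ lam) ≤ K := by
  -- numeric facts
  have hNr : (0:ℝ) < (N:ℝ) := lt_trans hlam0 hlamN
  have hq1 : 1 < q := hp.trans hpq
  have hq0 : (0:ℝ) < q := by linarith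
  have hp0 : (0:ℝ) < p := by linarith
  have hqinv : (0:ℝ) < 1/q := by positivity
  have hqinv1 : 1/q < 1 := by rw [div_lt_one hq0]; exact hq1
  have hpinv : (0:ℝ) < 1/p := by positivity
  have hpinv1 : 1/p < 1 := by rw [div_lt_one hp0]; exact hp
  have hpq' : 1/q < 1/p := by
    rw [div_lt_div_iff_of_pos_left one_pos hq0 hp0]
    exact hpq
  have h1q' : 1/q' = 1 - 1/q := by linarith
  have hq'pos : (0:ℝ) < q' := by
    by_contra hc
    push_neg at hc
    have : 1/q' ≤ 0 := one_div_nonpos.mpr hc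
    linarith
  have hq'1 : 1 < q' := by
    have h2 : 1/q' < 1 := by linarith
    rw [div_lt_one hq'pos] at h2
    exact h2
  set alpha : ℝ := 1 - lam/(N:ℝ) with halphadef
  have halphaeq : alpha = 1/p - 1/q := by rw [halphadef]; linarith
  have halpha : 0 ≤ alpha := by rw [halphaeq]; linarith
  have hsum : 1 + alpha = 1/p + 1/q' := by rw [halphaeq, h1q']; ring
  set eps : ℝ := min (1/q) (1 - 1/p) / 2 with hepsdef
  have hmin1 : min (1/q) (1 - 1/p) ≤ 1/q := min_le_left _ _
  have hmin2 : min (1/q) (1 - 1/p) ≤ 1 - 1/p := min_le_right _ _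
  have hminpos : 0 < min (1/q) (1 - 1/p) := lt_min hqinv (by linarith)
  have heps : 0 < eps := by rw [hepsdef]; positivity
  have heps1 : eps < 1 - 1/p := by rw [hepsdef]; linarith
  have heps2 : eps < 1 - 1/q' := by
    rw [hepsdef, h1q']
    linarith
  have hs2a : alpha + eps ≤ 1/p := by
    rw [halphaeq, hepsdef]
    linarith
  -- geometry
  haveI : Nontrivial Eu := by
    apply Module.nontrivial_of_finrank_pos (R := ℝ)
    rw [finrank_euclideanSpace_fin]
    omega
  set v : ℝ≥0∞ := volume (Metric.ball (0:Eu) 1) with hvdef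
  have hv0 : v ≠ 0 := (measure_ball_pos volume (0:Eu) one_pos).ne'
  have hvt : v ≠ ∞ := measure_ball_lt_top.ne
  have hball : ∀ (y : Eu) (j : ℤ),
      volume (Metric.ball y ((2:ℝ) ^ ((j:ℝ) + 1))) = v * (2:ℝ≥0∞) ^ (((j:ℝ) + 1) * (N:ℝ)) := by
    intro y j
    have hr : (0:ℝ) ≤ (2:ℝ) ^ ((j:ℝ) + 1) := by positivity
    rw [Measure.addHaar_ball volume y hr, finrank_euclideanSpace_fin]
    rw [← Real.rpow_natCast ((2:ℝ) ^ ((j:ℝ) + 1)) N, ← Real.rpow_mul (by norm_num)]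
    rw [← two_rpow_ofReal]
    exact mul_comm _ _
  obtain ⟨CC, hCCt, hCC⟩ := HLS2.sumC hlam0 hlamN hv0 hvt
  obtain ⟨CD, hCDt, hCD⟩ := HLS3.sumD hp hq'1 heps halpha hsum hs2a heps1 heps2
  refine ⟨2 * 2 * CC * CD, ?_, ?_⟩
  · apply ENNReal.mul_ne_top (ENNReal.mul_ne_top _ hCCt) hCDt
    norm_num
  intro f g hf hg hffin hgfin hA hB
  set Ek : ℤ → Set Eu := fun k => {w | (2:ℝ≥0∞) ^ ((k:ℝ)) ≤ f w ∧ f w < 2 ^ ((k:ℝ) + 1)} with hEkdef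
  set Fl : ℤ → Set Eu := fun l => {w | (2:ℝ≥0∞) ^ ((l:ℝ)) ≤ g w ∧ g w < 2 ^ ((l:ℝ) + 1)} with hFldef
  have hEkm : ∀ k, MeasurableSet (Ek k) := by
    intro k
    rw [show Ek k = f ⁻¹' (Set.Ico ((2:ℝ≥0∞) ^ ((k:ℝ))) (2 ^ ((k:ℝ) + 1))) from rfl]
    exact hf measurableSet_Ico
  have hFlm : ∀ l, MeasurableSet (Fl l) := by
    intro l
    rw [show Fl l = g ⁻¹' (Set.Ico ((2:ℝ≥0∞) ^ ((l:ℝ))) (2 ^ ((l:ℝ) + 1))) from rfl]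
    exact hg measurableSet_Ico
  have hdisj : ∀ (h : Eu → ℝ≥0∞) (S : ℤ → Set Eu),
      (∀ k : ℤ, S k = {w | (2:ℝ≥0∞) ^ ((k:ℝ)) ≤ h w ∧ h w < 2 ^ ((k:ℝ) + 1)}) →
      Pairwise (Function.onFun Disjoint S) := by
    intro h S hS
    have key : ∀ a b : ℤ, a < b → Disjoint (S a) (S b) := by
      intro a b hab
      rw [Set.disjoint_left]
      intro z hza hzb
      rw [hS a] at hza
      rw [hS b] at hzb
      have h1 : h z < 2 ^ ((a:ℝ) + 1) := hza.2
      have h2 : (2:ℝ≥0∞) ^ ((b:ℝ)) ≤ h z := hzb.1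
      have h3 : (2:ℝ≥0∞) ^ ((a:ℝ) + 1) ≤ 2 ^ ((b:ℝ)) := by
        apply ENNReal.rpow_le_rpow_of_exponent_le one_le_two
        have : (a:ℝ) + 1 ≤ (b:ℝ) := by exact_mod_cast (by omega : a + 1 ≤ b)
        linarith
      exact absurd (lt_of_lt_of_le (lt_of_lt_of_le h1 h3) h2) (lt_irrefl _)
    intro a b hab
    rcases lt_or_gt_of_ne hab with h | h
    · exact key a b h
    · exact (key b a h).symm
  have hEkd : Pairwise (Function.onFun Disjoint Ek) := hdisj f Ek (fun k => by rw [hEkdef])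
  have hFld : Pairwise (Function.onFun Disjoint Fl) := hdisj g Fl (fun l => by rw [hFldef])
  have hlevelsum : ∀ (h : Eu → ℝ≥0∞) (e : ℝ), Measurable h → (0 < e) →
      ∀ (S : ℤ → Set Eu), (∀ k, MeasurableSet (S k)) → Pairwise (Function.onFun Disjoint S) →
      (∀ k : ℤ, S k = {w | (2:ℝ≥0∞) ^ ((k:ℝ)) ≤ h w ∧ h w < 2 ^ ((k:ℝ) + 1)}) →
      (∫⁻ z, h z ^ e) ≤ 1 →
      ∑' k : ℤ, (2:ℝ≥0∞) ^ ((k:ℝ) * e) * volume (S k) ≤ 1 := by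
    intro h e hh he S hSm hSd hS hint
    calc ∑' k : ℤ, (2:ℝ≥0∞) ^ ((k:ℝ) * e) * volume (S k)
        ≤ ∑' k : ℤ, ∫⁻ z in S k, h z ^ e := by
          apply ENNReal.tsum_le_tsum
          intro k
          calc (2:ℝ≥0∞) ^ ((k:ℝ) * e) * volume (S k)
              = ∫⁻ _ in S k, (2:ℝ≥0∞) ^ ((k:ℝ) * e) := (setLIntegral_const _ _).symm
            _ ≤ ∫⁻ z in S k, h z ^ e := by
                apply setLIntegral_mono (hh.pow_const e)
                intro z hz
                rw [hS k] at hz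
                calc (2:ℝ≥0∞) ^ ((k:ℝ) * e) = ((2:ℝ≥0∞) ^ ((k:ℝ))) ^ e := ENNReal.rpow_mul 2 _ e
                _ ≤ h z ^ e := ENNReal.rpow_le_rpow hz.1 he.le
      _ = ∫⁻ z in ⋃ k, S k, h z ^ e := (lintegral_iUnion hSm hSd _).symm
      _ ≤ ∫⁻ z, h z ^ e := setLIntegral_le_lintegral _ _
      _ ≤ 1 := hint
  have hXsum : ∑' k : ℤ, (2:ℝ≥0∞) ^ ((k:ℝ) * p) * volume (Ek k) ≤ 1 :=
    hlevelsum f p hf hp0 Ek hEkm hEkd (fun k => by rw [hEkdef]) hA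
  have hYsum : ∑' l : ℤ, (2:ℝ≥0∞) ^ ((l:ℝ) * q') * volume (Fl l) ≤ 1 :=
    hlevelsum g q' hg hq'pos Fl hFlm hFld (fun l => by rw [hFldef]) hB
  have hxfin : ∀ k, volume (Ek k) ≠ ∞ := by
    intro k hinf
    have h1 : (2:ℝ≥0∞) ^ ((k:ℝ) * p) * volume (Ek k) ≤ 1 := le_trans (ENNReal.le_tsum k) hXsum
    rw [hinf, ENNReal.mul_top (by simp [ENNReal.rpow_eq_zero_iff])] at h1
    exact absurd h1 (by simp)
  have hyfin : ∀ l, volume (Fl l) ≠ ∞ := by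
    intro l hinf
    have h1 : (2:ℝ≥0∞) ^ ((l:ℝ) * q') * volume (Fl l) ≤ 1 := le_trans (ENNReal.le_tsum l) hYsum
    rw [hinf, ENNReal.mul_top (by simp [ENNReal.rpow_eq_zero_iff])] at h1
    exact absurd h1 (by simp)
  -- main chain
  set R : ℤ → ℝ := fun j => (2:ℝ) ^ ((j:ℝ) + 1) with hRdef
  set m : ℤ → ℤ → Eu → ℝ≥0∞ := fun l j y => volume (Fl l ∩ Metric.ball y (R j)) with hmdef
  set W : ℤ → ℤ → ℤ → ℝ≥0∞ := fun k l j => ∫⁻ y, (Ek k).indicator 1 y * m l j y with hWdef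
  have hmeasm : ∀ l j, Measurable (m l j) := fun l j => meas_inter_ball (hFlm l) (R j)
  have hsucc : ∀ a : ℝ, (2:ℝ≥0∞) ^ (a + 1) = 2 ^ a * 2 := by
    intro a
    rw [← hmerge a 1, ENNReal.rpow_one]
  -- step 0 : pointwise domination
  have step0 : ∫⁻ y, ∫⁻ x, f y * g x * ENNReal.ofReal (1 / ‖x - y‖ ^ lam)
      ≤ ∫⁻ y, ∫⁻ x, (∑' k : ℤ, (2:ℝ≥0∞) ^ ((k:ℝ) + 1) * (Ek k).indicator 1 y)
          * (∑' l : ℤ, (2:ℝ≥0∞) ^ ((l:ℝ) + 1) * (Fl l).indicator 1 x)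
          * (∑' j : ℤ, (2:ℝ≥0∞) ^ (-((j:ℝ) * lam)) * (Metric.ball y (R j)).indicator 1 x) := by
    apply lintegral_mono
    intro y
    apply lintegral_mono
    intro x
    exact mul_le_mul' (mul_le_mul' (level_decomp' hffin Ek (fun k => by rw [hEkdef]) y)
      (level_decomp' hgfin Fl (fun l => by rw [hFldef]) x)) (kernel_decomp hlam0 y x)
  -- step 1 : pointwise reorganization into a single tsum
  have hsplit : ∀ y x : Eu,
      (∑' k : ℤ, (2:ℝ≥0∞) ^ ((k:ℝ) + 1) * (Ek k).indicator 1 y)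
          * (∑' l : ℤ, (2:ℝ≥0∞) ^ ((l:ℝ) + 1) * (Fl l).indicator 1 x)
          * (∑' j : ℤ, (2:ℝ≥0∞) ^ (-((j:ℝ) * lam)) * (Metric.ball y (R j)).indicator 1 x)
      = ∑' t : (ℤ × ℤ) × ℤ,
          ((2:ℝ≥0∞) ^ ((t.1.1:ℝ) + 1) * (Ek t.1.1).indicator 1 y
            * ((2:ℝ≥0∞) ^ ((t.1.2:ℝ) + 1) * (Fl t.1.2).indicator 1 x))
          * ((2:ℝ≥0∞) ^ (-((t.2:ℝ) * lam)) * (Metric.ball y (R t.2)).indicator 1 x) := by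
    intro y x
    rw [← tsum_prod_mul (fun k : ℤ => (2:ℝ≥0∞) ^ ((k:ℝ) + 1) * (Ek k).indicator 1 y)
      (fun l : ℤ => (2:ℝ≥0∞) ^ ((l:ℝ) + 1) * (Fl l).indicator 1 x)]
    rw [← tsum_prod_mul (fun kl : ℤ × ℤ =>
        (2:ℝ≥0∞) ^ ((kl.1:ℝ) + 1) * (Ek kl.1).indicator 1 y
          * ((2:ℝ≥0∞) ^ ((kl.2:ℝ) + 1) * (Fl kl.2).indicator 1 x))
      (fun j : ℤ => (2:ℝ≥0∞) ^ (-((j:ℝ) * lam)) * (Metric.ball y (R j)).indicator 1 x)]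
  -- step 2 : inner integral
  have hinner : ∀ y : Eu,
      ∫⁻ x, ∑' t : (ℤ × ℤ) × ℤ,
          ((2:ℝ≥0∞) ^ ((t.1.1:ℝ) + 1) * (Ek t.1.1).indicator 1 y
            * ((2:ℝ≥0∞) ^ ((t.1.2:ℝ) + 1) * (Fl t.1.2).indicator 1 x))
          * ((2:ℝ≥0∞) ^ (-((t.2:ℝ) * lam)) * (Metric.ball y (R t.2)).indicator 1 x)
      = ∑' t : (ℤ × ℤ) × ℤ,
          (2:ℝ≥0∞) ^ ((t.1.1:ℝ) + 1) * (Ek t.1.1).indicator 1 y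
            * ((2:ℝ≥0∞) ^ ((t.1.2:ℝ) + 1) * (2:ℝ≥0∞) ^ (-((t.2:ℝ) * lam)) * m t.1.2 t.2 y) := by
    intro y
    rw [lintegral_tsum]
    · apply tsum_congr
      intro t
      rcases t with ⟨⟨k, l⟩, j⟩
      simp only
      calc ∫⁻ x, ((2:ℝ≥0∞) ^ ((k:ℝ) + 1) * (Ek k).indicator 1 y
              * ((2:ℝ≥0∞) ^ ((l:ℝ) + 1) * (Fl l).indicator 1 x))
              * ((2:ℝ≥0∞) ^ (-((j:ℝ) * lam)) * (Metric.ball y (R j)).indicator 1 x)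
          = ∫⁻ x, ((2:ℝ≥0∞) ^ ((k:ℝ) + 1) * (Ek k).indicator 1 y)
              * ((2:ℝ≥0∞) ^ ((l:ℝ) + 1) * (2:ℝ≥0∞) ^ (-((j:ℝ) * lam))
                * ((Fl l).indicator 1 x * (Metric.ball y (R j)).indicator 1 x)) := by
            apply lintegral_congr
            intro x
            ring
        _ = ((2:ℝ≥0∞) ^ ((k:ℝ) + 1) * (Ek k).indicator 1 y)
            * ∫⁻ x, (2:ℝ≥0∞) ^ ((l:ℝ) + 1) * (2:ℝ≥0∞) ^ (-((j:ℝ) * lam))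
              * ((Fl l).indicator 1 x * (Metric.ball y (R j)).indicator 1 x) := by
            apply lintegral_const_mul
            exact (((measurable_one.indicator (hFlm l)).mul
              (measurable_one.indicator measurableSet_ball))).const_mul _
        _ = ((2:ℝ≥0∞) ^ ((k:ℝ) + 1) * (Ek k).indicator 1 y)
            * ((2:ℝ≥0∞) ^ ((l:ℝ) + 1) * (2:ℝ≥0∞) ^ (-((j:ℝ) * lam))
              * ∫⁻ x, (Fl l).indicator 1 x * (Metric.ball y (R j)).indicator 1 x) := by
            rw [lintegral_const_mul]
            exact (measurable_one.indicator (hFlm l)).mul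
              (measurable_one.indicator measurableSet_ball)
        _ = (2:ℝ≥0∞) ^ ((k:ℝ) + 1) * (Ek k).indicator 1 y
            * ((2:ℝ≥0∞) ^ ((l:ℝ) + 1) * (2:ℝ≥0∞) ^ (-((j:ℝ) * lam)) * m l j y) := by
            rw [← vol_inter_ball_repr (hFlm l) (R j) y]
    · intro t
      apply Measurable.aemeasurable
      apply Measurable.mul
      · exact measurable_const.mul ((measurable_one.indicator (hFlm t.1.2)).const_mul _)
      · exact (measurable_one.indicator measurableSet_ball).const_mul _
  -- step 3 : outer integral
  have houter : ∫⁻ y, ∑' t : (ℤ × ℤ) × ℤ,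
          (2:ℝ≥0∞) ^ ((t.1.1:ℝ) + 1) * (Ek t.1.1).indicator 1 y
            * ((2:ℝ≥0∞) ^ ((t.1.2:ℝ) + 1) * (2:ℝ≥0∞) ^ (-((t.2:ℝ) * lam)) * m t.1.2 t.2 y)
      = ∑' t : (ℤ × ℤ) × ℤ,
          (2:ℝ≥0∞) ^ ((t.1.1:ℝ) + 1)
            * ((2:ℝ≥0∞) ^ ((t.1.2:ℝ) + 1) * (2:ℝ≥0∞) ^ (-((t.2:ℝ) * lam)))
            * W t.1.1 t.1.2 t.2 := by
    rw [lintegral_tsum]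
    · apply tsum_congr
      intro t
      rcases t with ⟨⟨k, l⟩, j⟩
      simp only
      calc ∫⁻ y, (2:ℝ≥0∞) ^ ((k:ℝ) + 1) * (Ek k).indicator 1 y
              * ((2:ℝ≥0∞) ^ ((l:ℝ) + 1) * (2:ℝ≥0∞) ^ (-((j:ℝ) * lam)) * m l j y)
          = ∫⁻ y, ((2:ℝ≥0∞) ^ ((k:ℝ) + 1) * ((2:ℝ≥0∞) ^ ((l:ℝ) + 1) * (2:ℝ≥0∞) ^ (-((j:ℝ) * lam))))
              * ((Ek k).indicator 1 y * m l j y) := by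
            apply lintegral_congr
            intro y
            ring
        _ = ((2:ℝ≥0∞) ^ ((k:ℝ) + 1) * ((2:ℝ≥0∞) ^ ((l:ℝ) + 1) * (2:ℝ≥0∞) ^ (-((j:ℝ) * lam))))
            * ∫⁻ y, (Ek k).indicator 1 y * m l j y := by
            apply lintegral_const_mul
            exact (measurable_one.indicator (hEkm k)).mul (hmeasm l j)
        _ = (2:ℝ≥0∞) ^ ((k:ℝ) + 1)
            * ((2:ℝ≥0∞) ^ ((l:ℝ) + 1) * (2:ℝ≥0∞) ^ (-((j:ℝ) * lam))) * W k l j := by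
            rw [mul_assoc]
    · intro t
      apply Measurable.aemeasurable
      exact ((measurable_one.indicator (hEkm t.1.1)).const_mul _).mul
        ((hmeasm t.1.2 t.2).const_mul _)
  -- step 4 : per (k,l) bound on the j-sum
  have hWb : ∀ k l j : ℤ, W k l j
      ≤ min (volume (Ek k)) (volume (Fl l))
        * min (max (volume (Ek k)) (volume (Fl l))) (v * (2:ℝ≥0∞) ^ (((j:ℝ) + 1) * (N:ℝ))) := by
    intro k l j
    have hb1 : W k l j ≤ volume (Ek k)
        * min (volume (Fl l)) (v * (2:ℝ≥0∞) ^ (((j:ℝ) + 1) * (N:ℝ))) := by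
      calc W k l j ≤ ∫⁻ y, (Ek k).indicator 1 y
            * (min (volume (Fl l)) (v * (2:ℝ≥0∞) ^ (((j:ℝ) + 1) * (N:ℝ)))) := by
            apply lintegral_mono
            intro y
            apply mul_le_mul_right
            exact le_min (measure_mono Set.inter_subset_left)
              (le_trans (measure_mono Set.inter_subset_right) (le_of_eq (hball y j)))
        _ = min (volume (Fl l)) (v * (2:ℝ≥0∞) ^ (((j:ℝ) + 1) * (N:ℝ))) * volume (Ek k) :=
            lint_indicator_mul_const (hEkm k) _
        _ = volume (Ek k) * min (volume (Fl l)) (v * (2:ℝ≥0∞) ^ (((j:ℝ) + 1) * (N:ℝ))) :=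
            mul_comm _ _
    have hb2 : W k l j ≤ volume (Fl l)
        * min (volume (Ek k)) (v * (2:ℝ≥0∞) ^ (((j:ℝ) + 1) * (N:ℝ))) := by
      have hswapW : W k l j = ∫⁻ x, (Fl l).indicator 1 x * volume (Ek k ∩ Metric.ball x (R j)) :=
        W_swap (hEkm k) (hFlm l) (R j)
      rw [hswapW]
      calc ∫⁻ x, (Fl l).indicator 1 x * volume (Ek k ∩ Metric.ball x (R j))
          ≤ ∫⁻ x, (Fl l).indicator 1 x
            * (min (volume (Ek k)) (v * (2:ℝ≥0∞) ^ (((j:ℝ) + 1) * (N:ℝ)))) := by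
            apply lintegral_mono
            intro x
            apply mul_le_mul_right
            exact le_min (measure_mono Set.inter_subset_left)
              (le_trans (measure_mono Set.inter_subset_right) (le_of_eq (hball x j)))
        _ = min (volume (Ek k)) (v * (2:ℝ≥0∞) ^ (((j:ℝ) + 1) * (N:ℝ))) * volume (Fl l) :=
            lint_indicator_mul_const (hFlm l) _
        _ = volume (Fl l) * min (volume (Ek k)) (v * (2:ℝ≥0∞) ^ (((j:ℝ) + 1) * (N:ℝ))) :=
            mul_comm _ _
    rcases le_total (volume (Ek k)) (volume (Fl l)) with hle | hle
    · rw [min_eq_left hle, max_eq_right hle]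
      exact hb1
    · rw [min_eq_right hle, max_eq_left hle]
      exact hb2
  have step5 : ∀ k l : ℤ,
      ∑' j : ℤ, (2:ℝ≥0∞) ^ ((k:ℝ) + 1)
          * ((2:ℝ≥0∞) ^ ((l:ℝ) + 1) * (2:ℝ≥0∞) ^ (-((j:ℝ) * lam))) * W k l j
      ≤ (2:ℝ≥0∞) ^ ((k:ℝ) + 1) * (2:ℝ≥0∞) ^ ((l:ℝ) + 1)
          * (min (volume (Ek k)) (volume (Fl l))
            * (CC * max (volume (Ek k)) (volume (Fl l)) ^ alpha)) := by
    intro k l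
    have hMt : max (volume (Ek k)) (volume (Fl l)) ≠ ∞ :=
      (max_lt (lt_top_iff_ne_top.mpr (hxfin k)) (lt_top_iff_ne_top.mpr (hyfin l))).ne
    calc ∑' j : ℤ, (2:ℝ≥0∞) ^ ((k:ℝ) + 1)
            * ((2:ℝ≥0∞) ^ ((l:ℝ) + 1) * (2:ℝ≥0∞) ^ (-((j:ℝ) * lam))) * W k l j
        ≤ ∑' j : ℤ, ((2:ℝ≥0∞) ^ ((k:ℝ) + 1) * (2:ℝ≥0∞) ^ ((l:ℝ) + 1)
            * min (volume (Ek k)) (volume (Fl l)))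
            * ((2:ℝ≥0∞) ^ (-((j:ℝ) * lam))
              * min (max (volume (Ek k)) (volume (Fl l)))
                (v * (2:ℝ≥0∞) ^ (((j:ℝ) + 1) * (N:ℝ)))) := by
          apply ENNReal.tsum_le_tsum
          intro j
          calc (2:ℝ≥0∞) ^ ((k:ℝ) + 1)
              * ((2:ℝ≥0∞) ^ ((l:ℝ) + 1) * (2:ℝ≥0∞) ^ (-((j:ℝ) * lam))) * W k l j
              ≤ (2:ℝ≥0∞) ^ ((k:ℝ) + 1)
                * ((2:ℝ≥0∞) ^ ((l:ℝ) + 1) * (2:ℝ≥0∞) ^ (-((j:ℝ) * lam)))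
                * (min (volume (Ek k)) (volume (Fl l))
                  * min (max (volume (Ek k)) (volume (Fl l)))
                    (v * (2:ℝ≥0∞) ^ (((j:ℝ) + 1) * (N:ℝ)))) :=
                mul_le_mul_right (hWb k l j) _
            _ = ((2:ℝ≥0∞) ^ ((k:ℝ) + 1) * (2:ℝ≥0∞) ^ ((l:ℝ) + 1)
                * min (volume (Ek k)) (volume (Fl l)))
                * ((2:ℝ≥0∞) ^ (-((j:ℝ) * lam))
                  * min (max (volume (Ek k)) (volume (Fl l)))
                    (v * (2:ℝ≥0∞) ^ (((j:ℝ) + 1) * (N:ℝ)))) := by ring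
      _ = ((2:ℝ≥0∞) ^ ((k:ℝ) + 1) * (2:ℝ≥0∞) ^ ((l:ℝ) + 1)
          * min (volume (Ek k)) (volume (Fl l)))
          * ∑' j : ℤ, (2:ℝ≥0∞) ^ (-((j:ℝ) * lam))
            * min (max (volume (Ek k)) (volume (Fl l)))
              (v * (2:ℝ≥0∞) ^ (((j:ℝ) + 1) * (N:ℝ))) := ENNReal.tsum_mul_left
      _ ≤ ((2:ℝ≥0∞) ^ ((k:ℝ) + 1) * (2:ℝ≥0∞) ^ ((l:ℝ) + 1)
          * min (volume (Ek k)) (volume (Fl l)))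
          * (CC * max (volume (Ek k)) (volume (Fl l)) ^ (1 - lam / (N:ℝ))) :=
          mul_le_mul_right (hCC _ hMt) _
      _ = (2:ℝ≥0∞) ^ ((k:ℝ) + 1) * (2:ℝ≥0∞) ^ ((l:ℝ) + 1)
          * (min (volume (Ek k)) (volume (Fl l))
            * (CC * max (volume (Ek k)) (volume (Fl l)) ^ alpha)) := by
          rw [halphadef]
          ring
  -- assemble
  calc ∫⁻ y, ∫⁻ x, f y * g x * ENNReal.ofReal (1 / ‖x - y‖ ^ lam)
      ≤ ∫⁻ y, ∫⁻ x, (∑' k : ℤ, (2:ℝ≥0∞) ^ ((k:ℝ) + 1) * (Ek k).indicator 1 y)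
          * (∑' l : ℤ, (2:ℝ≥0∞) ^ ((l:ℝ) + 1) * (Fl l).indicator 1 x)
          * (∑' j : ℤ, (2:ℝ≥0∞) ^ (-((j:ℝ) * lam)) * (Metric.ball y (R j)).indicator 1 x) := step0
    _ = ∫⁻ y, ∑' t : (ℤ × ℤ) × ℤ,
          (2:ℝ≥0∞) ^ ((t.1.1:ℝ) + 1) * (Ek t.1.1).indicator 1 y
            * ((2:ℝ≥0∞) ^ ((t.1.2:ℝ) + 1) * (2:ℝ≥0∞) ^ (-((t.2:ℝ) * lam)) * m t.1.2 t.2 y) := by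
        apply lintegral_congr
        intro y
        rw [show (fun x => (∑' k : ℤ, (2:ℝ≥0∞) ^ ((k:ℝ) + 1) * (Ek k).indicator 1 y)
          * (∑' l : ℤ, (2:ℝ≥0∞) ^ ((l:ℝ) + 1) * (Fl l).indicator 1 x)
          * (∑' j : ℤ, (2:ℝ≥0∞) ^ (-((j:ℝ) * lam)) * (Metric.ball y (R j)).indicator 1 x))
          = fun x => ∑' t : (ℤ × ℤ) × ℤ,
          ((2:ℝ≥0∞) ^ ((t.1.1:ℝ) + 1) * (Ek t.1.1).indicator 1 y
            * ((2:ℝ≥0∞) ^ ((t.1.2:ℝ) + 1) * (Fl t.1.2).indicator 1 x))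
          * ((2:ℝ≥0∞) ^ (-((t.2:ℝ) * lam)) * (Metric.ball y (R t.2)).indicator 1 x) from
          funext fun x => hsplit y x]
        exact hinner y
    _ = ∑' t : (ℤ × ℤ) × ℤ,
          (2:ℝ≥0∞) ^ ((t.1.1:ℝ) + 1)
            * ((2:ℝ≥0∞) ^ ((t.1.2:ℝ) + 1) * (2:ℝ≥0∞) ^ (-((t.2:ℝ) * lam)))
            * W t.1.1 t.1.2 t.2 := houter
    _ = ∑' kl : ℤ × ℤ, ∑' j : ℤ,
          (2:ℝ≥0∞) ^ ((kl.1:ℝ) + 1)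
            * ((2:ℝ≥0∞) ^ ((kl.2:ℝ) + 1) * (2:ℝ≥0∞) ^ (-((j:ℝ) * lam)))
            * W kl.1 kl.2 j :=
        ENNReal.tsum_prod (f := fun (kl : ℤ × ℤ) (j : ℤ) =>
          (2:ℝ≥0∞) ^ ((kl.1:ℝ) + 1)
            * ((2:ℝ≥0∞) ^ ((kl.2:ℝ) + 1) * (2:ℝ≥0∞) ^ (-((j:ℝ) * lam))) * W kl.1 kl.2 j)
    _ ≤ ∑' kl : ℤ × ℤ, (2:ℝ≥0∞) ^ ((kl.1:ℝ) + 1) * (2:ℝ≥0∞) ^ ((kl.2:ℝ) + 1)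
          * (min (volume (Ek kl.1)) (volume (Fl kl.2))
            * (CC * max (volume (Ek kl.1)) (volume (Fl kl.2)) ^ alpha)) :=
        ENNReal.tsum_le_tsum fun kl => step5 kl.1 kl.2
    _ = (2 * 2 * CC) * ∑' kl : ℤ × ℤ, (2:ℝ≥0∞) ^ ((kl.1:ℝ)) * (2:ℝ≥0∞) ^ ((kl.2:ℝ))
          * (min (volume (Ek kl.1)) (volume (Fl kl.2))
            * max (volume (Ek kl.1)) (volume (Fl kl.2)) ^ alpha) := by
        rw [← ENNReal.tsum_mul_left]
        apply tsum_congr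
        intro kl
        rw [hsucc ((kl.1:ℝ)), hsucc ((kl.2:ℝ))]
        ring
    _ ≤ (2 * 2 * CC) * CD := by
        apply mul_le_mul_right
        exact hCD (fun k => volume (Ek k)) (fun l => volume (Fl l)) hXsum hYsum
    _ = 2 * 2 * CC * CD := by ring


set_option maxHeartbeats 1000000 in
lemma core (hN : 1 ≤ N) (lam p q q' : ℝ) (hlam0 : 0 < lam) (hlamN : lam < (N:ℝ))
    (hp : 1 < p) (hpq : p < q) (hq'c : 1/q + 1/q' = 1) (hscal : 1/q = 1/p + lam/(N:ℝ) - 1) :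
    ∃ C : ℝ≥0∞, C ≠ 0 ∧ C ≠ ∞ ∧ ∀ f g : Eu → ℝ≥0∞, Measurable f → Measurable g →
      (∀ z, f z ≠ ∞) → (∀ z, g z ≠ ∞) →
      ∫⁻ y, ∫⁻ x, f y * g x * ENNReal.ofReal (1 / ‖x - y‖ ^ lam)
        ≤ C * (∫⁻ z, f z ^ p) ^ (1/p) * (∫⁻ z, g z ^ q') ^ (1/q') := by
  obtain ⟨K, hKt, hK⟩ := core_norm hN lam p q q' hlam0 hlamN hp hpq hq'c hscal
  have hp0 : (0:ℝ) < p := by linarith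
  have hq1 : 1 < q := hp.trans hpq
  have hq0 : (0:ℝ) < q := by linarith
  have hqinv1 : 1/q < 1 := by rw [div_lt_one hq0]; exact hq1
  have hqinv : (0:ℝ) < 1/q := by positivity
  have hq'pos : (0:ℝ) < q' := by
    by_contra hc
    push_neg at hc
    have : 1/q' ≤ 0 := one_div_nonpos.mpr hc
    linarith
  have hpinv : (0:ℝ) < 1/p := by positivity
  have hq'inv : (0:ℝ) < 1/q' := by positivity
  refine ⟨K + 1, by simp, by simp [hKt], ?_⟩
  intro f g hf hg hffin hgfin
  set ker : Eu → Eu → ℝ≥0∞ := fun y x => ENNReal.ofReal (1 / ‖x - y‖ ^ lam) with hkerdef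
  set A : ℝ≥0∞ := ∫⁻ z, f z ^ p with hAdef
  set B : ℝ≥0∞ := ∫⁻ z, g z ^ q' with hBdef
  rcases eq_or_ne A 0 with hA0 | hA0
  · -- f = 0 a.e.
    have hfp : (fun z => f z ^ p) =ᵐ[volume] 0 := by
      rw [← lintegral_eq_zero_iff (hf.pow_const p)]
      exact hA0
    have hf0 : f =ᵐ[volume] 0 := by
      filter_upwards [hfp] with z hz
      rcases (ENNReal.rpow_eq_zero_iff).mp hz with ⟨h1, _⟩ | ⟨_, h2⟩
      · exact h1
      · linarith
    have hS0 : ∫⁻ y, ∫⁻ x, f y * g x * ker y x = 0 := by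
      calc ∫⁻ y, ∫⁻ x, f y * g x * ker y x = ∫⁻ _ : Eu, (0:ℝ≥0∞) := by
            apply lintegral_congr_ae
            filter_upwards [hf0] with y hy
            have hy0 : f y = 0 := hy
            rw [show (fun x => f y * g x * ker y x) = fun _ => (0:ℝ≥0∞) from
              funext fun x => by rw [hy0]; ring]
            exact lintegral_zero
        _ = 0 := lintegral_zero
    rw [hS0]
    exact zero_le
  rcases eq_or_ne B 0 with hB0 | hB0
  · have hgq : (fun z => g z ^ q') =ᵐ[volume] 0 := by
      rw [← lintegral_eq_zero_iff (hg.pow_const q')]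
      exact hB0
    have hg0 : g =ᵐ[volume] 0 := by
      filter_upwards [hgq] with z hz
      rcases (ENNReal.rpow_eq_zero_iff).mp hz with ⟨h1, _⟩ | ⟨_, h2⟩
      · exact h1
      · linarith
    have hS0 : ∫⁻ y, ∫⁻ x, f y * g x * ker y x = 0 := by
      have hinner : ∀ y, ∫⁻ x, f y * g x * ker y x = 0 := by
        intro y
        have he : (fun x => f y * g x * ker y x) =ᵐ[volume] fun _ => (0:ℝ≥0∞) := by
          filter_upwards [hg0] with x hx
          have hx0 : g x = 0 := hx
          rw [hx0]
          ring
        rw [lintegral_congr_ae he, lintegral_zero]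
      rw [lintegral_congr hinner, lintegral_zero]
    rw [hS0]
    exact zero_le
  rcases eq_or_ne A ∞ with hAt | hAt
  · have h1 : (A : ℝ≥0∞) ^ (1/p) = ∞ := by
      rw [hAt]
      exact ENNReal.top_rpow_of_pos hpinv
    have h2 : B ^ (1/q') ≠ 0 := by
      intro hc
      rcases ENNReal.rpow_eq_zero_iff.mp hc with ⟨h3, _⟩ | ⟨_, h4⟩
      · exact hB0 h3
      · linarith
    rw [h1]
    rw [ENNReal.mul_top (by simp), ENNReal.top_mul h2]
    exact le_top
  rcases eq_or_ne B ∞ with hBt | hBt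
  · have h1 : (B : ℝ≥0∞) ^ (1/q') = ∞ := by
      rw [hBt]
      exact ENNReal.top_rpow_of_pos hq'inv
    have h2 : (K + 1) * A ^ (1/p) ≠ 0 := by
      apply mul_ne_zero (by simp)
      intro hc
      rcases ENNReal.rpow_eq_zero_iff.mp hc with ⟨h3, _⟩ | ⟨_, h4⟩
      · exact hA0 h3
      · linarith
    rw [h1, ENNReal.mul_top h2]
    exact le_top
  -- main case
  set c : ℝ≥0∞ := (A ^ (1/p))⁻¹ with hcdef
  set d : ℝ≥0∞ := (B ^ (1/q'))⁻¹ with hddef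
  have hAp0 : A ^ (1/p) ≠ 0 := by
    intro hc
    rcases ENNReal.rpow_eq_zero_iff.mp hc with ⟨h3, _⟩ | ⟨_, h4⟩
    · exact hA0 h3
    · linarith
  have hApt : A ^ (1/p) ≠ ∞ := ENNReal.rpow_ne_top_of_nonneg hpinv.le hAt
  have hBq0 : B ^ (1/q') ≠ 0 := by
    intro hc
    rcases ENNReal.rpow_eq_zero_iff.mp hc with ⟨h3, _⟩ | ⟨_, h4⟩
    · exact hB0 h3
    · linarith
  have hBqt : B ^ (1/q') ≠ ∞ := ENNReal.rpow_ne_top_of_nonneg hq'inv.le hBt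
  have hc0 : c ≠ 0 := by rw [hcdef]; exact ENNReal.inv_ne_zero.mpr hApt
  have hct : c ≠ ∞ := by rw [hcdef]; exact ENNReal.inv_ne_top.mpr hAp0
  have hd0 : d ≠ 0 := by rw [hddef]; exact ENNReal.inv_ne_zero.mpr hBqt
  have hdt : d ≠ ∞ := by rw [hddef]; exact ENNReal.inv_ne_top.mpr hBq0
  have hfA : ∫⁻ z, (c * f z) ^ p = 1 := by
    have : ∀ z, (c * f z) ^ p = c ^ p * f z ^ p := fun z =>
      ENNReal.mul_rpow_of_nonneg _ _ hp0.le
    rw [lintegral_congr this, lintegral_const_mul' _ _ (ENNReal.rpow_ne_top_of_nonneg hp0.le hct)]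
    rw [hcdef, ← ENNReal.inv_rpow, ← ENNReal.rpow_mul, ← hAdef]
    rw [show (1/p) * p = 1 by field_simp, ENNReal.rpow_one]
    exact ENNReal.inv_mul_cancel hA0 hAt
  have hgB : ∫⁻ z, (d * g z) ^ q' = 1 := by
    have : ∀ z, (d * g z) ^ q' = d ^ q' * g z ^ q' := fun z =>
      ENNReal.mul_rpow_of_nonneg _ _ hq'pos.le
    rw [lintegral_congr this, lintegral_const_mul' _ _ (ENNReal.rpow_ne_top_of_nonneg hq'pos.le hdt)]
    rw [hddef, ← ENNReal.inv_rpow, ← ENNReal.rpow_mul, ← hBdef]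
    rw [show (1/q') * q' = 1 by field_simp, ENNReal.rpow_one]
    exact ENNReal.inv_mul_cancel hB0 hBt
  have hS' : ∫⁻ y, ∫⁻ x, (c * f y) * (d * g x) * ker y x
      = (c * d) * ∫⁻ y, ∫⁻ x, f y * g x * ker y x := by
    calc ∫⁻ y, ∫⁻ x, (c * f y) * (d * g x) * ker y x
        = ∫⁻ y, ∫⁻ x, (c * d) * (f y * g x * ker y x) := by
          apply lintegral_congr
          intro y
          apply lintegral_congr
          intro x
          ring
      _ = ∫⁻ y, (c * d) * ∫⁻ x, f y * g x * ker y x := by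
          apply lintegral_congr
          intro y
          exact lintegral_const_mul' _ _ (ENNReal.mul_ne_top hct hdt)
      _ = (c * d) * ∫⁻ y, ∫⁻ x, f y * g x * ker y x :=
          lintegral_const_mul' _ _ (ENNReal.mul_ne_top hct hdt)
  have happ : ∫⁻ y, ∫⁻ x, (c * f y) * (d * g x) * ker y x ≤ K := by
    apply hK (fun z => c * f z) (fun z => d * g z) (hf.const_mul c) (hg.const_mul d)
      (fun z => ENNReal.mul_ne_top hct (hffin z)) (fun z => ENNReal.mul_ne_top hdt (hgfin z))
      (le_of_eq hfA) (le_of_eq hgB)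
  have hfinal : ∫⁻ y, ∫⁻ x, f y * g x * ker y x ≤ (c * d)⁻¹ * K := by
    have hcd0 : c * d ≠ 0 := mul_ne_zero hc0 hd0
    have hcdt : c * d ≠ ∞ := ENNReal.mul_ne_top hct hdt
    calc ∫⁻ y, ∫⁻ x, f y * g x * ker y x
        = (c * d)⁻¹ * ((c * d) * ∫⁻ y, ∫⁻ x, f y * g x * ker y x) := by
          rw [← mul_assoc, ENNReal.inv_mul_cancel hcd0 hcdt, one_mul]
      _ = (c * d)⁻¹ * ∫⁻ y, ∫⁻ x, (c * f y) * (d * g x) * ker y x := by rw [hS']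
      _ ≤ (c * d)⁻¹ * K := mul_le_mul_right happ _
  calc ∫⁻ y, ∫⁻ x, f y * g x * ker y x ≤ (c * d)⁻¹ * K := hfinal
    _ = A ^ (1/p) * B ^ (1/q') * K := by
        rw [hcdef, hddef, ENNReal.mul_inv (Or.inl (ENNReal.inv_ne_zero.mpr hApt))
          (Or.inl (ENNReal.inv_ne_top.mpr hAp0))]
        rw [inv_inv, inv_inv]
    _ ≤ A ^ (1/p) * B ^ (1/q') * (K + 1) := mul_le_mul_right (le_self_add) _
    _ = (K + 1) * A ^ (1/p) * B ^ (1/q') := by ring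

end Core



end HLS4

set_option maxHeartbeats 1000000 in
/-- Hardy-Littlewood-Sobolev inequality in bilinear form:
`|∫∫ u(y)h(x)/‖x-y‖^λ dx dy| ≤ C ‖u‖_{L^p} ‖h‖_{L^{q'}}`
when `0 < λ < N`, `1 < p < q < ∞`, `1/q = 1/p + λ/N - 1`, `1/q + 1/q' = 1`. -/
theorem hardy_littlewood_sobolev_bilinear
    (N : ℕ) (hN : 1 ≤ N) (lam p q q' : ℝ) (hlam0 : 0 < lam) (hlamN : lam < N)
    (hp : 1 < p) (hpq : p < q) (hq' : 1 / q + 1 / q' = 1)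
    (hscal : 1 / q = 1 / p + lam / N - 1) :
    ∃ C : ℝ, 0 < C ∧ ∀ u h : EuclideanSpace ℝ (Fin N) → ℝ,
      MemLp u (ENNReal.ofReal p) volume →
      MemLp h (ENNReal.ofReal q') volume →
      |∫ y, ∫ x, u y * h x / ‖x - y‖ ^ lam|
        ≤ C * (eLpNorm u (ENNReal.ofReal p) volume).toReal
            * (eLpNorm h (ENNReal.ofReal q') volume).toReal := by
  obtain ⟨C0, hC00, hC0t, hC0⟩ := HLS4.core hN lam p q q' hlam0 hlamN hp hpq hq' hscal
  have hp0r : (0:ℝ) < p := by linarith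
  have hq1 : 1 < q := hp.trans hpq
  have hq0 : (0:ℝ) < q := by linarith
  have hq'pos : (0:ℝ) < q' := by
    by_contra hc
    push_neg at hc
    have h1 : 1/q' ≤ 0 := one_div_nonpos.mpr hc
    have h2 : 1/q < 1 := by rw [div_lt_one hq0]; exact hq1
    have h3 : (0:ℝ) < 1/q := by positivity
    linarith
  refine ⟨C0.toReal + 1, by positivity, ?_⟩
  intro u h hu hh
  set f₀ : EuclideanSpace ℝ (Fin N) → ℝ≥0∞ := fun z => (‖u z‖₊ : ℝ≥0∞) with hf₀def
  set g₀ : EuclideanSpace ℝ (Fin N) → ℝ≥0∞ := fun z => (‖h z‖₊ : ℝ≥0∞) with hg₀def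
  have hf₀m : AEMeasurable f₀ volume := hu.aestronglyMeasurable.enorm
  have hg₀m : AEMeasurable g₀ volume := hh.aestronglyMeasurable.enorm
  set f' : EuclideanSpace ℝ (Fin N) → ℝ≥0∞ := hf₀m.mk f₀ with hf'def
  set g' : EuclideanSpace ℝ (Fin N) → ℝ≥0∞ := hg₀m.mk g₀ with hg'def
  have hf'meas : Measurable f' := hf₀m.measurable_mk
  have hg'meas : Measurable g' := hg₀m.measurable_mk
  have hf'ae : f₀ =ᵐ[volume] f' := hf₀m.ae_eq_mk
  have hg'ae : g₀ =ᵐ[volume] g' := hg₀m.ae_eq_mk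
  set f1 : EuclideanSpace ℝ (Fin N) → ℝ≥0∞ := fun z => if f' z = ∞ then 0 else f' z with hf1def
  set g1 : EuclideanSpace ℝ (Fin N) → ℝ≥0∞ := fun z => if g' z = ∞ then 0 else g' z with hg1def
  have hf1m : Measurable f1 :=
    Measurable.ite (hf'meas (measurableSet_singleton ∞)) measurable_const hf'meas
  have hg1m : Measurable g1 :=
    Measurable.ite (hg'meas (measurableSet_singleton ∞)) measurable_const hg'meas
  have hf1fin : ∀ z, f1 z ≠ ∞ := by
    intro z
    simp only [hf1def]
    split
    · simp
    · assumption
  have hg1fin : ∀ z, g1 z ≠ ∞ := by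
    intro z
    simp only [hg1def]
    split
    · simp
    · assumption
  have hf1ae : f₀ =ᵐ[volume] f1 := by
    filter_upwards [hf'ae] with z hz
    have hne : f' z ≠ ∞ := by rw [← hz]; exact ENNReal.coe_ne_top
    simp only [hf1def]
    rw [if_neg hne, ← hz]
  have hg1ae : g₀ =ᵐ[volume] g1 := by
    filter_upwards [hg'ae] with z hz
    have hne : g' z ≠ ∞ := by rw [← hz]; exact ENNReal.coe_ne_top
    simp only [hg1def]
    rw [if_neg hne, ← hz]
  -- eLpNorm identities
  have hfLp : (∫⁻ z, f1 z ^ p) ^ (1/p) = eLpNorm u (ENNReal.ofReal p) volume := by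
    rw [eLpNorm_eq_lintegral_rpow_enorm_toReal (by simp [ENNReal.ofReal_eq_zero]; linarith)
      ENNReal.ofReal_ne_top, ENNReal.toReal_ofReal hp0r.le]
    congr 1
    apply lintegral_congr_ae
    filter_upwards [hf1ae] with z hz
    rw [← hz]; rfl
  have hgLp : (∫⁻ z, g1 z ^ q') ^ (1/q') = eLpNorm h (ENNReal.ofReal q') volume := by
    rw [eLpNorm_eq_lintegral_rpow_enorm_toReal (by simp [ENNReal.ofReal_eq_zero]; linarith)
      ENNReal.ofReal_ne_top, ENNReal.toReal_ofReal hq'pos.le]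
    congr 1
    apply lintegral_congr_ae
    filter_upwards [hg1ae] with z hz
    rw [← hz]; rfl
  -- pointwise kernel identity
  have hker_eq : ∀ y x : EuclideanSpace ℝ (Fin N),
      ENNReal.ofReal ‖u y * h x / ‖x - y‖ ^ lam‖
      = f₀ y * g₀ x * ENNReal.ofReal (1 / ‖x - y‖ ^ lam) := by
    intro y x
    have hr : (0:ℝ) ≤ ‖x - y‖ ^ lam := Real.rpow_nonneg (norm_nonneg _) lam
    rw [Real.norm_eq_abs, abs_div, abs_mul, abs_of_nonneg hr,
      div_eq_mul_one_div (|u y| * |h x|) _,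
      ENNReal.ofReal_mul (by positivity), ENNReal.ofReal_mul (abs_nonneg _)]
    congr 1
    congr 1
    · rw [← Real.norm_eq_abs, ofReal_norm]; rfl
    · rw [← Real.norm_eq_abs, ofReal_norm]; rfl
  -- main estimate in ℝ≥0∞
  have key : ∫⁻ y, ENNReal.ofReal ‖∫ x, u y * h x / ‖x - y‖ ^ lam‖
      ≤ C0 * eLpNorm u (ENNReal.ofReal p) volume * eLpNorm h (ENNReal.ofReal q') volume := by
    calc ∫⁻ y, ENNReal.ofReal ‖∫ x, u y * h x / ‖x - y‖ ^ lam‖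
        ≤ ∫⁻ y, ∫⁻ x, ENNReal.ofReal ‖u y * h x / ‖x - y‖ ^ lam‖ := by
          apply lintegral_mono
          intro y
          calc ENNReal.ofReal ‖∫ x, u y * h x / ‖x - y‖ ^ lam‖
              ≤ ENNReal.ofReal ((∫⁻ x, ENNReal.ofReal ‖u y * h x / ‖x - y‖ ^ lam‖).toReal) :=
                ENNReal.ofReal_le_ofReal (norm_integral_le_lintegral_norm _)
            _ ≤ ∫⁻ x, ENNReal.ofReal ‖u y * h x / ‖x - y‖ ^ lam‖ := ENNReal.ofReal_toReal_le
      _ = ∫⁻ y, ∫⁻ x, f₀ y * g₀ x * ENNReal.ofReal (1 / ‖x - y‖ ^ lam) := by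
          apply lintegral_congr
          intro y
          apply lintegral_congr
          intro x
          exact hker_eq y x
      _ = ∫⁻ y, ∫⁻ x, f1 y * g1 x * ENNReal.ofReal (1 / ‖x - y‖ ^ lam) := by
          apply lintegral_congr_ae
          filter_upwards [hf1ae] with y hy
          rw [show f₀ y = f1 y from hy]
          apply lintegral_congr_ae
          filter_upwards [hg1ae] with x hx
          rw [show g₀ x = g1 x from hx]
      _ ≤ C0 * (∫⁻ z, f1 z ^ p) ^ (1/p) * (∫⁻ z, g1 z ^ q') ^ (1/q') :=
          hC0 f1 g1 hf1m hg1m hf1fin hg1fin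
      _ = C0 * eLpNorm u (ENNReal.ofReal p) volume * eLpNorm h (ENNReal.ofReal q') volume := by
          rw [hfLp, hgLp]
  have hfin : C0 * eLpNorm u (ENNReal.ofReal p) volume * eLpNorm h (ENNReal.ofReal q') volume ≠ ∞ :=
    ENNReal.mul_ne_top (ENNReal.mul_ne_top hC0t hu.eLpNorm_ne_top) hh.eLpNorm_ne_top
  calc |∫ y, ∫ x, u y * h x / ‖x - y‖ ^ lam|
      = ‖∫ y, ∫ x, u y * h x / ‖x - y‖ ^ lam‖ := (Real.norm_eq_abs _).symm
    _ ≤ (∫⁻ y, ENNReal.ofReal ‖∫ x, u y * h x / ‖x - y‖ ^ lam‖).toReal :=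
        norm_integral_le_lintegral_norm _
    _ ≤ (C0 * eLpNorm u (ENNReal.ofReal p) volume * eLpNorm h (ENNReal.ofReal q') volume).toReal :=
        ENNReal.toReal_mono hfin key
    _ = C0.toReal * (eLpNorm u (ENNReal.ofReal p) volume).toReal
        * (eLpNorm h (ENNReal.ofReal q') volume).toReal := by
        rw [ENNReal.toReal_mul, ENNReal.toReal_mul]
    _ ≤ (C0.toReal + 1) * (eLpNorm u (ENNReal.ofReal p) volume).toReal
        * (eLpNorm h (ENNReal.ofReal q') volume).toReal := by
        have h1 : C0.toReal ≤ C0.toReal + 1 := by linarith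
        exact mul_le_mul_of_nonneg_right
          (mul_le_mul_of_nonneg_right h1 ENNReal.toReal_nonneg) ENNReal.toReal_nonneg


end
end

section
/- Let N ≥ 1, 1<p≤q<∞, let p' satisfy 1/p + 1/p' = 1, and let W and U be positive measurable functions on ℝ^N. Set A₁ := sup_{R>0} (∫_{‖x‖>R} W(x) dx)^{1/q} (∫_{‖x‖<R} U(x)^{1−p'} dx)^{1/p'}. If A₁ < ∞, then for every measurable f ≥ 0 on ℝ^N: (∫_{ℝ^N} (∫_{‖y‖<‖x‖} f(y) dy)^q W(x) dx)^{1/q} ≤ (p')^{1/p'} p^{1/q} A₁ (∫_{ℝ^N} f(x)^p U(x) dx)^{1/p}. -/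
open MeasureTheory Real Set
open scoped ENNReal

namespace HardyAux

lemma monoIio (ν : Measure ℝ) : Monotone (fun t => ν (Iio t)) :=
  fun _ _ hab => measure_mono (Iio_subset_Iio hab)

lemma measIio (ν : Measure ℝ) : Measurable (fun t => ν (Iio t)) :=
  (monoIio ν).measurable

lemma antiIoi (ν : Measure ℝ) : Antitone (fun t => ν (Ioi t)) :=
  fun _ _ hab => measure_mono (Ioi_subset_Ioi hab)

lemma measIoi (ν : Measure ℝ) : Measurable (fun t => ν (Ioi t)) :=
  (antiIoi ν).measurable

/-- C1 : the measure of the sublevel set of the "CDF" is at most the level. -/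
lemma meas_cdf_le (ν : Measure ℝ) (hν : ∀ a : ℝ, ν {a} = 0) (c : ℝ≥0∞) :
    ν {t | ν (Iio t) ≤ c} ≤ c := by
  set D := {t | ν (Iio t) ≤ c} with hD
  rcases D.eq_empty_or_nonempty with he | hne
  · simp [he]
  have hunion : ∀ τ : ℝ, (∀ n : ℕ, ν (Iio (τ - 1/(n+1))) ≤ c) → ν (Iio τ) ≤ c := by
    intro τ hn
    have hU : Iio τ = ⋃ n : ℕ, Iio (τ - 1/(n+1)) := by
      ext t
      simp only [mem_iUnion, mem_Iio]
      constructor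
      · intro ht
        obtain ⟨n, hn'⟩ := exists_nat_gt (1/(τ - t))
        refine ⟨n, ?_⟩
        have h1 : (0:ℝ) < τ - t := by linarith
        have h2 : 1/(τ - t) ≤ n := hn'.le
        have h3 : (0:ℝ) < (n:ℝ)+1 := by positivity
        rw [lt_sub_iff_add_lt, ← lt_sub_iff_add_lt']
        rw [div_lt_iff₀ h3]
        have : 1/(τ-t) < (n:ℝ)+1 := by linarith
        nlinarith [mul_lt_mul_of_pos_right this h1, one_div_mul_cancel h1.ne']
      · rintro ⟨n, hn'⟩
        have : (0:ℝ) < 1/((n:ℝ)+1) := by positivity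
        linarith
    rw [hU, Directed.measure_iUnion]
    · exact iSup_le hn
    · apply Monotone.directed_le
      intro a b hab
      apply Iio_subset_Iio
      have ha : (0:ℝ) < (a:ℝ)+1 := by positivity
      have hb : (0:ℝ) < (b:ℝ)+1 := by positivity
      have : 1/((b:ℝ)+1) ≤ 1/((a:ℝ)+1) := by
        apply one_div_le_one_div_of_le ha
        have := (Nat.cast_le (α := ℝ)).2 hab; linarith
      linarith
  by_cases hbd : BddAbove D
  · set τ := sSup D with hτ
    have hsub : D ⊆ Iic τ := fun t ht => le_csSup hbd ht
    have hIio : ν (Iio τ) ≤ c := by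
      apply hunion
      intro n
      have h1 : τ - 1/((n:ℝ)+1) < τ := by
        have : (0:ℝ) < 1/((n:ℝ)+1) := by positivity
        linarith
      obtain ⟨z, hz, hz2⟩ := exists_lt_of_lt_csSup hne h1
      exact le_trans (measure_mono (Iio_subset_Iio hz2.le)) hz
    calc ν D ≤ ν (Iic τ) := measure_mono hsub
      _ ≤ ν (Iio τ) + ν {τ} := by
          rw [← Iio_union_right]; exact measure_union_le _ _
      _ ≤ c + 0 := add_le_add hIio (le_of_eq (hν τ))
      _ = c := add_zero c
  · have hall : ∀ t, ν (Iio t) ≤ c := by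
      intro t
      obtain ⟨z, hz, hzt⟩ := not_bddAbove_iff.1 hbd t
      exact le_trans (measure_mono (Iio_subset_Iio hzt.le)) hz
    have huniv : ν univ ≤ c := by
      have h2 : ν (Iio 1) ≤ c := hall 1
      have : ν univ = ⨆ n : ℕ, ν (Iio n) := by
        rw [← Directed.measure_iUnion]
        · congr 1
          ext t; simp only [mem_iUnion, mem_Iio, mem_univ, true_iff]
          exact exists_nat_gt t
        · exact Monotone.directed_le fun a b hab => Iio_subset_Iio (by exact_mod_cast hab)
      rw [this]
      exact iSup_le fun n => hall n
    exact le_trans (measure_mono (subset_univ D)) huniv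

/-- C3 : lower bound for superlevel sets inside `Iio r`. -/
lemma meas_cdf_gt_ge (ν : Measure ℝ) (hν : ∀ a : ℝ, ν {a} = 0) (r : ℝ) (c : ℝ≥0∞) :
    ν (Iio r) - c ≤ ν (Iio r ∩ {t | c < ν (Iio t)}) := by
  have hsub : Iio r ⊆ (Iio r ∩ {t | c < ν (Iio t)}) ∪ {t | ν (Iio t) ≤ c} := by
    intro t ht
    by_cases h : c < ν (Iio t)
    · exact Or.inl ⟨ht, h⟩
    · exact Or.inr (not_lt.1 h)
  have h1 : ν (Iio r) ≤ ν ((Iio r ∩ {t | c < ν (Iio t)}) ∪ {t | ν (Iio t) ≤ c}) :=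
    measure_mono hsub
  have h2 : ν (Iio r) ≤ ν (Iio r ∩ {t | c < ν (Iio t)}) + c :=
    h1.trans ((measure_union_le _ _).trans (add_le_add_right (meas_cdf_le ν hν c) _))
  exact tsub_le_iff_right.2 h2

/-- C2 : upper bound for superlevel sets (global). -/
lemma meas_cdf_gt_le (ν : Measure ℝ) (hν : ∀ a : ℝ, ν {a} = 0) (c : ℝ≥0∞) :
    ν {t | c < ν (Iio t)} ≤ ν univ - c := by
  rcases eq_or_ne c ⊤ with hctop | hctop
  · have he : {t | c < ν (Iio t)} = ∅ := by
      ext t; simp [hctop]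
    simp [he]
  by_cases htop : ν univ = ⊤
  · rw [htop, ENNReal.top_sub hctop]
    exact le_top

  haveI : IsFiniteMeasure ν := ⟨lt_top_iff_ne_top.2 htop⟩
  set S := {t | c < ν (Iio t)} with hS
  rcases S.eq_empty_or_nonempty with he | hne
  · simp [he]
  have hIic : ∀ τ : ℝ, (∀ n : ℕ, c ≤ ν (Iio (τ + 1/(n+1)))) → c ≤ ν (Iic τ) := by
    intro τ hn
    have hI : Iic τ = ⋂ n : ℕ, Iio (τ + 1/(n+1)) := by
      ext t
      simp only [mem_iInter, mem_Iio, mem_Iic]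
      constructor
      · intro ht n
        have : (0:ℝ) < 1/((n:ℝ)+1) := by positivity
        linarith
      · intro h
        by_contra hlt
        push_neg at hlt
        obtain ⟨n, hn'⟩ := exists_nat_gt (1/(t - τ))
        have h1 : (0:ℝ) < t - τ := by linarith
        have h3 : (0:ℝ) < (n:ℝ)+1 := by positivity
        have h4 : 1/((n:ℝ)+1) < t - τ := by
          rw [div_lt_iff₀ h3]
          have h5 : 1/(t-τ) < (n:ℝ)+1 := by linarith
          nlinarith [mul_lt_mul_of_pos_right h5 h1, one_div_mul_cancel h1.ne']
        have := h n
        linarith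
    rw [hI, Directed.measure_iInter]
    · exact le_iInf hn
    · exact fun n => (measurableSet_Iio).nullMeasurableSet (μ := ν)
    · apply Antitone.directed_ge
      intro a b hab
      apply Iio_subset_Iio
      have ha : (0:ℝ) < (a:ℝ)+1 := by positivity
      have : 1/((b:ℝ)+1) ≤ 1/((a:ℝ)+1) := by
        apply one_div_le_one_div_of_le ha
        have := (Nat.cast_le (α := ℝ)).2 hab; linarith
      linarith
    · exact ⟨0, measure_ne_top ν _⟩
  by_cases hbd : BddBelow S
  · set τ := sInf S with hτ
    have hsub : S ⊆ {τ} ∪ Ioi τ := by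
      intro t ht
      rcases eq_or_lt_of_le (csInf_le hbd ht) with h | h
      · exact Or.inl (by simp [h.symm, hτ])
      · exact Or.inr h
    have hc : c ≤ ν (Iic τ) := by
      apply hIic
      intro n
      have h1 : τ < τ + 1/((n:ℝ)+1) := by
        have : (0:ℝ) < 1/((n:ℝ)+1) := by positivity
        linarith
      obtain ⟨z, hz, hz2⟩ := exists_lt_of_csInf_lt hne h1
      exact le_trans (le_of_lt hz) (measure_mono (Iio_subset_Iio hz2.le))
    calc ν S ≤ ν ({τ} ∪ Ioi τ) := measure_mono hsub
      _ ≤ ν {τ} + ν (Ioi τ) := measure_union_le _ _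
      _ = ν (Ioi τ) := by rw [hν τ, zero_add]
      _ = ν univ - ν (Iic τ) := by
          rw [← compl_Iic]
          exact measure_compl measurableSet_Iic (measure_ne_top ν _)
      _ ≤ ν univ - c := tsub_le_tsub_left hc _
  · -- S unbounded below: c must be 0
    have hall : ∀ t, c < ν (Iio t) := by
      intro t
      obtain ⟨z, hz, hzt⟩ := not_bddBelow_iff.1 hbd t
      exact lt_of_lt_of_le hz (measure_mono (Iio_subset_Iio hzt.le))
    have hc0 : c = 0 := by
      have hI : (⋂ n : ℕ, Iio (-(n:ℝ))) = ∅ := by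
        ext t
        simp only [mem_iInter, mem_Iio, mem_empty_iff_false, iff_false, not_forall, not_lt]
        obtain ⟨n, hn⟩ := exists_nat_gt (-t)
        exact ⟨n, by linarith⟩
      have h2 : ν (⋂ n : ℕ, Iio (-(n:ℝ))) = ⨅ n : ℕ, ν (Iio (-(n:ℝ))) := by
        apply Directed.measure_iInter
        · exact fun n => measurableSet_Iio.nullMeasurableSet (μ := ν)
        · apply Antitone.directed_ge
          intro a b hab
          apply Iio_subset_Iio
          simp only [neg_le_neg_iff]
          exact_mod_cast hab
        · exact ⟨0, measure_ne_top ν _⟩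
      have h3 : (⨅ n : ℕ, ν (Iio (-(n:ℝ)))) = 0 := by
        rw [← h2, hI, measure_empty]
      have h4 : c ≤ 0 := h3 ▸ le_iInf fun n => (hall _).le
      exact le_antisymm h4 zero_le
    rw [hc0, tsub_zero]
    exact measure_mono (subset_univ S)



lemma rep_neg {c : ℝ} (hc0 : 0 < c) (hc1 : c < 1) (x : ℝ≥0∞) (hx : x ≠ 0) :
    x ^ (c - 1) = ∫⁻ σ in Ioi (0:ℝ),
      (if x < ENNReal.ofReal σ then ENNReal.ofReal ((1-c) * σ^(c-2)) else 0) := by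
  rcases eq_or_ne x ⊤ with htop | htop
  · subst htop
    rw [ENNReal.top_rpow_of_neg (by linarith)]
    have hz : ∀ σ : ℝ, (if (⊤:ℝ≥0∞) < ENNReal.ofReal σ then ENNReal.ofReal ((1-c) * σ^(c-2)) else 0) = 0 :=
      fun σ => if_neg not_top_lt
    simp only [hz, lintegral_zero]
  · set b := x.toReal with hb
    have hbpos : 0 < b := ENNReal.toReal_pos hx htop
    have hxb : x = ENNReal.ofReal b := (ENNReal.ofReal_toReal htop).symm
    have hcond : ∀ σ : ℝ, (x < ENNReal.ofReal σ) ↔ (b < σ) := fun σ =>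
      ENNReal.lt_ofReal_iff_toReal_lt htop
    have hind : ∀ σ : ℝ, (if x < ENNReal.ofReal σ then ENNReal.ofReal ((1-c) * σ^(c-2)) else 0)
        = (Ioi b).indicator (fun σ => ENNReal.ofReal ((1-c) * σ^(c-2))) σ := by
      intro σ
      rw [indicator_apply]
      simp only [mem_Ioi, hcond]
    calc x ^ (c-1) = ENNReal.ofReal (b ^ (c-1)) := by
          rw [hxb, ENNReal.ofReal_rpow_of_pos hbpos]
      _ = ENNReal.ofReal (∫ σ in Ioi b, (1-c) * σ^(c-2)) := by
          rw [MeasureTheory.integral_const_mul, integral_Ioi_rpow_of_lt (by linarith) hbpos]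
          congr 1
          have h21 : c - 2 + 1 = c - 1 := by ring
          have hc1' : c - 1 ≠ 0 := by intro hh; linarith
          rw [h21]
          field_simp
          ring
      _ = ∫⁻ σ in Ioi b, ENNReal.ofReal ((1-c) * σ^(c-2)) := by
          rw [← MeasureTheory.ofReal_integral_eq_lintegral_ofReal]
          · exact ((integrableOn_Ioi_rpow_of_lt (by linarith) hbpos).const_mul (1-c))
          · filter_upwards [self_mem_ae_restrict (measurableSet_Ioi : MeasurableSet (Ioi b))]
              with σ hσ
            have : (0:ℝ) < σ := hbpos.trans hσ
            have h1c : (0:ℝ) < 1 - c := by linarith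
            positivity
      _ = ∫⁻ σ in Ioi (0:ℝ), (Ioi b).indicator (fun σ => ENNReal.ofReal ((1-c) * σ^(c-2))) σ := by
          rw [lintegral_indicator measurableSet_Ioi, Measure.restrict_restrict measurableSet_Ioi]
          congr 1
          rw [Ioi_inter_Ioi, max_eq_left hbpos.le]
      _ = ∫⁻ σ in Ioi (0:ℝ),
            (if x < ENNReal.ofReal σ then ENNReal.ofReal ((1-c) * σ^(c-2)) else 0) := by
          apply lintegral_congr
          intro σ
          rw [hind σ]

lemma rep_pos {e : ℝ} (he : 0 < e) (x : ℝ≥0∞) (hx : x ≠ ⊤) :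
    x ^ e = ∫⁻ σ in Ioi (0:ℝ),
      (if ENNReal.ofReal σ < x then ENNReal.ofReal (e * σ^(e-1)) else 0) := by
  set b := x.toReal with hb
  have hbnn : 0 ≤ b := ENNReal.toReal_nonneg
  have hxb : x = ENNReal.ofReal b := (ENNReal.ofReal_toReal hx).symm
  have key : ∫⁻ σ in Ioi (0:ℝ),
      (if ENNReal.ofReal σ < x then ENNReal.ofReal (e * σ^(e-1)) else 0)
      = ∫⁻ σ in Ioo (0:ℝ) b, ENNReal.ofReal (e * σ^(e-1)) := by
    rw [← lintegral_indicator (measurableSet_Ioo) (fun σ => ENNReal.ofReal (e * σ^(e-1)))]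
    rw [← lintegral_indicator (measurableSet_Ioi)]
    apply lintegral_congr
    intro σ
    rcases le_or_gt σ 0 with hσ | hσ
    · rw [indicator_of_notMem (by simp [hσ, not_lt] : σ ∉ Ioi (0:ℝ)),
        indicator_of_notMem (by simp [not_lt.2 hσ] : σ ∉ Ioo (0:ℝ) b)]
    · rw [indicator_of_mem (mem_Ioi.2 hσ)]
      have : (ENNReal.ofReal σ < x) ↔ σ < b :=
        ENNReal.ofReal_lt_iff_lt_toReal hσ.le hx
      by_cases h : σ < b
      · rw [if_pos (this.2 h), indicator_of_mem (mem_Ioo.2 ⟨hσ, h⟩)]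
      · rw [if_neg (fun hh => h (this.1 hh)), indicator_of_notMem (by simp [h, mem_Ioo, hσ])]
  rw [key]
  rcases eq_or_lt_of_le hbnn with hb0 | hbpos
  · rw [← hb0]
    simp only [Ioo_self, Measure.restrict_empty, lintegral_zero_measure]
    rw [hxb, ← hb0]
    simp [ENNReal.zero_rpow_of_pos he]
  · symm
    calc ∫⁻ σ in Ioo (0:ℝ) b, ENNReal.ofReal (e * σ^(e-1))
        = ENNReal.ofReal (∫ σ in Ioo (0:ℝ) b, e * σ^(e-1)) := by
          rw [← MeasureTheory.ofReal_integral_eq_lintegral_ofReal]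
          · apply IntegrableOn.mono_set _ Ioo_subset_Ioc_self
            rw [← intervalIntegrable_iff_integrableOn_Ioc_of_le hbpos.le]
            exact (intervalIntegral.intervalIntegrable_rpow' (by linarith)).const_mul e
          · filter_upwards [self_mem_ae_restrict (measurableSet_Ioo :
              MeasurableSet (Ioo (0:ℝ) b))] with σ hσ
            have : (0:ℝ) < σ := hσ.1
            positivity
    _ = ENNReal.ofReal (b ^ e) := by
          congr 1
          rw [← integral_Ioc_eq_integral_Ioo, ← intervalIntegral.integral_of_le hbpos.le]
          rw [intervalIntegral.integral_const_mul, integral_rpow (Or.inl (by linarith))]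
          have : e - 1 + 1 = e := by ring
          rw [this, Real.zero_rpow (ne_of_gt he)]
          field_simp
          ring
    _ = x ^ e := by rw [hxb, ENNReal.ofReal_rpow_of_nonneg hbnn he.le]

lemma calcP {s : ℝ} (hs : 1 < s) {x : ℝ≥0∞} (hx : x ≠ ⊤) :
    ∫⁻ σ in Ioi (0:ℝ), ENNReal.ofReal ((s-1) * σ^(s-2)) * (x - ENNReal.ofReal σ)
      = ENNReal.ofReal (1/s) * x ^ s := by
  set b := x.toReal with hb
  have hbnn : 0 ≤ b := ENNReal.toReal_nonneg
  have hxb : x = ENNReal.ofReal b := (ENNReal.ofReal_toReal hx).symm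
  have hsub : ∀ σ : ℝ, 0 < σ → x - ENNReal.ofReal σ = ENNReal.ofReal (b - σ) := by
    intro σ hσ
    rw [hxb, ← ENNReal.ofReal_sub _ hσ.le]
  rcases eq_or_lt_of_le hbnn with hb0 | hbpos
  · have hx0 : x = 0 := by rw [hxb, ← hb0]; simp
    rw [hx0]
    rw [ENNReal.zero_rpow_of_pos (by linarith), mul_zero]
    simp only [zero_tsub, mul_zero, lintegral_zero]
  · calc ∫⁻ σ in Ioi (0:ℝ), ENNReal.ofReal ((s-1) * σ^(s-2)) * (x - ENNReal.ofReal σ)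
        = ∫⁻ σ in Ioi (0:ℝ), ENNReal.ofReal ((s-1) * σ^(s-2) * (b - σ)) := by
          apply lintegral_congr_ae
          filter_upwards [self_mem_ae_restrict (measurableSet_Ioi :
            MeasurableSet (Ioi (0:ℝ)))] with σ hσ
          rw [hsub σ hσ, ← ENNReal.ofReal_mul
            (mul_nonneg (by linarith) (Real.rpow_nonneg (le_of_lt hσ) _))]
    _ = ∫⁻ σ in Ioc (0:ℝ) b, ENNReal.ofReal ((s-1) * σ^(s-2) * (b - σ)) := by
          rw [← lintegral_indicator measurableSet_Ioc, ← lintegral_indicator measurableSet_Ioi]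
          apply lintegral_congr
          intro σ
          rcases le_or_gt σ 0 with hσ | hσ
          · rw [indicator_of_notMem (by simp [not_lt.2 hσ] : σ ∉ Ioi (0:ℝ)),
              indicator_of_notMem (by simp [mem_Ioc, not_lt.2 hσ, hσ])]
          · rcases le_or_gt σ b with hσb | hσb
            · rw [indicator_of_mem (mem_Ioi.2 hσ), indicator_of_mem (mem_Ioc.2 ⟨hσ, hσb⟩)]
            · rw [indicator_of_mem (mem_Ioi.2 hσ),
                indicator_of_notMem (by simp [mem_Ioc, not_le.2 hσb])]
              rw [ENNReal.ofReal_eq_zero.2 (mul_nonpos_of_nonneg_of_nonpos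
                (mul_nonneg (by linarith) (Real.rpow_nonneg hσ.le (s-2))) (by linarith))]
    _ = ENNReal.ofReal (∫ σ in Ioc (0:ℝ) b, (s-1) * σ^(s-2) * (b - σ)) := by
          rw [← MeasureTheory.ofReal_integral_eq_lintegral_ofReal]
          · have h1 : IntegrableOn (fun σ : ℝ => (s-1) * b * σ^(s-2)) (Ioc 0 b) := by
              rw [← intervalIntegrable_iff_integrableOn_Ioc_of_le hbpos.le]
              exact (intervalIntegral.intervalIntegrable_rpow' (by linarith)).const_mul _
            have h2 : IntegrableOn (fun σ : ℝ => (s-1) * σ^(s-1)) (Ioc 0 b) := by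
              rw [← intervalIntegrable_iff_integrableOn_Ioc_of_le hbpos.le]
              exact (intervalIntegral.intervalIntegrable_rpow' (by linarith)).const_mul _
            apply Integrable.congr (h1.sub h2)
            filter_upwards [self_mem_ae_restrict (measurableSet_Ioc :
              MeasurableSet (Ioc (0:ℝ) b))] with σ hσ
            have hσ0 : (0:ℝ) < σ := hσ.1
            have hpow : σ ^ (s-1) = σ ^ (s-2) * σ := by
              rw [← Real.rpow_add_one hσ0.ne' (s-2)]
              ring_nf
            simp only [Pi.sub_apply]
            rw [hpow]; ring
          · filter_upwards [self_mem_ae_restrict (measurableSet_Ioc :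
              MeasurableSet (Ioc (0:ℝ) b))] with σ hσ
            have h1 : (0:ℝ) < σ := hσ.1
            have h2 : σ ≤ b := hσ.2
            have h3 : (0:ℝ) ≤ σ ^ (s-2) := Real.rpow_nonneg h1.le _
            simp only [Pi.zero_apply]
            exact mul_nonneg (mul_nonneg (by linarith) h3) (by linarith)
    _ = ENNReal.ofReal (1/s * b ^ s) := by
          congr 1
          rw [← intervalIntegral.integral_of_le hbpos.le]
          have hinteg : ∀ r : ℝ, -1 < r → ∫ σ in (0:ℝ)..b, σ ^ r = b^(r+1)/(r+1) := by
            intro r hr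
            rw [integral_rpow (Or.inl hr), Real.zero_rpow (by linarith), sub_zero]
          have heq : ∀ σ ∈ uIcc (0:ℝ) b, (s-1) * σ^(s-2) * (b - σ)
              = (s-1) * b * σ^(s-2) - (s-1) * σ^(s-1) := by
            intro σ hσ
            rw [uIcc_of_le hbpos.le] at hσ
            rcases eq_or_lt_of_le hσ.1 with h0 | h0
            · rw [← h0]
              rw [Real.zero_rpow (by intro hh; linarith : s - 1 ≠ 0)]
              ring
            · have : σ ^ (s-1) = σ ^ (s-2) * σ := by
                rw [← Real.rpow_add_one h0.ne' (s-2)]; ring_nf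
              rw [this]; ring
          rw [intervalIntegral.integral_congr heq]
          rw [intervalIntegral.integral_sub
            (((intervalIntegral.intervalIntegrable_rpow' (by linarith)).const_mul _))
            (((intervalIntegral.intervalIntegrable_rpow' (by linarith)).const_mul _))]
          rw [intervalIntegral.integral_const_mul, intervalIntegral.integral_const_mul]
          rw [hinteg (s-2) (by linarith), hinteg (s-1) (by linarith)]
          have e1 : s - 2 + 1 = s - 1 := by ring
          have e2 : s - 1 + 1 = s := by ring
          rw [e1, e2]
          have hbs : b ^ s = b^(s-1) * b := by
            rw [← Real.rpow_add_one hbpos.ne' (s-1)]; ring_nf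
          rw [hbs]
          have hs1 : s - 1 ≠ 0 := by linarith
          have hs0 : s ≠ 0 := by linarith
          field_simp
          ring
    _ = ENNReal.ofReal (1/s) * x ^ s := by
          rw [ENNReal.ofReal_mul (by positivity), hxb,
            ENNReal.ofReal_rpow_of_nonneg hbnn (by linarith : (0:ℝ) ≤ s)]




lemma swapA (ν : Measure ℝ) [SFinite ν] {T : Set ℝ} (hT : MeasurableSet T)
    {F : ℝ → ℝ≥0∞} (hF : Measurable F) {w : ℝ → ℝ≥0∞} (hw : Measurable w) :
    ∫⁻ t in T, (∫⁻ σ in Ioi (0:ℝ), (if F t < ENNReal.ofReal σ then w σ else 0)) ∂ν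
      = ∫⁻ σ in Ioi (0:ℝ), w σ * ν (T ∩ {t | F t < ENNReal.ofReal σ}) := by
  have hmeas : AEMeasurable (Function.uncurry fun (t σ : ℝ) =>
      (if F t < ENNReal.ofReal σ then w σ else 0))
      ((ν.restrict T).prod (volume.restrict (Ioi (0:ℝ)))) := by
    apply Measurable.aemeasurable
    apply Measurable.ite _ (hw.comp measurable_snd) measurable_const
    exact measurableSet_lt (hF.comp measurable_fst)
      (ENNReal.measurable_ofReal.comp measurable_snd)
  rw [lintegral_lintegral_swap hmeas]
  apply lintegral_congr
  intro σ
  have heq : ∀ t : ℝ, (if F t < ENNReal.ofReal σ then w σ else 0)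
      = ({t | F t < ENNReal.ofReal σ}).indicator (fun _ => w σ) t := by
    intro t
    rw [indicator_apply]
    rfl
  simp only [heq]
  rw [lintegral_indicator (measurableSet_lt hF measurable_const)]
  rw [setLIntegral_const,
    Measure.restrict_apply (measurableSet_lt hF measurable_const), inter_comm]

lemma swapB (ν : Measure ℝ) [SFinite ν] {T : Set ℝ} (hT : MeasurableSet T)
    {F : ℝ → ℝ≥0∞} (hF : Measurable F) {w : ℝ → ℝ≥0∞} (hw : Measurable w) :
    ∫⁻ t in T, (∫⁻ σ in Ioi (0:ℝ), (if ENNReal.ofReal σ < F t then w σ else 0)) ∂ν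
      = ∫⁻ σ in Ioi (0:ℝ), w σ * ν (T ∩ {t | ENNReal.ofReal σ < F t}) := by
  have hmeas : AEMeasurable (Function.uncurry fun (t σ : ℝ) =>
      (if ENNReal.ofReal σ < F t then w σ else 0))
      ((ν.restrict T).prod (volume.restrict (Ioi (0:ℝ)))) := by
    apply Measurable.aemeasurable
    apply Measurable.ite _ (hw.comp measurable_snd) measurable_const
    exact measurableSet_lt (ENNReal.measurable_ofReal.comp measurable_snd)
      (hF.comp measurable_fst)
  rw [lintegral_lintegral_swap hmeas]
  apply lintegral_congr
  intro σ
  have heq : ∀ t : ℝ, (if ENNReal.ofReal σ < F t then w σ else 0)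
      = ({t | ENNReal.ofReal σ < F t}).indicator (fun _ => w σ) t := by
    intro t
    rw [indicator_apply]
    rfl
  simp only [heq]
  rw [lintegral_indicator (measurableSet_lt measurable_const hF)]
  rw [setLIntegral_const,
    Measure.restrict_apply (measurableSet_lt measurable_const hF), inter_comm]

/-- CALC1 : explicit computation used by `layer_neg`. -/
lemma calcN {c : ℝ} (hc0 : 0 < c) (hc1 : c < 1) {x : ℝ≥0∞} (hx : x ≠ ⊤) :
    ∫⁻ σ in Ioi (0:ℝ), ENNReal.ofReal ((1-c) * σ^(c-2)) * min (ENNReal.ofReal σ) x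
      ≤ ENNReal.ofReal (1/c) * x ^ c := by
  set b := x.toReal with hb
  have hbnn : 0 ≤ b := ENNReal.toReal_nonneg
  have hxb : x = ENNReal.ofReal b := (ENNReal.ofReal_toReal hx).symm
  rcases eq_or_lt_of_le hbnn with hb0 | hbpos
  · have hx0 : x = 0 := by rw [hxb, ← hb0]; simp
    rw [hx0]
    have hz : ∀ σ : ℝ, ENNReal.ofReal ((1-c) * σ^(c-2)) * min (ENNReal.ofReal σ) (0:ℝ≥0∞) = 0 := by
      intro σ
      rw [min_eq_right zero_le, mul_zero]
    simp only [hz, lintegral_zero]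
    exact zero_le
  · rw [← Ioc_union_Ioi_eq_Ioi hbpos.le,
      lintegral_union measurableSet_Ioi Ioc_disjoint_Ioi_same]
    have hterm1 : ∫⁻ σ in Ioc (0:ℝ) b, ENNReal.ofReal ((1-c) * σ^(c-2)) *
        min (ENNReal.ofReal σ) x ≤ ENNReal.ofReal ((1-c)/c * b ^ c) := by
      calc ∫⁻ σ in Ioc (0:ℝ) b, ENNReal.ofReal ((1-c) * σ^(c-2)) * min (ENNReal.ofReal σ) x
          ≤ ∫⁻ σ in Ioc (0:ℝ) b, ENNReal.ofReal ((1-c) * σ^(c-1)) := by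
            apply setLIntegral_mono' measurableSet_Ioc
            intro σ hσ
            calc ENNReal.ofReal ((1-c) * σ^(c-2)) * min (ENNReal.ofReal σ) x
                ≤ ENNReal.ofReal ((1-c) * σ^(c-2)) * ENNReal.ofReal σ :=
                  mul_le_mul_right (min_le_left _ _) _
              _ = ENNReal.ofReal ((1-c) * σ^(c-1)) := by
                  rw [← ENNReal.ofReal_mul
                    (mul_nonneg (by linarith) (Real.rpow_nonneg hσ.1.le _))]
                  congr 1
                  have : σ ^ (c-1) = σ ^ (c-2) * σ := by
                    rw [← Real.rpow_add_one hσ.1.ne' (c-2)]; ring_nf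
                  rw [this]; ring
        _ = ENNReal.ofReal (∫ σ in Ioc (0:ℝ) b, (1-c) * σ^(c-1)) := by
            rw [← MeasureTheory.ofReal_integral_eq_lintegral_ofReal]
            · exact (intervalIntegrable_iff_integrableOn_Ioc_of_le hbpos.le).1
                ((intervalIntegral.intervalIntegrable_rpow' (by linarith)).const_mul _)
            · filter_upwards [self_mem_ae_restrict (measurableSet_Ioc :
                MeasurableSet (Ioc (0:ℝ) b))] with σ hσ
              exact mul_nonneg (by linarith) (Real.rpow_nonneg hσ.1.le _)
        _ = ENNReal.ofReal ((1-c)/c * b ^ c) := by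
            congr 1
            rw [← intervalIntegral.integral_of_le hbpos.le,
              intervalIntegral.integral_const_mul, integral_rpow (Or.inl (by linarith))]
            have h1 : c - 1 + 1 = c := by ring
            rw [h1, Real.zero_rpow (ne_of_gt hc0)]
            field_simp
            ring
    have hterm2 : ∫⁻ σ in Ioi b, ENNReal.ofReal ((1-c) * σ^(c-2)) *
        min (ENNReal.ofReal σ) x ≤ ENNReal.ofReal (b ^ c) := by
      calc ∫⁻ σ in Ioi b, ENNReal.ofReal ((1-c) * σ^(c-2)) * min (ENNReal.ofReal σ) x
          ≤ ∫⁻ σ in Ioi b, ENNReal.ofReal ((1-c) * σ^(c-2)) * ENNReal.ofReal b := by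
            apply setLIntegral_mono' measurableSet_Ioi
            intro σ hσ
            exact mul_le_mul_right (le_trans (min_le_right _ _) (le_of_eq hxb)) _
        _ = ENNReal.ofReal b * ∫⁻ σ in Ioi b, ENNReal.ofReal ((1-c) * σ^(c-2)) := by
            rw [← lintegral_const_mul' (ENNReal.ofReal b) _ ENNReal.ofReal_ne_top]
            apply lintegral_congr
            intro σ
            ring
        _ = ENNReal.ofReal b * ENNReal.ofReal (∫ σ in Ioi b, (1-c) * σ^(c-2)) := by
            congr 1
            rw [← MeasureTheory.ofReal_integral_eq_lintegral_ofReal]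
            · exact (integrableOn_Ioi_rpow_of_lt (by linarith) hbpos).const_mul _
            · filter_upwards [self_mem_ae_restrict (measurableSet_Ioi :
                MeasurableSet (Ioi b))] with σ hσ
              exact mul_nonneg (by linarith) (Real.rpow_nonneg ((hbpos.trans hσ).le) _)
        _ = ENNReal.ofReal (b ^ c) := by
            rw [MeasureTheory.integral_const_mul, integral_Ioi_rpow_of_lt (by linarith) hbpos]
            rw [← ENNReal.ofReal_mul hbnn]
            congr 1
            have h1 : c - 2 + 1 = c - 1 := by ring
            have hc1' : c - 1 ≠ 0 := by intro hh; linarith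
            rw [h1]
            have h2 : (1-c) * (-b ^ (c-1) / (c-1)) = b ^ (c-1) := by
              field_simp
              ring
            rw [h2, mul_comm, ← Real.rpow_add_one hbpos.ne' (c-1)]
            ring_nf
    calc _ ≤ ENNReal.ofReal ((1-c)/c * b ^ c) + ENNReal.ofReal (b ^ c) :=
          add_le_add hterm1 hterm2
      _ = ENNReal.ofReal (1/c * b ^ c) := by
          rw [← ENNReal.ofReal_add
            (mul_nonneg (div_nonneg (by linarith) hc0.le) (Real.rpow_nonneg hbnn c))
            (Real.rpow_nonneg hbnn c)]
          congr 1
          field_simp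
          ring
      _ = ENNReal.ofReal (1/c) * x ^ c := by
          rw [ENNReal.ofReal_mul (by positivity), hxb,
            ENNReal.ofReal_rpow_of_nonneg hbnn hc0.le]

/-- L1 : Muckenhoupt-type layer cake bound. -/
lemma layer_neg (ν : Measure ℝ) [SFinite ν] (hν : ∀ a : ℝ, ν {a} = 0)
    {c : ℝ} (hc0 : 0 < c) (hc1 : c < 1) (r : ℝ) :
    ∫⁻ t in Iio r, (ν (Iio t)) ^ (c - 1) ∂ν ≤ ENNReal.ofReal (1/c) * (ν (Iio r)) ^ c := by
  by_cases htop : ν (Iio r) = ⊤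
  · rw [htop, ENNReal.top_rpow_of_pos hc0, ENNReal.mul_top
      (by simp only [ne_eq, ENNReal.ofReal_eq_zero, not_le]; positivity)]
    exact le_top
  have hZ : ν {t | ν (Iio t) = 0} = 0 := by
    have he : {t | ν (Iio t) = 0} = {t | ν (Iio t) ≤ 0} := by
      ext t; simp [le_zero_iff]
    rw [he]
    simpa using meas_cdf_le ν hν 0
  have hae : ∀ᵐ t ∂(ν.restrict (Iio r)), ν (Iio t) ≠ 0 := by
    apply ae_restrict_of_ae
    rw [ae_iff]
    simpa using hZ
  calc ∫⁻ t in Iio r, (ν (Iio t)) ^ (c - 1) ∂ν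
      = ∫⁻ t in Iio r, (∫⁻ σ in Ioi (0:ℝ),
          (if ν (Iio t) < ENNReal.ofReal σ then ENNReal.ofReal ((1-c) * σ^(c-2)) else 0)) ∂ν := by
        apply lintegral_congr_ae
        filter_upwards [hae] with t ht
        exact rep_neg hc0 hc1 _ ht
    _ = ∫⁻ σ in Ioi (0:ℝ), ENNReal.ofReal ((1-c) * σ^(c-2)) *
          ν (Iio r ∩ {t | ν (Iio t) < ENNReal.ofReal σ}) :=
        swapA ν measurableSet_Iio (measIio ν) (by fun_prop)
    _ ≤ ∫⁻ σ in Ioi (0:ℝ), ENNReal.ofReal ((1-c) * σ^(c-2)) *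
          min (ENNReal.ofReal σ) (ν (Iio r)) := by
        apply lintegral_mono
        intro σ
        apply mul_le_mul_right
        apply le_min
        · refine le_trans (measure_mono ?_) (meas_cdf_le ν hν (ENNReal.ofReal σ))
          exact fun t ht => mem_setOf.mpr (le_of_lt (mem_setOf.mp ht.2))
        · exact measure_mono inter_subset_left
    _ ≤ ENNReal.ofReal (1/c) * (ν (Iio r)) ^ c := calcN hc0 hc1 htop

/-- L2 : the reflected (exterior) version of `layer_neg`. -/
lemma layer_neg_Ioi (ν : Measure ℝ) [SFinite ν] (hν : ∀ a : ℝ, ν {a} = 0)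
    {c : ℝ} (hc0 : 0 < c) (hc1 : c < 1) (r : ℝ) :
    ∫⁻ t in Ioi r, (ν (Ioi t)) ^ (c - 1) ∂ν ≤ ENNReal.ofReal (1/c) * (ν (Ioi r)) ^ c := by
  set ν' := Measure.map Neg.neg ν with hν'
  haveI : SFinite ν' := by
    rw [hν']
    infer_instance
  have hkey : ∀ a : ℝ, ν' (Iio a) = ν (Ioi (-a)) := by
    intro a
    rw [hν', Measure.map_apply measurable_neg measurableSet_Iio]
    congr 1
    ext t
    simp only [mem_preimage, mem_Iio, mem_Ioi]
    constructor <;> intro h <;> linarith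
  have hatom : ∀ a : ℝ, ν' {a} = 0 := by
    intro a
    rw [hν', Measure.map_apply measurable_neg (measurableSet_singleton a)]
    have : Neg.neg ⁻¹' ({a} : Set ℝ) = {-a} := by
      ext t; simp [neg_eq_iff_eq_neg]
    rw [this]
    exact hν (-a)
  have happ := layer_neg ν' hatom hc0 hc1 (-r)
  rw [hkey (-r), neg_neg] at happ
  calc ∫⁻ t in Ioi r, (ν (Ioi t)) ^ (c - 1) ∂ν
      = ∫⁻ t in Iio (-r), (ν' (Iio t)) ^ (c - 1) ∂ν' := by
        rw [hν', setLIntegral_map measurableSet_Iio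
          ((measIio (Measure.map Neg.neg ν)).pow_const _) measurable_neg]
        have hpre : Neg.neg ⁻¹' (Iio (-r)) = Ioi r := by
          ext t; simp only [mem_preimage, mem_Iio, mem_Ioi]
          constructor <;> intro h <;> linarith
        rw [hpre]
        apply lintegral_congr
        intro t
        rw [← hν', hkey, neg_neg]
    _ ≤ ENNReal.ofReal (1/c) * (ν (Ioi r)) ^ c := happ

/-- M1 : lower layer-cake estimate (uses atomlessness). -/
lemma sub_mul_layer (κ : Measure ℝ) [SFinite κ] (hκ : ∀ a : ℝ, κ {a} = 0)
    (hfin : ∀ r : ℝ, κ (Iio r) ≠ ⊤) {s : ℝ} (hs : 1 < s) (r : ℝ) :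
    (κ (Iio r)) ^ s ≤ ENNReal.ofReal s * ∫⁻ t in Iio r, (κ (Iio t)) ^ (s-1) ∂κ := by
  have key : ENNReal.ofReal (1/s) * (κ (Iio r)) ^ s ≤ ∫⁻ t in Iio r, (κ (Iio t)) ^ (s-1) ∂κ := by
    calc ENNReal.ofReal (1/s) * (κ (Iio r)) ^ s
        = ∫⁻ σ in Ioi (0:ℝ), ENNReal.ofReal ((s-1) * σ^(s-2)) * (κ (Iio r) - ENNReal.ofReal σ) :=
          (calcP hs (hfin r)).symm
      _ ≤ ∫⁻ σ in Ioi (0:ℝ), ENNReal.ofReal ((s-1) * σ^(s-2)) *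
            κ (Iio r ∩ {t | ENNReal.ofReal σ < κ (Iio t)}) := by
          apply lintegral_mono
          intro σ
          exact mul_le_mul_right (meas_cdf_gt_ge κ hκ r _) _
      _ = ∫⁻ t in Iio r, (κ (Iio t)) ^ (s-1) ∂κ := by
          rw [← swapB κ measurableSet_Iio (measIio κ) (by fun_prop)]
          apply setLIntegral_congr_fun measurableSet_Iio
          intro t ht
          have h := rep_pos (by linarith : (0:ℝ) < s - 1) (κ (Iio t)) (hfin t)
          rw [show s - 1 - 1 = s - 2 by ring] at h
          exact h.symm
  calc (κ (Iio r)) ^ s = 1 * (κ (Iio r)) ^ s := (one_mul _).symm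
    _ = (ENNReal.ofReal s * ENNReal.ofReal (1/s)) * (κ (Iio r)) ^ s := by
        rw [← ENNReal.ofReal_mul (by positivity)]
        rw [mul_one_div_cancel (by positivity : s ≠ 0)]
        simp
    _ = ENNReal.ofReal s * (ENNReal.ofReal (1/s) * (κ (Iio r)) ^ s) := by ring
    _ ≤ ENNReal.ofReal s * ∫⁻ t in Iio r, (κ (Iio t)) ^ (s-1) ∂κ :=
        mul_le_mul_right key _

/-- M4 : upper layer-cake estimate. -/
lemma layer_pos_upper (κ : Measure ℝ) [SFinite κ] (hκ : ∀ a : ℝ, κ {a} = 0)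
    {s : ℝ} (hs : 1 < s) :
    ENNReal.ofReal s * ∫⁻ t, (κ (Iio t)) ^ (s-1) ∂κ ≤ (κ univ) ^ s := by
  by_cases htop : κ univ = ⊤
  · rw [htop, ENNReal.top_rpow_of_pos (by linarith)]
    exact le_top
  have hfin : ∀ t : ℝ, κ (Iio t) ≠ ⊤ := fun t =>
    (lt_of_le_of_lt (measure_mono (subset_univ _)) (lt_top_iff_ne_top.2 htop)).ne
  have key : ∫⁻ t, (κ (Iio t)) ^ (s-1) ∂κ ≤ ENNReal.ofReal (1/s) * (κ univ) ^ s := by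
    calc ∫⁻ t, (κ (Iio t)) ^ (s-1) ∂κ
        = ∫⁻ t in univ, (κ (Iio t)) ^ (s-1) ∂κ := by rw [Measure.restrict_univ]
      _ = ∫⁻ σ in Ioi (0:ℝ), ENNReal.ofReal ((s-1) * σ^(s-2)) *
            κ (univ ∩ {t | ENNReal.ofReal σ < κ (Iio t)}) := by
          rw [← swapB κ MeasurableSet.univ (measIio κ) (by fun_prop)]
          apply lintegral_congr
          intro t
          have h := rep_pos (by linarith : (0:ℝ) < s - 1) (κ (Iio t)) (hfin t)
          rw [show s - 1 - 1 = s - 2 by ring] at h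
          exact h
      _ ≤ ∫⁻ σ in Ioi (0:ℝ), ENNReal.ofReal ((s-1) * σ^(s-2)) *
            (κ univ - ENNReal.ofReal σ) := by
          apply lintegral_mono
          intro σ
          apply mul_le_mul_right
          rw [univ_inter]
          exact meas_cdf_gt_le κ hκ _
      _ = ENNReal.ofReal (1/s) * (κ univ) ^ s := calcP hs htop
  calc ENNReal.ofReal s * ∫⁻ t, (κ (Iio t)) ^ (s-1) ∂κ
      ≤ ENNReal.ofReal s * (ENNReal.ofReal (1/s) * (κ univ) ^ s) := mul_le_mul_right key _
    _ = (ENNReal.ofReal s * ENNReal.ofReal (1/s)) * (κ univ) ^ s := by ring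
    _ = (κ univ) ^ s := by
        rw [← ENNReal.ofReal_mul (by positivity)]
        rw [mul_one_div_cancel (by positivity : s ≠ 0)]
        simp

/-- Minkowski-type inequality for the triangular kernel. -/
lemma minkowski1d (κ m' : Measure ℝ) [SFinite κ] [SFinite m']
    (hκa : ∀ a : ℝ, κ {a} = 0) (hκfin : ∀ r : ℝ, κ (Iio r) ≠ ⊤)
    {s : ℝ} (hs : 1 ≤ s) :
    ∫⁻ r, (κ (Iio r)) ^ s ∂m' ≤ (∫⁻ t, (m' (Ioi t)) ^ (1/s) ∂κ) ^ s := by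
  -- Fubini identity, used in both cases
  have hswap : ∀ h : ℝ → ℝ≥0∞, Measurable h →
      ∫⁻ r, (∫⁻ t in Iio r, h t ∂κ) ∂m' = ∫⁻ t, h t * m' (Ioi t) ∂κ := by
    intro h hh
    have hmeas : AEMeasurable (Function.uncurry fun (r t : ℝ) =>
        (if t < r then h t else 0)) (m'.prod κ) := by
      apply Measurable.aemeasurable
      apply Measurable.ite _ (hh.comp measurable_snd) measurable_const
      exact measurableSet_lt measurable_snd measurable_fst
    calc ∫⁻ r, (∫⁻ t in Iio r, h t ∂κ) ∂m'
        = ∫⁻ r, (∫⁻ t, (if t < r then h t else 0) ∂κ) ∂m' := by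
          apply lintegral_congr
          intro r
          rw [← lintegral_indicator measurableSet_Iio]
          apply lintegral_congr
          intro t
          rw [indicator_apply]
          rfl
      _ = ∫⁻ t, (∫⁻ r, (if t < r then h t else 0) ∂m') ∂κ := lintegral_lintegral_swap hmeas
      _ = ∫⁻ t, h t * m' (Ioi t) ∂κ := by
          apply lintegral_congr
          intro t
          have : ∀ r : ℝ, (if t < r then h t else 0) = (Ioi t).indicator (fun _ => h t) r := by
            intro r; rw [indicator_apply]; rfl
          simp only [this]
          rw [lintegral_indicator measurableSet_Ioi, setLIntegral_const]
  rcases eq_or_lt_of_le hs with hs1 | hs1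
  · -- s = 1 : pure Fubini
    rw [← hs1]
    simp only [ENNReal.rpow_one]
    refine le_of_eq ?_
    calc ∫⁻ r, κ (Iio r) ∂m'
        = ∫⁻ r, (∫⁻ t in Iio r, 1 ∂κ) ∂m' := by
          apply lintegral_congr
          intro r
          rw [setLIntegral_one]
      _ = ∫⁻ t, 1 * m' (Ioi t) ∂κ := hswap _ measurable_const
      _ = ∫⁻ t, m' (Ioi t) ^ (1/(1:ℝ)) ∂κ := by
          apply lintegral_congr
          intro t
          norm_num
  · -- s > 1
    set κ' := κ.withDensity (fun t => (m' (Ioi t)) ^ (1/s)) with hκ'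
    have hGm : Measurable (fun t => (m' (Ioi t)) ^ (1/s)) := (measIoi m').pow_const _
    haveI : SFinite κ' := by rw [hκ']; infer_instance
    have hκ'Iio : ∀ t : ℝ, κ' (Iio t) = ∫⁻ y in Iio t, (m' (Ioi y)) ^ (1/s) ∂κ := by
      intro t
      rw [hκ', withDensity_apply _ measurableSet_Iio]
    have hκ'atom : ∀ a : ℝ, κ' {a} = 0 :=
      fun a => (withDensity_absolutelyContinuous κ _) (hκa a)
    have hκ'univ : κ' univ = ∫⁻ t, (m' (Ioi t)) ^ (1/s) ∂κ := by
      rw [hκ', withDensity_apply _ MeasurableSet.univ, Measure.restrict_univ]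
    -- step 3 pointwise bound
    have step3 : ∀ t : ℝ, (κ (Iio t)) ^ (s-1) * m' (Ioi t)
        ≤ (κ' (Iio t)) ^ (s-1) * (m' (Ioi t)) ^ (1/s) := by
      intro t
      set a := κ (Iio t) with ha
      set G := m' (Ioi t) with hG
      have hH : a * G ^ (1/s) ≤ κ' (Iio t) := by
        rw [hκ'Iio t]
        calc a * G ^ (1/s) = ∫⁻ _ in Iio t, G ^ (1/s) ∂κ := by
              rw [setLIntegral_const, mul_comm]
          _ ≤ ∫⁻ y in Iio t, (m' (Ioi y)) ^ (1/s) ∂κ := by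
              apply setLIntegral_mono' measurableSet_Iio
              intro y hy
              exact ENNReal.rpow_le_rpow (measure_mono (Ioi_subset_Ioi hy.le))
                (by positivity)
      rcases eq_or_ne G 0 with hG0 | hG0
      · rw [hG0, mul_zero]
        exact zero_le
      rcases eq_or_ne G ⊤ with hGt | hGt
      · rcases eq_or_ne a 0 with ha0 | ha0
        · rw [ha0, ENNReal.zero_rpow_of_pos (by linarith), zero_mul]
          exact zero_le
        · have hH' : κ' (Iio t) = ⊤ := by
            rw [eq_top_iff]
            calc ⊤ = a * ⊤ := by
                  rw [ENNReal.mul_top ha0]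
              _ = a * G ^ (1/s) := by
                  rw [hGt, ENNReal.top_rpow_of_pos (by positivity)]
              _ ≤ κ' (Iio t) := hH
          rw [hH', hGt, ENNReal.top_rpow_of_pos (by linarith), ENNReal.top_rpow_of_pos (by positivity),
            ENNReal.top_mul_top]
          exact le_top
      · -- G finite nonzero
        have hgs : G ^ ((s-1)/s) * G ^ (1/s) = G := by
          rw [← ENNReal.rpow_add _ _ hG0 hGt]
          have : (s-1)/s + 1/s = 1 := by field_simp; ring
          rw [this, ENNReal.rpow_one]
        calc a ^ (s-1) * G = a ^ (s-1) * (G ^ ((s-1)/s) * G ^ (1/s)) := by rw [hgs]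
          _ = (a ^ (s-1) * G ^ ((s-1)/s)) * G ^ (1/s) := by ring
          _ = ((a * G ^ (1/s)) ^ (s-1)) * G ^ (1/s) := by
              rw [ENNReal.mul_rpow_of_nonneg _ _ (by linarith : (0:ℝ) ≤ s - 1)]
              congr 2
              rw [← ENNReal.rpow_mul]
              congr 1
              field_simp
          _ ≤ (κ' (Iio t)) ^ (s-1) * G ^ (1/s) :=
              mul_le_mul_left (ENNReal.rpow_le_rpow hH (by linarith)) _
    calc ∫⁻ r, (κ (Iio r)) ^ s ∂m'
        ≤ ∫⁻ r, ENNReal.ofReal s * ∫⁻ t in Iio r, (κ (Iio t)) ^ (s-1) ∂κ ∂m' := by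
          apply lintegral_mono
          intro r
          exact sub_mul_layer κ hκa hκfin hs1 r
      _ = ENNReal.ofReal s * ∫⁻ r, (∫⁻ t in Iio r, (κ (Iio t)) ^ (s-1) ∂κ) ∂m' := by
          rw [lintegral_const_mul _ (Monotone.measurable (fun a b hab =>
            lintegral_mono' (Measure.restrict_mono (Iio_subset_Iio hab) le_rfl) le_rfl))]
      _ = ENNReal.ofReal s * ∫⁻ t, (κ (Iio t)) ^ (s-1) * m' (Ioi t) ∂κ := by
          rw [hswap _ ((measIio κ).pow_const _)]
      _ ≤ ENNReal.ofReal s * ∫⁻ t, (κ' (Iio t)) ^ (s-1) * (m' (Ioi t)) ^ (1/s) ∂κ := by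
          apply mul_le_mul_right
          exact lintegral_mono step3
      _ = ENNReal.ofReal s * ∫⁻ t, (κ' (Iio t)) ^ (s-1) ∂κ' := by
          congr 1
          rw [hκ', lintegral_withDensity_eq_lintegral_mul _ hGm
            ((measIio (κ.withDensity fun t => m' (Ioi t) ^ (1/s))).pow_const _)]
          apply lintegral_congr
          intro t
          simp only [Pi.mul_apply]
          ring
      _ ≤ (κ' univ) ^ s := layer_pos_upper κ' hκ'atom hs1
      _ = (∫⁻ t, (m' (Ioi t)) ^ (1/s) ∂κ) ^ s := by rw [hκ'univ]

end HardyAux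

open MeasureTheory Real Set HardyAux
open scoped ENNReal

set_option maxHeartbeats 2000000 in
/-- Sufficiency part (with explicit constant) of the two-weight integral Hardy
inequality: if `A₁ := sup_{R>0} (∫_{‖x‖>R} W)^{1/q} (∫_{‖x‖<R} U^{1-p'})^{1/p'}`
is finite, then for all measurable `f ≥ 0`,
`(∫ (∫_{‖y‖<‖x‖} f)^q W)^{1/q} ≤ (p')^{1/p'} p^{1/q} A₁ (∫ f^p U)^{1/p}`. -/
theorem integral_hardy_sufficiency
    (N : ℕ) (hN : 1 ≤ N) (p q p' : ℝ) (hp : 1 < p) (hpq : p ≤ q)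
    (hp' : 1 / p + 1 / p' = 1)
    (W U : EuclideanSpace ℝ (Fin N) → ℝ)
    (hWpos : ∀ x, 0 < W x) (hUpos : ∀ x, 0 < U x)
    (hWm : Measurable W) (hUm : Measurable U)
    (hA : (⨆ (R : ℝ) (_ : 0 < R),
        (∫⁻ x in {x : EuclideanSpace ℝ (Fin N) | R < ‖x‖}, ENNReal.ofReal (W x)) ^ (1 / q) *
        (∫⁻ x in {x : EuclideanSpace ℝ (Fin N) | ‖x‖ < R},
            ENNReal.ofReal (U x ^ (1 - p'))) ^ (1 / p')) ≠ ⊤) :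
    ∀ f : EuclideanSpace ℝ (Fin N) → ℝ, Measurable f → (∀ x, 0 ≤ f x) →
      (∫⁻ x, (∫⁻ y in {y : EuclideanSpace ℝ (Fin N) | ‖y‖ < ‖x‖},
            ENNReal.ofReal (f y)) ^ q * ENNReal.ofReal (W x)) ^ (1 / q)
        ≤ ENNReal.ofReal (p' ^ (1 / p') * p ^ (1 / q)) *
          (⨆ (R : ℝ) (_ : 0 < R),
            (∫⁻ x in {x : EuclideanSpace ℝ (Fin N) | R < ‖x‖}, ENNReal.ofReal (W x)) ^ (1 / q) *
            (∫⁻ x in {x : EuclideanSpace ℝ (Fin N) | ‖x‖ < R},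
                ENNReal.ofReal (U x ^ (1 - p'))) ^ (1 / p')) *
          (∫⁻ x, ENNReal.ofReal (f x ^ p) * ENNReal.ofReal (U x)) ^ (1 / p) := by
  intro f hf hf0
  classical
  -- ### real-number facts
  have hp0 : (0:ℝ) < p := lt_trans one_pos hp
  have hq1 : (1:ℝ) < q := lt_of_lt_of_le hp hpq
  have hq0 : (0:ℝ) < q := lt_trans one_pos hq1
  have hinvp0 : (0:ℝ) < 1/p := by positivity
  have hinvp1 : 1/p < 1 := by rw [div_lt_one hp0]; exact hp
  have hinvp'0 : (0:ℝ) < 1/p' := by linarith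
  have hp'pos : (0:ℝ) < p' := by
    rcases lt_trichotomy p' 0 with h | h | h
    · exfalso; have : 1/p' < 0 := by exact div_neg_of_pos_of_neg one_pos h
      linarith
    · exfalso; rw [h] at hinvp'0; simp at hinvp'0
    · exact h
  have hinvp'1 : 1/p' < 1 := by linarith
  have hp'1 : (1:ℝ) < p' := by rwa [div_lt_one hp'pos] at hinvp'1
  have hsum : p' + p = p * p' := by
    have h1 : p ≠ 0 := hp0.ne'
    have h2 : p' ≠ 0 := hp'pos.ne'
    field_simp at hp'
    linarith
  have hconj : p.HolderConjugate p' := Real.holderConjugate_iff.2 ⟨hp, by rw [← one_div, ← one_div]; exact hp'⟩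
  have hexp1 : 1 - p' = -(p'/p) := by field_simp; linarith
  have hexp2 : (1:ℝ)/p' - 1 = -(1/p) := by linarith
  have hexp3 : (1:ℝ)/p - 1 = -(1/p') := by linarith
  -- ### geometry of the Euclidean space
  haveI hNE : Nonempty (Fin N) := ⟨⟨0, hN⟩⟩
  haveI hNT : Nontrivial (EuclideanSpace ℝ (Fin N)) := by
    refine ⟨⟨EuclideanSpace.single ⟨0, hN⟩ (1:ℝ), 0, ?_⟩⟩
    intro hcontra
    have := congrArg (fun v => v ⟨0, hN⟩) hcontra
    simp [EuclideanSpace.single_apply] at this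
  have hsetIoi : ∀ R : ℝ, MeasurableSet {x : EuclideanSpace ℝ (Fin N) | R < ‖x‖} :=
    fun R => measurableSet_lt measurable_const measurable_norm
  have hsetIio : ∀ R : ℝ, MeasurableSet {x : EuclideanSpace ℝ (Fin N) | ‖x‖ < R} :=
    fun R => measurableSet_lt measurable_norm measurable_const
  have hsphere : ∀ a : ℝ, volume {x : EuclideanSpace ℝ (Fin N) | ‖x‖ = a} = 0 := by
    intro a
    have he : {x : EuclideanSpace ℝ (Fin N) | ‖x‖ = a} = Metric.sphere 0 a := by
      ext x; simp [mem_sphere_zero_iff_norm]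
    rw [he]
    exact Measure.addHaar_sphere volume 0 a
  have h0null : volume ({0} : Set (EuclideanSpace ℝ (Fin N))) = 0 := by
    have he : ({0} : Set (EuclideanSpace ℝ (Fin N))) = {x | ‖x‖ = 0} := by
      ext x; simp [norm_eq_zero]
    rw [he]; exact hsphere 0
  have hane : ∀ᵐ x : EuclideanSpace ℝ (Fin N) ∂volume, x ≠ 0 := by
    rw [ae_iff]
    have : {x : EuclideanSpace ℝ (Fin N) | ¬ x ≠ 0} = {0} := by ext x; simp
    rw [this]; exact h0null
  have hball : ∀ R : ℝ, 0 < R → 0 < volume {x : EuclideanSpace ℝ (Fin N) | ‖x‖ < R} := by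
    intro R hR
    have he : {x : EuclideanSpace ℝ (Fin N) | ‖x‖ < R} = Metric.ball 0 R := by
      ext x; simp [mem_ball_zero_iff]
    rw [he]; exact Metric.measure_ball_pos _ _ hR
  have hext : ∀ R : ℝ, 0 < volume {x : EuclideanSpace ℝ (Fin N) | R < ‖x‖} := by
    intro R
    obtain ⟨y0, hy0⟩ := exists_ne (0 : EuclideanSpace ℝ (Fin N))
    have hy0n : (0:ℝ) < ‖y0‖ := norm_pos_iff.2 hy0
    set x0 := ((|R|+2)/‖y0‖) • y0 with hx0def
    have hx0 : ‖x0‖ = |R|+2 := by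
      rw [hx0def, norm_smul, Real.norm_eq_abs, abs_div, abs_of_nonneg (by positivity : (0:ℝ) ≤ |R|+2),
        abs_of_nonneg (norm_nonneg y0)]
      field_simp
    have hsub : Metric.ball x0 1 ⊆ {x : EuclideanSpace ℝ (Fin N) | R < ‖x‖} := by
      intro z hz
      have h1 : ‖z - x0‖ < 1 := by rwa [mem_ball_iff_norm] at hz
      have h2 : ‖x0‖ - ‖z‖ ≤ ‖x0 - z‖ := norm_sub_norm_le _ _
      have h3 : ‖x0 - z‖ = ‖z - x0‖ := norm_sub_rev _ _
      have h4 : R ≤ |R| := le_abs_self R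
      simp only [mem_setOf_eq]
      rw [hx0] at h2
      linarith
    exact lt_of_lt_of_le (Metric.measure_ball_pos _ _ one_pos) (measure_mono hsub)
  -- ### the measures
  set dU := fun x : EuclideanSpace ℝ (Fin N) => ENNReal.ofReal (U x ^ (1 - p')) with hdU
  set dW := fun x : EuclideanSpace ℝ (Fin N) => ENNReal.ofReal (W x) with hdW
  have hdUm : Measurable dU := by rw [hdU]; fun_prop
  have hdWm : Measurable dW := by rw [hdW]; fun_prop
  have hdU0 : ∀ x, dU x ≠ 0 := by
    intro x
    simp only [hdU, ne_eq, ENNReal.ofReal_eq_zero, not_le]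
    exact Real.rpow_pos_of_pos (hUpos x) _
  have hdW0 : ∀ x, dW x ≠ 0 := by
    intro x
    simp only [hdW, ne_eq, ENNReal.ofReal_eq_zero, not_le]
    exact hWpos x
  set νU := (volume.withDensity dU).map (fun x : EuclideanSpace ℝ (Fin N) => ‖x‖) with hνU
  set νW := (volume.withDensity dW).map (fun x : EuclideanSpace ℝ (Fin N) => ‖x‖) with hνW
  haveI : SFinite νU := by rw [hνU]; infer_instance
  haveI : SFinite νW := by rw [hνW]; infer_instance
  -- transfer of integrals
  have htransfer : ∀ (d : EuclideanSpace ℝ (Fin N) → ℝ≥0∞), Measurable d →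
      ∀ (Φ : ℝ → ℝ≥0∞), Measurable Φ → ∀ (T : Set ℝ), MeasurableSet T →
      ∫⁻ y in (fun x : EuclideanSpace ℝ (Fin N) => ‖x‖) ⁻¹' T, d y * Φ ‖y‖ ∂volume
        = ∫⁻ t in T, Φ t ∂((volume.withDensity d).map
            (fun x : EuclideanSpace ℝ (Fin N) => ‖x‖)) := by
    intro d hd Φ hΦ T hT
    rw [setLIntegral_map hT hΦ measurable_norm,
      setLIntegral_withDensity_eq_setLIntegral_mul volume hd
        (show Measurable fun x : EuclideanSpace ℝ (Fin N) => Φ ‖x‖ from hΦ.comp measurable_norm)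
        (hT.preimage measurable_norm)]
    rfl
  have hmapW : ∀ T : Set ℝ, MeasurableSet T →
      νW T = ∫⁻ x in (fun x : EuclideanSpace ℝ (Fin N) => ‖x‖) ⁻¹' T, dW x ∂volume := by
    intro T hT
    rw [hνW, Measure.map_apply measurable_norm hT,
      withDensity_apply _ (hT.preimage measurable_norm)]
  have hmapU : ∀ T : Set ℝ, MeasurableSet T →
      νU T = ∫⁻ x in (fun x : EuclideanSpace ℝ (Fin N) => ‖x‖) ⁻¹' T, dU x ∂volume := by
    intro T hT
    rw [hνU, Measure.map_apply measurable_norm hT,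
      withDensity_apply _ (hT.preimage measurable_norm)]
  have hWbeq : ∀ R : ℝ,
      (∫⁻ x in {x : EuclideanSpace ℝ (Fin N) | R < ‖x‖}, ENNReal.ofReal (W x)) = νW (Ioi R) := by
    intro R
    rw [hmapW (Ioi R) measurableSet_Ioi]
    rfl
  have hVeq : ∀ R : ℝ,
      (∫⁻ x in {x : EuclideanSpace ℝ (Fin N) | ‖x‖ < R},
        ENNReal.ofReal (U x ^ (1 - p'))) = νU (Iio R) := by
    intro R
    rw [hmapU (Iio R) measurableSet_Iio]
    rfl
  -- atomlessness
  have hatomU : ∀ a : ℝ, νU {a} = 0 := by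
    intro a
    rw [hνU, Measure.map_apply measurable_norm (measurableSet_singleton a)]
    exact (withDensity_absolutelyContinuous _ _) (hsphere a)
  have hatomW : ∀ a : ℝ, νW {a} = 0 := by
    intro a
    rw [hνW, Measure.map_apply measurable_norm (measurableSet_singleton a)]
    exact (withDensity_absolutelyContinuous _ _) (hsphere a)
  -- positivity
  have hwdpos : ∀ (d : EuclideanSpace ℝ (Fin N) → ℝ≥0∞), Measurable d → (∀ x, d x ≠ 0) →
      ∀ S : Set (EuclideanSpace ℝ (Fin N)), MeasurableSet S → 0 < volume S →
      0 < ∫⁻ x in S, d x ∂volume := by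
    intro d hd hd0 S hS hvol
    rw [lintegral_pos_iff_support hd]
    have hsupp : Function.support d = univ := by
      ext x; simp [Function.mem_support, hd0 x]
    rw [hsupp]
    rwa [Measure.restrict_apply_univ]
  have hWbpos : ∀ r : ℝ, 0 < νW (Ioi r) := by
    intro r
    rw [hmapW (Ioi r) measurableSet_Ioi]
    exact hwdpos dW hdWm hdW0 _ (hsetIoi r) (hext r)
  have hVpos : ∀ r : ℝ, 0 < r → 0 < νU (Iio r) := by
    intro r hr
    rw [hmapU (Iio r) measurableSet_Iio]
    exact hwdpos dU hdUm hdU0 _ (hsetIio r) (hball r hr)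
  -- the constant A
  set A := (⨆ (R : ℝ) (_ : 0 < R),
      (∫⁻ x in {x : EuclideanSpace ℝ (Fin N) | R < ‖x‖}, ENNReal.ofReal (W x)) ^ (1 / q) *
      (∫⁻ x in {x : EuclideanSpace ℝ (Fin N) | ‖x‖ < R},
          ENNReal.ofReal (U x ^ (1 - p'))) ^ (1 / p')) with hAdef
  have hkey : ∀ R : ℝ, 0 < R → νW (Ioi R) ^ (1/q) * νU (Iio R) ^ (1/p') ≤ A := by
    intro R hR
    rw [hAdef, ← hWbeq R, ← hVeq R]
    exact le_iSup₂ (f := fun (R : ℝ) (_ : 0 < R) =>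
      (∫⁻ x in {x : EuclideanSpace ℝ (Fin N) | R < ‖x‖}, ENNReal.ofReal (W x)) ^ (1 / q) *
      (∫⁻ x in {x : EuclideanSpace ℝ (Fin N) | ‖x‖ < R},
          ENNReal.ofReal (U x ^ (1 - p'))) ^ (1 / p')) R hR
  -- finiteness of the pieces
  have hWbfin : ∀ r : ℝ, 0 < r → νW (Ioi r) ≠ ⊤ := by
    intro r hr hcontra
    have h1 := hkey r hr
    rw [hcontra, ENNReal.top_rpow_of_pos (by positivity)] at h1
    have h2 : νU (Iio r) ^ (1/p') ≠ 0 := by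
      simp only [ne_eq, ENNReal.rpow_eq_zero_iff, not_or, not_and, not_lt]
      constructor
      · intro h; exact absurd h (hVpos r hr).ne'
      · intro h; positivity
    rw [ENNReal.top_mul h2] at h1
    exact hA (top_le_iff.1 h1)
  have hVfin0 : ∀ r : ℝ, 0 < r → νU (Iio r) ≠ ⊤ := by
    intro r hr hcontra
    have h1 := hkey r hr
    rw [hcontra, ENNReal.top_rpow_of_pos (by positivity)] at h1
    have h2 : νW (Ioi r) ^ (1/q) ≠ 0 := by
      simp only [ne_eq, ENNReal.rpow_eq_zero_iff, not_or, not_and, not_lt]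
      constructor
      · intro h; exact absurd h (hWbpos r).ne'
      · intro h; positivity
    rw [ENNReal.mul_top h2] at h1
    exact hA (top_le_iff.1 h1)
  have hVfin : ∀ r : ℝ, νU (Iio r) ≠ ⊤ := by
    intro r
    have h1 : νU (Iio r) ≤ νU (Iio (max r 1)) :=
      measure_mono (Iio_subset_Iio (le_max_left r 1))
    exact ne_top_of_le_ne_top (hVfin0 (max r 1) (lt_of_lt_of_le one_pos (le_max_right r 1))) h1
  -- rpow-positivity helpers
  have hrpow_ne0 : ∀ (x : ℝ≥0∞) (e : ℝ), x ≠ 0 → 0 < e → x ^ e ≠ 0 := by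
    intro x e hx he
    simp only [ne_eq, ENNReal.rpow_eq_zero_iff, not_or, not_and, not_lt]
    exact ⟨fun h => absurd h hx, fun _ => he.le⟩
  have hrpow_net : ∀ (x : ℝ≥0∞) (e : ℝ), x ≠ ⊤ → 0 < e → x ^ e ≠ ⊤ := by
    intro x e hx he
    simp only [ne_eq, ENNReal.rpow_eq_top_iff, not_or, not_and, not_lt]
    exact ⟨fun _ => he.le, fun h => absurd h hx⟩
  -- isolate the two factors of A
  have hkey1 : ∀ r : ℝ, 0 < r → νU (Iio r) ^ (1/p') ≤ (νW (Ioi r) ^ (1/q))⁻¹ * A := by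
    intro r hr
    have ha0 : νW (Ioi r) ^ (1/q) ≠ 0 := hrpow_ne0 _ _ (hWbpos r).ne' (by positivity)
    have hat : νW (Ioi r) ^ (1/q) ≠ ⊤ := hrpow_net _ _ (hWbfin r hr) (by positivity)
    calc νU (Iio r) ^ (1/p')
        = (νW (Ioi r) ^ (1/q))⁻¹ * (νW (Ioi r) ^ (1/q) * νU (Iio r) ^ (1/p')) := by
          rw [← mul_assoc, ENNReal.inv_mul_cancel ha0 hat, one_mul]
      _ ≤ (νW (Ioi r) ^ (1/q))⁻¹ * A := mul_le_mul_right (hkey r hr) _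
  have hkey2 : ∀ r : ℝ, 0 < r → νW (Ioi r) ^ (1/q) ≤ (νU (Iio r) ^ (1/p'))⁻¹ * A := by
    intro r hr
    have ha0 : νU (Iio r) ^ (1/p') ≠ 0 := hrpow_ne0 _ _ (hVpos r hr).ne' (by positivity)
    have hat : νU (Iio r) ^ (1/p') ≠ ⊤ := hrpow_net _ _ (hVfin r) (by positivity)
    calc νW (Ioi r) ^ (1/q)
        = (νU (Iio r) ^ (1/p'))⁻¹ * (νW (Ioi r) ^ (1/q) * νU (Iio r) ^ (1/p')) := by
          rw [mul_comm (νW (Ioi r) ^ (1/q)) _, ← mul_assoc, ENNReal.inv_mul_cancel ha0 hat,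
            one_mul]
      _ ≤ (νU (Iio r) ^ (1/p'))⁻¹ * A := mul_le_mul_right (hkey r hr) _
  have hApos : 0 < A := by
    refine lt_of_lt_of_le ?_ (hkey 1 one_pos)
    apply ENNReal.mul_pos
    · exact hrpow_ne0 _ _ (hWbpos 1).ne' (by positivity)
    · exact hrpow_ne0 _ _ (hVpos 1 one_pos).ne' (by positivity)
  -- the integral I
  set I := ∫⁻ x, ENNReal.ofReal (f x ^ p) * ENNReal.ofReal (U x) with hIdef
  have hIeq : I = ∫⁻ x, ENNReal.ofReal (f x) ^ p * ENNReal.ofReal (U x) := by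
    rw [hIdef]
    apply lintegral_congr
    intro x
    rw [ENNReal.ofReal_rpow_of_nonneg (hf0 x) hp0.le]
  have hCpos : (0:ℝ≥0∞) < ENNReal.ofReal (p' ^ (1/p') * p ^ (1/q)) := by
    rw [ENNReal.ofReal_pos]
    positivity
  rcases eq_or_ne I ⊤ with hItop | hIfin
  · -- trivial case: RHS is ⊤
    rw [hItop, ENNReal.top_rpow_of_pos (by positivity : (0:ℝ) < 1/p)]
    rw [ENNReal.mul_top (mul_ne_zero hCpos.ne' hApos.ne')]
    exact le_top
  -- ### main case : I finite
  have hqne : q ≠ 0 := hq0.ne'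
  set gg := fun y : EuclideanSpace ℝ (Fin N) =>
    ENNReal.ofReal (f y) ^ p * ENNReal.ofReal (U y) * (νU (Iio ‖y‖)) ^ (1/p') with hgg
  have hggm : Measurable gg := by
    rw [hgg]
    exact (((ENNReal.measurable_ofReal.comp hf).pow_const p).mul
      (ENNReal.measurable_ofReal.comp hUm)).mul
      (((measIio νU).comp measurable_norm).pow_const _)
  set κ := (volume.withDensity gg).map (fun x : EuclideanSpace ℝ (Fin N) => ‖x‖) with hκ
  haveI : SFinite κ := by rw [hκ]; infer_instance
  have hκIio : ∀ r : ℝ,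
      κ (Iio r) = ∫⁻ y in {y : EuclideanSpace ℝ (Fin N) | ‖y‖ < r}, gg y ∂volume := by
    intro r
    rw [hκ, Measure.map_apply measurable_norm measurableSet_Iio,
      withDensity_apply _ (measurableSet_Iio.preimage measurable_norm)]
    rfl
  have hatomκ : ∀ a : ℝ, κ {a} = 0 := by
    intro a
    rw [hκ, Measure.map_apply measurable_norm (measurableSet_singleton a)]
    exact (withDensity_absolutelyContinuous _ _) (hsphere a)
  have hκfin : ∀ r : ℝ, κ (Iio r) ≠ ⊤ := by
    intro r
    rw [hκIio r]
    have hb : ∫⁻ y in {y : EuclideanSpace ℝ (Fin N) | ‖y‖ < r}, gg y ∂volume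
        ≤ (νU (Iio r)) ^ (1/p') * I := by
      calc ∫⁻ y in {y : EuclideanSpace ℝ (Fin N) | ‖y‖ < r}, gg y ∂volume
          ≤ ∫⁻ y in {y : EuclideanSpace ℝ (Fin N) | ‖y‖ < r},
              (νU (Iio r)) ^ (1/p') *
                (ENNReal.ofReal (f y) ^ p * ENNReal.ofReal (U y)) ∂volume := by
            apply setLIntegral_mono' (hsetIio r)
            intro y hy
            have h1 : (νU (Iio ‖y‖)) ^ (1/p') ≤ (νU (Iio r)) ^ (1/p') :=
              ENNReal.rpow_le_rpow (measure_mono (Iio_subset_Iio (le_of_lt hy)))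
                (by positivity)
            calc gg y = (ENNReal.ofReal (f y) ^ p * ENNReal.ofReal (U y)) *
                  (νU (Iio ‖y‖)) ^ (1/p') := by rw [hgg]
              _ ≤ (ENNReal.ofReal (f y) ^ p * ENNReal.ofReal (U y)) *
                  (νU (Iio r)) ^ (1/p') := mul_le_mul_right h1 _
              _ = (νU (Iio r)) ^ (1/p') *
                  (ENNReal.ofReal (f y) ^ p * ENNReal.ofReal (U y)) := mul_comm _ _
        _ = (νU (Iio r)) ^ (1/p') * ∫⁻ y in {y : EuclideanSpace ℝ (Fin N) | ‖y‖ < r},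
              ENNReal.ofReal (f y) ^ p * ENNReal.ofReal (U y) ∂volume := by
            rw [lintegral_const_mul]
            exact ((ENNReal.measurable_ofReal.comp hf).pow_const p).mul
              (ENNReal.measurable_ofReal.comp hUm)
        _ ≤ (νU (Iio r)) ^ (1/p') * I := by
            rw [hIeq]
            exact mul_le_mul_right (setLIntegral_le_lintegral _ _) _
    exact ne_top_of_le_ne_top
      (ENNReal.mul_ne_top (hrpow_net _ _ (hVfin r) (by positivity)) hIfin) hb
  -- preimage identities
  have hpreIio : ∀ r : ℝ, (fun x : EuclideanSpace ℝ (Fin N) => ‖x‖) ⁻¹' (Iio r)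
      = {y : EuclideanSpace ℝ (Fin N) | ‖y‖ < r} := fun r => rfl
  have hpreIoi : ∀ r : ℝ, (fun x : EuclideanSpace ℝ (Fin N) => ‖x‖) ⁻¹' (Ioi r)
      = {y : EuclideanSpace ℝ (Fin N) | r < ‖y‖} := fun r => rfl
  -- ### Hölder step
  have hHold : ∀ r : ℝ, 0 < r →
      (∫⁻ y in {y : EuclideanSpace ℝ (Fin N) | ‖y‖ < r}, ENNReal.ofReal (f y) ∂volume)
        ≤ κ (Iio r) ^ (1/p) * (ENNReal.ofReal p' * νU (Iio r) ^ (1/p')) ^ (1/p') := by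
    intro r hr
    set φ := fun y : EuclideanSpace ℝ (Fin N) =>
      ENNReal.ofReal (f y) * ENNReal.ofReal (U y) ^ (1/p) *
        (νU (Iio ‖y‖)) ^ (1/(p*p')) with hφ
    set ψ := fun y : EuclideanSpace ℝ (Fin N) =>
      (ENNReal.ofReal (U y) ^ (1/p))⁻¹ * ((νU (Iio ‖y‖)) ^ (1/(p*p')))⁻¹ with hψ
    have hφm : Measurable φ := by
      rw [hφ]
      exact ((ENNReal.measurable_ofReal.comp hf).mul
        ((ENNReal.measurable_ofReal.comp hUm).pow_const _)).mul
        (((measIio νU).comp measurable_norm).pow_const _)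
    have hψm : Measurable ψ := by
      rw [hψ]
      exact ((ENNReal.measurable_ofReal.comp hUm).pow_const _).inv.mul
        ((((measIio νU).comp measurable_norm).pow_const _).inv)
    have hfactor : ∀ᵐ y ∂(volume.restrict {y : EuclideanSpace ℝ (Fin N) | ‖y‖ < r}),
        ENNReal.ofReal (f y) = (φ * ψ) y := by
      apply ae_restrict_of_ae
      filter_upwards [hane] with y hy
      have hny : (0:ℝ) < ‖y‖ := norm_pos_iff.2 hy
      have hU0 : ENNReal.ofReal (U y) ^ (1/p) ≠ 0 :=
        hrpow_ne0 _ _ (by simp only [ne_eq, ENNReal.ofReal_eq_zero, not_le]; exact hUpos y)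
          hinvp0
      have hUt : ENNReal.ofReal (U y) ^ (1/p) ≠ ⊤ :=
        hrpow_net _ _ ENNReal.ofReal_ne_top hinvp0
      have hV0 : (νU (Iio ‖y‖)) ^ (1/(p*p')) ≠ 0 :=
        hrpow_ne0 _ _ (hVpos _ hny).ne' (by positivity)
      have hVt : (νU (Iio ‖y‖)) ^ (1/(p*p')) ≠ ⊤ :=
        hrpow_net _ _ (hVfin _) (by positivity)
      have hre : (φ * ψ) y
          = ENNReal.ofReal (f y) *
            (ENNReal.ofReal (U y) ^ (1/p) * (ENNReal.ofReal (U y) ^ (1/p))⁻¹) *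
            ((νU (Iio ‖y‖)) ^ (1/(p*p')) * ((νU (Iio ‖y‖)) ^ (1/(p*p')))⁻¹) := by
        simp only [Pi.mul_apply, hφ, hψ]
        ring
      rw [hre, ENNReal.mul_inv_cancel hU0 hUt, ENNReal.mul_inv_cancel hV0 hVt,
        mul_one, mul_one]
    have hφp : ∀ y, φ y ^ p = gg y := by
      intro y
      rw [hφ, hgg]
      rw [ENNReal.mul_rpow_of_nonneg _ _ hp0.le, ENNReal.mul_rpow_of_nonneg _ _ hp0.le]
      congr 1
      · congr 1
        rw [← ENNReal.rpow_mul, one_div_mul_cancel hp0.ne', ENNReal.rpow_one]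
      · rw [← ENNReal.rpow_mul]
        congr 1
        field_simp
    have hψp : ∀ y, ψ y ^ p' = dU y * ((νU (Iio ‖y‖)) ^ (1/p))⁻¹ := by
      intro y
      rw [hψ, ENNReal.mul_rpow_of_nonneg _ _ hp'pos.le,
        ENNReal.inv_rpow, ENNReal.inv_rpow, ← ENNReal.rpow_mul, ← ENNReal.rpow_mul]
      congr 2
      · have he : (1/p) * p' = p'/p := by ring
        rw [he, ← ENNReal.rpow_neg, ← hexp1, ENNReal.ofReal_rpow_of_pos (hUpos y), hdU]
      · congr 1
        field_simp
    have hsecond : ∫⁻ y in {y : EuclideanSpace ℝ (Fin N) | ‖y‖ < r}, ψ y ^ p' ∂volume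
        ≤ ENNReal.ofReal p' * νU (Iio r) ^ (1/p') := by
      have htr := htransfer dU hdUm (fun t => ((νU (Iio t)) ^ (1/p))⁻¹)
        (((measIio νU).pow_const _).inv) (Iio r) measurableSet_Iio
      rw [hpreIio, ← hνU] at htr
      calc ∫⁻ y in {y : EuclideanSpace ℝ (Fin N) | ‖y‖ < r}, ψ y ^ p' ∂volume
          = ∫⁻ y in {y : EuclideanSpace ℝ (Fin N) | ‖y‖ < r},
              dU y * ((νU (Iio ‖y‖)) ^ (1/p))⁻¹ ∂volume :=
            lintegral_congr fun y => hψp y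
        _ = ∫⁻ t in Iio r, ((νU (Iio t)) ^ (1/p))⁻¹ ∂νU := htr
        _ = ∫⁻ t in Iio r, (νU (Iio t)) ^ ((1:ℝ)/p' - 1) ∂νU := by
            apply lintegral_congr
            intro t
            rw [hexp2, ENNReal.rpow_neg]
        _ ≤ ENNReal.ofReal (1/(1/p')) * (νU (Iio r)) ^ ((1:ℝ)/p') :=
            layer_neg νU hatomU hinvp'0 hinvp'1 r
        _ = ENNReal.ofReal p' * νU (Iio r) ^ (1/p') := by rw [one_div_one_div]
    calc ∫⁻ y in {y : EuclideanSpace ℝ (Fin N) | ‖y‖ < r}, ENNReal.ofReal (f y) ∂volume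
        = ∫⁻ y in {y : EuclideanSpace ℝ (Fin N) | ‖y‖ < r}, (φ * ψ) y ∂volume :=
          lintegral_congr_ae hfactor
      _ ≤ (∫⁻ y in {y : EuclideanSpace ℝ (Fin N) | ‖y‖ < r}, φ y ^ p ∂volume) ^ (1/p) *
          (∫⁻ y in {y : EuclideanSpace ℝ (Fin N) | ‖y‖ < r}, ψ y ^ p' ∂volume) ^ (1/p') :=
          ENNReal.lintegral_mul_le_Lp_mul_Lq _ hconj hφm.aemeasurable hψm.aemeasurable
      _ ≤ κ (Iio r) ^ (1/p) * (ENNReal.ofReal p' * νU (Iio r) ^ (1/p')) ^ (1/p') := by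
          apply mul_le_mul'
          · apply ENNReal.rpow_le_rpow _ hinvp0.le
            rw [hκIio r]
            exact le_of_eq (lintegral_congr fun y => hφp y)
          · exact ENNReal.rpow_le_rpow hsecond hinvp'0.le
  -- ### the measure mm with density dM
  set dM := fun x : EuclideanSpace ℝ (Fin N) =>
    ((νW (Ioi ‖x‖)) ^ ((1:ℝ)/p'))⁻¹ * ENNReal.ofReal (W x) with hdM
  have hdMm : Measurable dM := by
    rw [hdM]
    exact (((measIoi νW).comp measurable_norm).pow_const _).inv.mul
      (ENNReal.measurable_ofReal.comp hWm)
  set mm := volume.withDensity dM with hmm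
  set m' := mm.map (fun x : EuclideanSpace ℝ (Fin N) => ‖x‖) with hm'
  haveI : SFinite mm := by rw [hmm]; infer_instance
  haveI : SFinite m' := by rw [hm']; infer_instance
  have hm'Ioi : ∀ t : ℝ, m' (Ioi t) ≤ ENNReal.ofReal p * (νW (Ioi t)) ^ ((1:ℝ)/p) := by
    intro t
    have htr := htransfer dW hdWm (fun s => ((νW (Ioi s)) ^ ((1:ℝ)/p'))⁻¹)
      (((measIoi νW).pow_const _).inv) (Ioi t) measurableSet_Ioi
    rw [hpreIoi, ← hνW] at htr
    have h1 : m' (Ioi t) = ∫⁻ s in Ioi t, ((νW (Ioi s)) ^ ((1:ℝ)/p'))⁻¹ ∂νW := by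
      rw [hm', Measure.map_apply measurable_norm measurableSet_Ioi, hmm,
        withDensity_apply _ (measurableSet_Ioi.preimage measurable_norm), hpreIoi]
      rw [← htr]
      apply lintegral_congr
      intro x
      rw [hdM]
      ring
    rw [h1]
    calc ∫⁻ s in Ioi t, ((νW (Ioi s)) ^ ((1:ℝ)/p'))⁻¹ ∂νW
        = ∫⁻ s in Ioi t, (νW (Ioi s)) ^ ((1:ℝ)/p - 1) ∂νW := by
          apply lintegral_congr
          intro s
          rw [hexp3, ENNReal.rpow_neg]
      _ ≤ ENNReal.ofReal (1/(1/p)) * (νW (Ioi t)) ^ ((1:ℝ)/p) :=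
          layer_neg_Ioi νW hatomW hinvp0 hinvp1 t
      _ = ENNReal.ofReal p * (νW (Ioi t)) ^ ((1:ℝ)/p) := by rw [one_div_one_div]
  -- ### exponent s = q/p
  have hqp1 : (1:ℝ) ≤ q/p := by rw [le_div_iff₀ hp0]; linarith
  -- the inner Minkowski bound
  have hinner : ∫⁻ t, (m' (Ioi t)) ^ (1/((q:ℝ)/p)) ∂κ
      ≤ (ENNReal.ofReal p) ^ ((p:ℝ)/q) * A * I := by
    have hpq' : 1/((q:ℝ)/p) = p/q := one_div_div q p
    calc ∫⁻ t, (m' (Ioi t)) ^ (1/((q:ℝ)/p)) ∂κ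
        = ∫⁻ y, gg y * (m' (Ioi ‖y‖)) ^ ((p:ℝ)/q) ∂volume := by
          rw [hpq', hκ, lintegral_map ((measIoi m').pow_const _) measurable_norm,
            lintegral_withDensity_eq_lintegral_mul _ hggm
              (show Measurable fun a : EuclideanSpace ℝ (Fin N) =>
                (m' (Ioi ‖a‖)) ^ ((p:ℝ)/q) from
                ((measIoi m').comp measurable_norm).pow_const _)]
          rfl
      _ ≤ ∫⁻ y, (ENNReal.ofReal p) ^ ((p:ℝ)/q) * A *
            (ENNReal.ofReal (f y) ^ p * ENNReal.ofReal (U y)) ∂volume := by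
          apply lintegral_mono_ae
          filter_upwards [hane] with y hy
          have hny : (0:ℝ) < ‖y‖ := norm_pos_iff.2 hy
          have hVnz : (νU (Iio ‖y‖)) ^ ((1:ℝ)/p') ≠ 0 :=
            hrpow_ne0 _ _ (hVpos _ hny).ne' (by positivity)
          have hVnt : (νU (Iio ‖y‖)) ^ ((1:ℝ)/p') ≠ ⊤ :=
            hrpow_net _ _ (hVfin _) (by positivity)
          have s1 : (m' (Ioi ‖y‖)) ^ ((p:ℝ)/q)
              ≤ (ENNReal.ofReal p) ^ ((p:ℝ)/q) * ((νU (Iio ‖y‖) ^ ((1:ℝ)/p'))⁻¹ * A) := by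
            calc (m' (Ioi ‖y‖)) ^ ((p:ℝ)/q)
                ≤ (ENNReal.ofReal p * (νW (Ioi ‖y‖)) ^ ((1:ℝ)/p)) ^ ((p:ℝ)/q) :=
                  ENNReal.rpow_le_rpow (hm'Ioi ‖y‖) (by positivity)
              _ = (ENNReal.ofReal p) ^ ((p:ℝ)/q) * (νW (Ioi ‖y‖)) ^ ((1:ℝ)/q) := by
                  rw [ENNReal.mul_rpow_of_nonneg _ _ (by positivity : (0:ℝ) ≤ p/q),
                    ← ENNReal.rpow_mul]
                  congr 2
                  field_simp
              _ ≤ (ENNReal.ofReal p) ^ ((p:ℝ)/q) * ((νU (Iio ‖y‖) ^ ((1:ℝ)/p'))⁻¹ * A) :=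
                  mul_le_mul_right (hkey2 ‖y‖ hny) _
          calc gg y * (m' (Ioi ‖y‖)) ^ ((p:ℝ)/q)
              ≤ gg y * ((ENNReal.ofReal p) ^ ((p:ℝ)/q) *
                  ((νU (Iio ‖y‖) ^ ((1:ℝ)/p'))⁻¹ * A)) := mul_le_mul_right s1 _
            _ = (ENNReal.ofReal p) ^ ((p:ℝ)/q) * A *
                (ENNReal.ofReal (f y) ^ p * ENNReal.ofReal (U y)) *
                ((νU (Iio ‖y‖)) ^ ((1:ℝ)/p') * ((νU (Iio ‖y‖)) ^ ((1:ℝ)/p'))⁻¹) := by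
                rw [hgg]
                ring
            _ = (ENNReal.ofReal p) ^ ((p:ℝ)/q) * A *
                (ENNReal.ofReal (f y) ^ p * ENNReal.ofReal (U y)) := by
                rw [ENNReal.mul_inv_cancel hVnz hVnt, mul_one]
      _ = (ENNReal.ofReal p) ^ ((p:ℝ)/q) * A * I := by
          rw [hIeq, lintegral_const_mul]
          exact ((ENNReal.measurable_ofReal.comp hf).pow_const p).mul
            (ENNReal.measurable_ofReal.comp hUm)
  -- ### the main chain
  set X := ∫⁻ x, (∫⁻ y in {y : EuclideanSpace ℝ (Fin N) | ‖y‖ < ‖x‖},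
      ENNReal.ofReal (f y)) ^ q * ENNReal.ofReal (W x) with hX
  have hAt : A ≠ ⊤ := hA
  have hchain : X ≤ (ENNReal.ofReal p') ^ ((q:ℝ)/p') * A ^ ((q:ℝ)/p') *
      ((ENNReal.ofReal p) ^ ((p:ℝ)/q) * A * I) ^ ((q:ℝ)/p) := by
    calc X ≤ ∫⁻ x, (ENNReal.ofReal p') ^ ((q:ℝ)/p') * A ^ ((q:ℝ)/p') *
          ((κ (Iio ‖x‖)) ^ ((q:ℝ)/p) * dM x) ∂volume := by
          rw [hX]
          apply lintegral_mono_ae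
          filter_upwards [hane] with x hx
          have hnx : (0:ℝ) < ‖x‖ := norm_pos_iff.2 hx
          have step2 : (κ (Iio ‖x‖) ^ (1/p) *
              (ENNReal.ofReal p' * νU (Iio ‖x‖) ^ (1/p')) ^ (1/p')) ^ q
              = (κ (Iio ‖x‖)) ^ ((q:ℝ)/p) * ((ENNReal.ofReal p') ^ ((q:ℝ)/p') *
                  ((νU (Iio ‖x‖)) ^ ((1:ℝ)/p')) ^ ((q:ℝ)/p')) := by
            rw [ENNReal.mul_rpow_of_nonneg _ _ hq0.le,
              ENNReal.mul_rpow_of_nonneg _ _ (by positivity : (0:ℝ) ≤ 1/p'),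
              ENNReal.mul_rpow_of_nonneg _ _ hq0.le,
              ← ENNReal.rpow_mul (κ (Iio ‖x‖)),
              ← ENNReal.rpow_mul (ENNReal.ofReal p'),
              ← ENNReal.rpow_mul ((νU (Iio ‖x‖)) ^ (1/p')),
              show (1:ℝ)/p * q = q/p by ring,
              show (1:ℝ)/p' * q = q/p' by ring]
          have step3 : ((νU (Iio ‖x‖)) ^ ((1:ℝ)/p')) ^ ((q:ℝ)/p')
              ≤ ((νW (Ioi ‖x‖)) ^ ((1:ℝ)/p'))⁻¹ * A ^ ((q:ℝ)/p') := by
            calc ((νU (Iio ‖x‖)) ^ ((1:ℝ)/p')) ^ ((q:ℝ)/p')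
                ≤ ((νW (Ioi ‖x‖) ^ ((1:ℝ)/q))⁻¹ * A) ^ ((q:ℝ)/p') :=
                  ENNReal.rpow_le_rpow (hkey1 ‖x‖ hnx) (by positivity)
              _ = ((νW (Ioi ‖x‖)) ^ ((1:ℝ)/p'))⁻¹ * A ^ ((q:ℝ)/p') := by
                  rw [ENNReal.mul_rpow_of_nonneg _ _ (by positivity : (0:ℝ) ≤ q/p'),
                    ENNReal.inv_rpow, ← ENNReal.rpow_mul,
                    show (1:ℝ)/q * (q/p') = 1/p' by field_simp]
          calc (∫⁻ y in {y : EuclideanSpace ℝ (Fin N) | ‖y‖ < ‖x‖},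
                ENNReal.ofReal (f y)) ^ q * ENNReal.ofReal (W x)
              ≤ (κ (Iio ‖x‖) ^ (1/p) *
                  (ENNReal.ofReal p' * νU (Iio ‖x‖) ^ (1/p')) ^ (1/p')) ^ q *
                  ENNReal.ofReal (W x) :=
                mul_le_mul_left (ENNReal.rpow_le_rpow (hHold ‖x‖ hnx) hq0.le) _
            _ = ((κ (Iio ‖x‖)) ^ ((q:ℝ)/p) * ((ENNReal.ofReal p') ^ ((q:ℝ)/p') *
                  ((νU (Iio ‖x‖)) ^ ((1:ℝ)/p')) ^ ((q:ℝ)/p'))) * ENNReal.ofReal (W x) := by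
                rw [step2]
            _ ≤ ((κ (Iio ‖x‖)) ^ ((q:ℝ)/p) * ((ENNReal.ofReal p') ^ ((q:ℝ)/p') *
                  (((νW (Ioi ‖x‖)) ^ ((1:ℝ)/p'))⁻¹ * A ^ ((q:ℝ)/p')))) *
                  ENNReal.ofReal (W x) := by
                apply mul_le_mul_left
                exact mul_le_mul_right (mul_le_mul_right step3 _) _
            _ = (ENNReal.ofReal p') ^ ((q:ℝ)/p') * A ^ ((q:ℝ)/p') *
                  ((κ (Iio ‖x‖)) ^ ((q:ℝ)/p) * dM x) := by
                rw [hdM]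
                ring
      _ = (ENNReal.ofReal p') ^ ((q:ℝ)/p') * A ^ ((q:ℝ)/p') *
            ∫⁻ x, (κ (Iio ‖x‖)) ^ ((q:ℝ)/p) * dM x ∂volume := by
          rw [lintegral_const_mul]
          exact (((measIio κ).comp measurable_norm).pow_const _).mul hdMm
      _ = (ENNReal.ofReal p') ^ ((q:ℝ)/p') * A ^ ((q:ℝ)/p') *
            ∫⁻ r, (κ (Iio r)) ^ ((q:ℝ)/p) ∂m' := by
          congr 1
          rw [hm', lintegral_map ((measIio κ).pow_const _) measurable_norm, hmm,
            lintegral_withDensity_eq_lintegral_mul _ hdMm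
              (show Measurable fun a : EuclideanSpace ℝ (Fin N) =>
                (κ (Iio ‖a‖)) ^ ((q:ℝ)/p) from
                ((measIio κ).comp measurable_norm).pow_const _)]
          apply lintegral_congr
          intro x
          simp only [Pi.mul_apply]
          ring
      _ ≤ (ENNReal.ofReal p') ^ ((q:ℝ)/p') * A ^ ((q:ℝ)/p') *
            (∫⁻ t, (m' (Ioi t)) ^ (1/((q:ℝ)/p)) ∂κ) ^ ((q:ℝ)/p) :=
          mul_le_mul_right (minkowski1d κ m' hatomκ hκfin hqp1) _
      _ ≤ (ENNReal.ofReal p') ^ ((q:ℝ)/p') * A ^ ((q:ℝ)/p') *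
            ((ENNReal.ofReal p) ^ ((p:ℝ)/q) * A * I) ^ ((q:ℝ)/p) :=
          mul_le_mul_right (ENNReal.rpow_le_rpow hinner (by positivity)) _
  have hfinal : X ≤ (ENNReal.ofReal p') ^ ((q:ℝ)/p') * ENNReal.ofReal p * A ^ q *
      I ^ ((q:ℝ)/p) := by
    refine hchain.trans (le_of_eq ?_)
    rw [ENNReal.mul_rpow_of_nonneg _ _ (by positivity : (0:ℝ) ≤ q/p),
      ENNReal.mul_rpow_of_nonneg _ _ (by positivity : (0:ℝ) ≤ q/p),
      ← ENNReal.rpow_mul (ENNReal.ofReal p),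
      show (p:ℝ)/q * (q/p) = 1 by field_simp, ENNReal.rpow_one]
    have hAA : A ^ ((q:ℝ)/p') * A ^ ((q:ℝ)/p) = A ^ q := by
      rw [← ENNReal.rpow_add _ _ hApos.ne' hAt]
      congr 1
      calc q/p' + q/p = q*(1/p + 1/p') := by ring
        _ = q := by rw [hp']; ring
    calc (ENNReal.ofReal p') ^ ((q:ℝ)/p') * A ^ ((q:ℝ)/p') *
          (ENNReal.ofReal p * A ^ ((q:ℝ)/p) * I ^ ((q:ℝ)/p))
        = (ENNReal.ofReal p') ^ ((q:ℝ)/p') * ENNReal.ofReal p *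
          (A ^ ((q:ℝ)/p') * A ^ ((q:ℝ)/p)) * I ^ ((q:ℝ)/p) := by ring
      _ = (ENNReal.ofReal p') ^ ((q:ℝ)/p') * ENNReal.ofReal p * A ^ q *
          I ^ ((q:ℝ)/p) := by rw [hAA]
  calc X ^ (1/q)
      ≤ ((ENNReal.ofReal p') ^ ((q:ℝ)/p') * ENNReal.ofReal p * A ^ q *
          I ^ ((q:ℝ)/p)) ^ ((1:ℝ)/q) := ENNReal.rpow_le_rpow hfinal (by positivity)
    _ = ENNReal.ofReal (p' ^ (1/p') * p ^ (1/q)) * A * I ^ (1/p) := by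
        rw [ENNReal.mul_rpow_of_nonneg _ _ (by positivity : (0:ℝ) ≤ 1/q),
          ENNReal.mul_rpow_of_nonneg _ _ (by positivity : (0:ℝ) ≤ 1/q),
          ENNReal.mul_rpow_of_nonneg _ _ (by positivity : (0:ℝ) ≤ 1/q),
          ← ENNReal.rpow_mul (ENNReal.ofReal p'),
          ← ENNReal.rpow_mul A,
          ← ENNReal.rpow_mul I,
          show (q:ℝ)/p' * (1/q) = 1/p' by
            rw [div_mul_div_comm, mul_one, mul_comm p' q, ← div_div, div_self hqne],
          show (q:ℝ) * (1/q) = 1 by field_simp,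
          show (q:ℝ)/p * (1/q) = 1/p by
            rw [div_mul_div_comm, mul_one, mul_comm p q, ← div_div, div_self hqne],
          ENNReal.rpow_one,
          ENNReal.ofReal_mul (by positivity),
          ENNReal.ofReal_rpow_of_pos hp'pos,
          ENNReal.ofReal_rpow_of_pos hp0]
end

section
/- Let N ≥ 1, 1<p≤q<∞, let p' satisfy 1/p + 1/p' = 1, and let W and U be positive measurable functions on ℝ^N. Suppose there is a constant C₁>0 such that for every measurable f ≥ 0 on ℝ^N: (∫_{ℝ^N} (∫_{‖y‖<‖x‖} f(y) dy)^q W(x) dx)^{1/q} ≤ C₁ (∫_{ℝ^N} f(x)^p U(x) dx)^{1/p}. Then A₁ := sup_{R>0} (∫_{‖x‖>R} W(x) dx)^{1/q} (∫_{‖x‖<R} U(x)^{1−p'} dx)^{1/p'} is finite and satisfies A₁ ≤ C₁. -/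
open MeasureTheory Real
open scoped ENNReal NNReal

set_option maxHeartbeats 1000000 in
/-- Necessity part of the two-weight integral Hardy inequality: if
`(∫ (∫_{‖y‖<‖x‖} f)^q W)^{1/q} ≤ C₁ (∫ f^p U)^{1/p}` for all measurable `f ≥ 0`,
then `A₁ := sup_{R>0} (∫_{‖x‖>R} W)^{1/q} (∫_{‖x‖<R} U^{1-p'})^{1/p'} ≤ C₁`
(in particular `A₁` is finite). -/
theorem integral_hardy_necessity
    (N : ℕ) (hN : 1 ≤ N) (p q p' : ℝ) (hp : 1 < p) (hpq : p ≤ q)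
    (hp' : 1 / p + 1 / p' = 1)
    (W U : EuclideanSpace ℝ (Fin N) → ℝ)
    (hWpos : ∀ x, 0 < W x) (hUpos : ∀ x, 0 < U x)
    (hWm : Measurable W) (hUm : Measurable U)
    (C₁ : ℝ) (hC₁ : 0 < C₁)
    (hineq : ∀ f : EuclideanSpace ℝ (Fin N) → ℝ, Measurable f → (∀ x, 0 ≤ f x) →
      (∫⁻ x, (∫⁻ y in {y : EuclideanSpace ℝ (Fin N) | ‖y‖ < ‖x‖},
            ENNReal.ofReal (f y)) ^ q * ENNReal.ofReal (W x)) ^ (1 / q)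
        ≤ ENNReal.ofReal C₁ *
          (∫⁻ x, ENNReal.ofReal (f x ^ p) * ENNReal.ofReal (U x)) ^ (1 / p)) :
    (⨆ (R : ℝ) (_ : 0 < R),
        (∫⁻ x in {x : EuclideanSpace ℝ (Fin N) | R < ‖x‖}, ENNReal.ofReal (W x)) ^ (1 / q) *
        (∫⁻ x in {x : EuclideanSpace ℝ (Fin N) | ‖x‖ < R},
            ENNReal.ofReal (U x ^ (1 - p'))) ^ (1 / p'))
      ≤ ENNReal.ofReal C₁ := by
  -- basic exponent facts
  have hp0 : (0 : ℝ) < p := lt_trans one_pos hp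
  have hq0 : (0 : ℝ) < q := lt_of_lt_of_le hp0 hpq
  have h1p'pos : (0 : ℝ) < 1 / p' := by
    have h1 : 1 / p < 1 := by
      rw [div_lt_one hp0]; exact hp
    linarith [hp'.symm]
  have hp'pos : (0 : ℝ) < p' := by
    by_contra h
    push_neg at h
    have : 1 / p' ≤ 0 := div_nonpos_of_nonneg_of_nonpos zero_le_one h
    linarith
  have hpp' : p' * p = p + p' := by
    have hpne : p ≠ 0 := hp0.ne'
    have hp'ne : p' ≠ 0 := hp'pos.ne'
    field_simp at hp'
    linarith
  have hexp : (1 - p') * p + 1 = 1 - p' := by nlinarith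
  refine iSup_le fun R => iSup_le fun hR => ?_
  -- sets
  set ballR : Set (EuclideanSpace ℝ (Fin N)) := {x : EuclideanSpace ℝ (Fin N) | ‖x‖ < R} with hballR
  have hballRm : MeasurableSet ballR := measurableSet_lt measurable_norm measurable_const
  have houtm : MeasurableSet {x : EuclideanSpace ℝ (Fin N) | R < ‖x‖} :=
    measurableSet_lt measurable_const measurable_norm
  set g : EuclideanSpace ℝ (Fin N) → ℝ := fun x => U x ^ (1 - p') with hg
  have hgm : Measurable g := by
    have hge : g = fun x => Real.exp (Real.log (U x) * (1 - p')) := by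
      funext x
      exact Real.rpow_def_of_pos (hUpos x) _
    rw [hge]
    exact Real.measurable_exp.comp ((Real.measurable_log.comp hUm).mul_const _)
  have hgpos : ∀ x, 0 < g x := fun x => Real.rpow_pos_of_pos (hUpos x) _
  set S : ℕ → Set (EuclideanSpace ℝ (Fin N)) := fun n => ballR ∩ {x : EuclideanSpace ℝ (Fin N) | g x ≤ (n : ℝ)} with hS
  have hSm : ∀ n, MeasurableSet (S n) :=
    fun n => hballRm.inter (measurableSet_le hgm measurable_const)
  have hSmono : Monotone S := by
    intro m n hmn x hx
    refine ⟨hx.1, ?_⟩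
    have h2 := hx.2
    simp only [Set.mem_setOf_eq] at h2 ⊢
    exact le_trans h2 (Nat.cast_le.mpr hmn)
  have hSsub : ∀ n, S n ⊆ ballR := fun n => Set.inter_subset_left
  have hSU : (⋃ n, S n) = ballR := by
    ext x
    simp only [Set.mem_iUnion, hS, Set.mem_inter_iff, Set.mem_setOf_eq]
    constructor
    · rintro ⟨n, hn, _⟩; exact hn
    · intro hx
      obtain ⟨n, hn⟩ := exists_nat_ge (g x)
      exact ⟨n, hx, hn⟩
  -- the density measure
  set μ : Measure (EuclideanSpace ℝ (Fin N)) := volume.withDensity (fun x => ENNReal.ofReal (g x)) with hμ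
  have hμS : ∀ n, μ (S n) = ∫⁻ x in S n, ENNReal.ofReal (g x) :=
    fun n => withDensity_apply _ (hSm n)
  have hμball : μ ballR = ∫⁻ x in ballR, ENNReal.ofReal (g x) :=
    withDensity_apply _ hballRm
  -- finiteness of μ (S n)
  have hμSfin : ∀ n, μ (S n) ≠ ∞ := by
    intro n
    have hb : μ (S n) ≤ (n : ℝ≥0∞) * volume (S n) := by
      rw [hμS n, ← setLIntegral_const (S n) (n : ℝ≥0∞)]
      refine setLIntegral_mono measurable_const fun x hx => ?_
      calc ENNReal.ofReal (g x) ≤ ENNReal.ofReal (n : ℝ) := ENNReal.ofReal_le_ofReal hx.2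
        _ = (n : ℝ≥0∞) := ENNReal.ofReal_natCast n
    have hvol : volume (S n) < ∞ := by
      refine lt_of_le_of_lt (measure_mono ?_) (measure_ball_lt_top (x := (0 : EuclideanSpace ℝ (Fin N))) (r := R))
      intro x hx
      simpa [mem_ball_zero_iff, hballR] using (hSsub n hx)
    exact ne_top_of_le_ne_top (by finiteness) hb
  set A : ℝ≥0∞ := ∫⁻ x in {x : EuclideanSpace ℝ (Fin N) | R < ‖x‖}, ENNReal.ofReal (W x) with hA
  -- the key step for each n
  have hStep : ∀ n : ℕ, A ^ (1 / q) * (μ (S n)) ^ (1 / p') ≤ ENNReal.ofReal C₁ := by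
    intro n
    set f : EuclideanSpace ℝ (Fin N) → ℝ := (S n).indicator g with hf
    have hfm : Measurable f := hgm.indicator (hSm n)
    have hfnn : ∀ x, 0 ≤ f x := fun x =>
      Set.indicator_nonneg (fun y _ => (hgpos y).le) x
    have key := hineq f hfm hfnn
    -- the right-hand side integral equals μ (S n)
    have hRHS : (∫⁻ x, ENNReal.ofReal (f x ^ p) * ENNReal.ofReal (U x)) = μ (S n) := by
      have hpt : ∀ x, ENNReal.ofReal (f x ^ p) * ENNReal.ofReal (U x)
          = (S n).indicator (fun x => ENNReal.ofReal (g x)) x := by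
        intro x
        by_cases hx : x ∈ S n
        · rw [Set.indicator_of_mem hx, hf, Set.indicator_of_mem hx,
            ← ENNReal.ofReal_mul (Real.rpow_nonneg (hgpos x).le p)]
          congr 1
          have hux := hUpos x
          calc g x ^ p * U x
              = U x ^ ((1 - p') * p) * U x ^ (1 : ℝ) := by
                rw [hg, ← Real.rpow_mul hux.le, Real.rpow_one]
            _ = U x ^ ((1 - p') * p + 1) := (Real.rpow_add hux _ _).symm
            _ = g x := by rw [hexp, hg]
        · rw [Set.indicator_of_notMem hx, hf, Set.indicator_of_notMem hx,
            Real.zero_rpow hp0.ne', ENNReal.ofReal_zero, zero_mul]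
      rw [lintegral_congr hpt, lintegral_indicator (hSm n), hμS n]
    -- lower bound for the left-hand side
    have hInner : ∀ x : EuclideanSpace ℝ (Fin N), R < ‖x‖ →
        μ (S n) ≤ ∫⁻ y in {y : EuclideanSpace ℝ (Fin N) | ‖y‖ < ‖x‖}, ENNReal.ofReal (f y) := by
      intro x hx
      have h1 : μ (S n) = ∫⁻ y in S n, ENNReal.ofReal (f y) := by
        rw [hμS n]
        refine setLIntegral_congr_fun (hSm n) (fun y hy => ?_)
        rw [hf, Set.indicator_of_mem hy]
      rw [h1]
      refine lintegral_mono_set fun y hy => ?_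
      exact lt_trans (hSsub n hy) hx
    have hLHS : μ (S n) * A ^ (1 / q)
        ≤ (∫⁻ x, (∫⁻ y in {y : EuclideanSpace ℝ (Fin N) | ‖y‖ < ‖x‖},
            ENNReal.ofReal (f y)) ^ q * ENNReal.ofReal (W x)) ^ (1 / q) := by
      have e1 : μ (S n) * A ^ (1 / q) = ((μ (S n)) ^ q * A) ^ (1 / q) := by
        rw [ENNReal.mul_rpow_of_nonneg _ _ (by positivity : (0:ℝ) ≤ 1 / q),
          ← ENNReal.rpow_mul, mul_one_div_cancel hq0.ne', ENNReal.rpow_one]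
      rw [e1]
      refine ENNReal.rpow_le_rpow ?_ (by positivity)
      calc (μ (S n)) ^ q * A
          = ∫⁻ x in {x : EuclideanSpace ℝ (Fin N) | R < ‖x‖}, (μ (S n)) ^ q * ENNReal.ofReal (W x) := by
            rw [lintegral_const_mul _ hWm.ennreal_ofReal, hA]
        _ ≤ ∫⁻ x in {x : EuclideanSpace ℝ (Fin N) | R < ‖x‖}, (∫⁻ y in {y : EuclideanSpace ℝ (Fin N) | ‖y‖ < ‖x‖},
              ENNReal.ofReal (f y)) ^ q * ENNReal.ofReal (W x) := by
            refine lintegral_mono_ae ((ae_restrict_iff' houtm).mpr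
              (Filter.Eventually.of_forall fun x hx => ?_))
            exact mul_le_mul_left (ENNReal.rpow_le_rpow (hInner x hx) hq0.le) _
        _ ≤ ∫⁻ x, (∫⁻ y in {y : EuclideanSpace ℝ (Fin N) | ‖y‖ < ‖x‖},
              ENNReal.ofReal (f y)) ^ q * ENNReal.ofReal (W x) :=
            setLIntegral_le_lintegral _ _
    have hmain : μ (S n) * A ^ (1 / q) ≤ ENNReal.ofReal C₁ * (μ (S n)) ^ (1 / p) :=
      le_trans hLHS (by rw [← hRHS]; exact key)
    -- cancel μ (S n) ^ (1/p)
    by_cases hI0 : μ (S n) = 0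
    · rw [hI0, ENNReal.zero_rpow_of_pos h1p'pos, mul_zero]
      exact zero_le
    · have hIfin := hμSfin n
      rw [← ENNReal.mul_le_mul_iff_left
        (ENNReal.rpow_pos (pos_iff_ne_zero.mpr hI0) hIfin).ne'
        (ENNReal.rpow_ne_top_of_nonneg (by positivity) hIfin)
        (a := A ^ (1 / q) * (μ (S n)) ^ (1 / p')) (b := ENNReal.ofReal C₁)
        (c := (μ (S n)) ^ (1 / p))]
      calc A ^ (1 / q) * (μ (S n)) ^ (1 / p') * (μ (S n)) ^ (1 / p)
          = A ^ (1 / q) * μ (S n) := by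
            rw [mul_assoc, ← ENNReal.rpow_add _ _ hI0 hIfin]
            congr 1
            rw [show 1 / p' + 1 / p = 1 by linarith, ENNReal.rpow_one]
        _ = μ (S n) * A ^ (1 / q) := mul_comm _ _
        _ ≤ ENNReal.ofReal C₁ * (μ (S n)) ^ (1 / p) := hmain
  -- pass to the limit
  have hμlim : μ ballR = ⨆ n, μ (S n) := by
    rw [← hSU]
    exact Directed.measure_iUnion (hSmono.directed_le)
  have hrpow : (μ ballR) ^ (1 / p') = ⨆ n, (μ (S n)) ^ (1 / p') := by
    rw [hμlim]
    exact Monotone.map_iSup_of_continuousAt ENNReal.continuous_rpow_const.continuousAt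
      (ENNReal.monotone_rpow_of_nonneg h1p'pos.le)
      (ENNReal.zero_rpow_of_pos h1p'pos)
  rw [← hμball] at *
  rw [hrpow, ENNReal.mul_iSup]
  exact iSup_le hStep
end
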